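/- arXiv:2107.09620 — 9 statements merged into one kernel-verified Lean document; each statement's English description precedes it below -/
import Mathlib

section
/- Let n ≥ 1 be an integer, let k, ℓ be real numbers with 0 ≤ k < n and 0 ≤ ℓ < n, let β > 0 with k + ℓ + β ≥ n and k + ℓ ≠ n, and let δ > 0. Then there exists a constant C > 0 (depending on n, k, ℓ, β, δ) such that for all distinct u₁, u₂ ∈ ℝⁿ: if |u₁−u₂| ≤ 1, then ∫_{ℝⁿ} ⟨z⟩^{−β−δ} |z−u₁|^{−k} |z−u₂|^{−ℓ} dz ≤ C |u₁−u₂|^{−max(0, k+ℓ−n)}; and if |u₁−u₂| > 1, then ∫_{ℝⁿ} ⟨z⟩^{−β−δ} |z−u₁|^{−k} |z−u₂|^{−ℓ} dz ≤ C |u₁−u₂|^{−min(k, ℓ, k+ℓ+β−n)}. -/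
/-!
Put `u = ‖u₁ - u₂‖` and `r = u / 2`. On `ball u₁ r` the factor `‖z - u₂‖ ^ (-ℓ)` is at most
`r ^ (-ℓ)`, on `ball u₂ r` symmetrically, and off both balls `‖z - u₂‖ ≥ ‖z - u₁‖ / 3`, so the
integral is bounded by one-singularity integrals. By dilation, the integral of `‖z - x‖ ^ (-s)` over
`ball x R` (for `s < n`) or over its complement (for `s > n`) is a constant times `R ^ (n - s)`.

For `k + ℓ > n` this alone gives `r ^ (n - k - ℓ)` (the weight is at most `1`). For `k + ℓ < n`,
`A ^ (-k) * B ^ (-ℓ) ≤ A ^ (-(k + ℓ)) + B ^ (-(k + ℓ))` leaves one singularity of order `k + ℓ < n`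
against the weight `⟨z⟩ ^ (-β - δ)`, and the integral is bounded uniformly. For `u > 1` the ball
pieces grow at most like `r ^ max 0 (n - k - β)`, the extra `δ` absorbing the logarithm at
`k + β = n`, while the exterior piece trades `m = min k (min ℓ (k + ℓ + β - n))` powers of
`‖z - u₁‖ ≥ r` for `r ^ (-m)`.
-/

open MeasureTheory Metric Module Set
open scoped NNReal

section RealInequalities

theorem rpow_neg_mul_rpow_neg_le {A B p q : ℝ} (hA : 0 < A) (hB : 0 < B) (hp : 0 ≤ p)
    (hq : 0 ≤ q) : A ^ (-p) * B ^ (-q) ≤ A ^ (-(p + q)) + B ^ (-(p + q)) := by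
  wlog hAB : A ≤ B generalizing A B p q
  · rw [mul_comm, add_comm p, add_comm (A ^ _)]
    exact this hB hA hq hp (le_of_not_ge hAB)
  calc A ^ (-p) * B ^ (-q) ≤ A ^ (-p) * A ^ (-q) :=
        mul_le_mul_of_nonneg_left (Real.rpow_le_rpow_of_nonpos hA hAB (by linarith))
          (by positivity)
    _ = A ^ (-(p + q)) := by rw [← Real.rpow_add hA, neg_add]
    _ ≤ A ^ (-(p + q)) + B ^ (-(p + q)) := le_add_of_nonneg_right (by positivity)

theorem rpow_le_two_rpow_mul_rpow {R e σ : ℝ} (hR : 1 / 2 ≤ R) (heσ : e ≤ σ) :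
    R ^ e ≤ 2 ^ (σ - e) * R ^ σ := by
  have hR0 : 0 < R := by linarith
  calc R ^ e = R ^ (e - σ) * R ^ σ := by rw [← Real.rpow_add hR0, sub_add_cancel]
    _ ≤ (1 / 2) ^ (e - σ) * R ^ σ := mul_le_mul_of_nonneg_right
        (Real.rpow_le_rpow_of_nonpos (by norm_num) hR (by linarith)) (by positivity)
    _ = 2 ^ (σ - e) * R ^ σ := by
        rw [one_div, Real.inv_rpow zero_le_two, ← Real.rpow_neg zero_le_two, neg_sub]

theorem ofReal_rpow_mul_ofReal_rpow {r a b c : ℝ} (hr : 0 < r) (habc : a + b = c) :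
    ENNReal.ofReal (r ^ a) * ENNReal.ofReal (r ^ b) = ENNReal.ofReal (r ^ c) := by
  rw [← ENNReal.ofReal_mul (by positivity), ← Real.rpow_add hr, habc]

end RealInequalities

section LIntegral

variable {α : Type*} [MeasurableSpace α] {μ : Measure α}

theorem lintegral_ofReal_le_mul {f g : α → ℝ} {c : ℝ} (hc : 0 ≤ c)
    (hfg : ∀ᵐ z ∂μ, f z ≤ c * g z) :
    ∫⁻ z, ENNReal.ofReal (f z) ∂μ ≤ ENNReal.ofReal c * ∫⁻ z, ENNReal.ofReal (g z) ∂μ := by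
  rw [← lintegral_const_mul' _ _ ENNReal.ofReal_ne_top]
  exact lintegral_mono_ae <| hfg.mono fun z h =>
    (ENNReal.ofReal_le_ofReal h).trans_eq (ENNReal.ofReal_mul hc)

theorem lintegral_ofReal_le_add {f g₁ g₂ : α → ℝ} (hg₁ : Measurable g₁)
    (hfg : ∀ᵐ z ∂μ, f z ≤ g₁ z + g₂ z) :
    ∫⁻ z, ENNReal.ofReal (f z) ∂μ
      ≤ ∫⁻ z, ENNReal.ofReal (g₁ z) ∂μ + ∫⁻ z, ENNReal.ofReal (g₂ z) ∂μ := by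
  rw [← lintegral_add_left hg₁.ennreal_ofReal]
  exact lintegral_mono_ae <| hfg.mono fun z h =>
    (ENNReal.ofReal_le_ofReal h).trans ENNReal.ofReal_add_le

theorem integral_le_of_lintegral_ofReal_le {f : α → ℝ} (hf : 0 ≤ f)
    (hfm : AEStronglyMeasurable f μ) {C : ℝ≥0} {B : ℝ} (hB : 0 ≤ B)
    (h : ∫⁻ z, ENNReal.ofReal (f z) ∂μ ≤ C * ENNReal.ofReal B) : ∫ z, f z ∂μ ≤ C * B := by
  rw [integral_eq_lintegral_of_nonneg_ae (ae_of_all _ hf) hfm]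
  refine ENNReal.toReal_le_of_le_ofReal (by positivity) (h.trans_eq ?_)
  rw [ENNReal.ofReal_mul C.coe_nonneg, ENNReal.ofReal_coe_nnreal]

end LIntegral

section ThreeRegions

variable {E : Type*} [NormedAddCommGroup E] [MeasurableSpace E] [OpensMeasurableSpace E]
  {μ : Measure E}

theorem lintegral_le_three_regions (w : E → ℝ) (hw : ∀ z, 0 ≤ w z) {k ℓ r : ℝ} (hk : 0 ≤ k)
    (hℓ : 0 ≤ ℓ) (hr : 0 < r) {u₁ u₂ : E} (hu : ‖u₁ - u₂‖ = 2 * r) :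
    ∫⁻ z, ENNReal.ofReal (w z * ‖z - u₁‖ ^ (-k) * ‖z - u₂‖ ^ (-ℓ)) ∂μ
      ≤ ENNReal.ofReal (r ^ (-ℓ)) * ∫⁻ z in ball u₁ r, ENNReal.ofReal (w z * ‖z - u₁‖ ^ (-k)) ∂μ
        + ENNReal.ofReal (r ^ (-k)) * ∫⁻ z in ball u₂ r, ENNReal.ofReal (w z * ‖z - u₂‖ ^ (-ℓ)) ∂μ
        + ENNReal.ofReal (3 ^ ℓ)
          * ∫⁻ z in (ball u₁ r)ᶜ, ENNReal.ofReal (w z * ‖z - u₁‖ ^ (-(k + ℓ))) ∂μ := by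
  have htri : ∀ z, 2 * r ≤ ‖z - u₁‖ + ‖z - u₂‖ := fun z => by
    rw [← hu, norm_sub_rev z u₁]
    exact norm_sub_le_norm_sub_add_norm_sub u₁ z u₂
  have hA : ∀ z ∈ ball u₁ r, w z * ‖z - u₁‖ ^ (-k) * ‖z - u₂‖ ^ (-ℓ)
      ≤ r ^ (-ℓ) * (w z * ‖z - u₁‖ ^ (-k)) := fun z hz => by
    have hρ : r ≤ ‖z - u₂‖ := by
      have := htri z
      have : ‖z - u₁‖ < r := by simpa [dist_eq_norm] using hz
      linarith
    rw [mul_comm (r ^ _)]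
    exact mul_le_mul_of_nonneg_left (Real.rpow_le_rpow_of_nonpos hr hρ (by linarith))
      (mul_nonneg (hw z) (by positivity))
  have hB : ∀ z ∈ ball u₂ r, w z * ‖z - u₁‖ ^ (-k) * ‖z - u₂‖ ^ (-ℓ)
      ≤ r ^ (-k) * (w z * ‖z - u₂‖ ^ (-ℓ)) := fun z hz => by
    have hρ : r ≤ ‖z - u₁‖ := by
      have := htri z
      have : ‖z - u₂‖ < r := by simpa [dist_eq_norm] using hz
      linarith
    rw [mul_right_comm, mul_comm (r ^ _)]
    exact mul_le_mul_of_nonneg_left (Real.rpow_le_rpow_of_nonpos hr hρ (by linarith))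
      (mul_nonneg (hw z) (by positivity))
  -- Away from both balls `‖z - u₁‖ ≤ ‖z - u₂‖ + 2 r ≤ 3 ‖z - u₂‖`.
  have hfar : ∀ z ∈ (ball u₁ r ∪ ball u₂ r)ᶜ, w z * ‖z - u₁‖ ^ (-k) * ‖z - u₂‖ ^ (-ℓ)
      ≤ 3 ^ ℓ * (w z * ‖z - u₁‖ ^ (-(k + ℓ))) := fun z hz => by
    simp only [compl_union, mem_inter_iff, mem_compl_iff, mem_ball, dist_eq_norm, not_lt] at hz
    have hρ₁ : 0 < ‖z - u₁‖ := hr.trans_le hz.1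
    have h3 : ‖z - u₁‖ / 3 ≤ ‖z - u₂‖ := by
      have := norm_sub_le_norm_sub_add_norm_sub z u₂ u₁
      rw [norm_sub_rev u₂, hu] at this
      linarith [hz.2]
    calc w z * ‖z - u₁‖ ^ (-k) * ‖z - u₂‖ ^ (-ℓ)
        ≤ w z * ‖z - u₁‖ ^ (-k) * (‖z - u₁‖ / 3) ^ (-ℓ) :=
          mul_le_mul_of_nonneg_left (Real.rpow_le_rpow_of_nonpos (by positivity) h3
            (by linarith)) (mul_nonneg (hw z) (by positivity))
      _ = 3 ^ ℓ * (w z * ‖z - u₁‖ ^ (-(k + ℓ))) := by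
          rw [div_eq_inv_mul, Real.mul_rpow (by norm_num) hρ₁.le, Real.inv_rpow zero_le_three,
            Real.rpow_neg zero_le_three, inv_inv, neg_add, Real.rpow_add hρ₁]
          ring
  rw [← lintegral_add_compl _ (measurableSet_ball.union measurableSet_ball)]
  grw [lintegral_union_le]
  gcongr
  · exact lintegral_ofReal_le_mul (by positivity) (ae_restrict_of_forall_mem measurableSet_ball hA)
  · exact lintegral_ofReal_le_mul (by positivity) (ae_restrict_of_forall_mem measurableSet_ball hB)
  · exact (lintegral_ofReal_le_mul (by positivity) (ae_restrict_of_forall_mem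
      (measurableSet_ball.union measurableSet_ball).compl hfar)).trans
      (by gcongr; exact subset_union_left)

end ThreeRegions

section Singular

variable {E : Type*} [NormedAddCommGroup E]

theorem one_le_sqrt_one_add_norm_sq (z : E) : 1 ≤ √(1 + ‖z‖ ^ 2) :=
  Real.one_le_sqrt.2 (by nlinarith [sq_nonneg ‖z‖])

theorem sqrt_one_add_norm_sq_pos (z : E) : 0 < √(1 + ‖z‖ ^ 2) :=
  zero_lt_one.trans_le (one_le_sqrt_one_add_norm_sq z)

theorem norm_le_sqrt_one_add_norm_sq (z : E) : ‖z‖ ≤ √(1 + ‖z‖ ^ 2) :=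
  Real.le_sqrt_of_sq_le (by linarith)

theorem sqrt_one_add_norm_sq_rpow_neg_le_one (z : E) {a : ℝ} (ha : 0 ≤ a) :
    √(1 + ‖z‖ ^ 2) ^ (-a) ≤ 1 :=
  Real.rpow_le_one_of_one_le_of_nonpos (one_le_sqrt_one_add_norm_sq z) (by linarith)

variable [NormedSpace ℝ E]

theorem preimage_affine_ball (x : E) {R : ℝ} (hR : 0 < R) :
    (fun z => R⁻¹ • (z - x)) ⁻¹' ball 0 1 = ball x R := by
  ext z
  simp [norm_smul, abs_of_pos hR, dist_eq_norm, inv_mul_lt_iff₀ hR]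

theorem nontrivial_of_lt_finrank {s : ℝ} (hs0 : 0 ≤ s) (hs : s < finrank ℝ E) : Nontrivial E :=
  Module.nontrivial_of_finrank_pos (R := ℝ) (by exact_mod_cast hs0.trans_lt hs)

variable [FiniteDimensional ℝ E] [MeasurableSpace E] [BorelSpace E]
  {μ : Measure E} [μ.IsAddHaarMeasure]

theorem setLIntegral_preimage_affine_norm_sub_rpow {R : ℝ} (hR : 0 < R) (s : ℝ) (x : E)
    {S : Set E} (hS : MeasurableSet S) :
    ∫⁻ z in (fun z => R⁻¹ • (z - x)) ⁻¹' S, ENNReal.ofReal (‖z - x‖ ^ (-s)) ∂μ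
      = ENNReal.ofReal (R ^ ((finrank ℝ E : ℝ) - s))
        * ∫⁻ z in S, ENNReal.ofReal (‖z‖ ^ (-s)) ∂μ := by
  have hscale : ∀ y : E, ENNReal.ofReal (‖y‖ ^ (-s))
      = ENNReal.ofReal (R ^ (-s)) * ENNReal.ofReal (‖R⁻¹ • y‖ ^ (-s)) := fun y => by
    rw [← ENNReal.ofReal_mul (by positivity), ← Real.mul_rpow hR.le (norm_nonneg _),
      norm_smul, Real.norm_of_nonneg (inv_nonneg.2 hR.le), mul_inv_cancel_left₀ hR.ne']
  have hmap : μ.map (R⁻¹ • ·) = ENNReal.ofReal (R ^ finrank ℝ E) • μ := by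
    rw [Measure.map_addHaar_smul μ (inv_ne_zero hR.ne'), inv_pow, inv_inv,
      abs_of_pos (by positivity)]
  rw [show (fun z => R⁻¹ • (z - x)) ⁻¹' S = (· - x) ⁻¹' ((R⁻¹ • ·) ⁻¹' S) from rfl,
    (measurePreserving_sub_right μ x).setLIntegral_comp_preimage_emb
      (measurableEmbedding_subRight x) (fun y => ENNReal.ofReal (‖y‖ ^ (-s))),
    setLIntegral_congr_fun (measurable_const_smul _ hS) (fun y _ => hscale y),
    lintegral_const_mul' _ _ ENNReal.ofReal_ne_top,
    ← setLIntegral_map (f := fun y => ENNReal.ofReal (‖y‖ ^ (-s))) hS (by fun_prop)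
      (by fun_prop), hmap, Measure.restrict_smul, lintegral_smul_measure, smul_eq_mul,
    ← mul_assoc, ← ENNReal.ofReal_mul (by positivity),
    ← Real.rpow_natCast, ← Real.rpow_add hR, neg_add_eq_sub]

theorem integrable_sqrt_one_add_norm_sq_rpow_neg {p : ℝ} (hp : (finrank ℝ E : ℝ) < p) :
    Integrable (fun z : E => √(1 + ‖z‖ ^ 2) ^ (-p)) μ :=
  (integrable_rpow_neg_one_add_norm_sq hp).congr <| ae_of_all _ fun z => by
    simp only [Real.sqrt_eq_rpow, ← Real.rpow_mul (by positivity : (0 : ℝ) ≤ 1 + ‖z‖ ^ 2)]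
    ring_nf

theorem lintegral_ball_norm_sub_rpow_le {s : ℝ} (hs0 : 0 ≤ s) (hs : s < finrank ℝ E) :
    ∃ C : ℝ≥0, ∀ (x : E) (R : ℝ), 0 < R →
      ∫⁻ z in ball x R, ENNReal.ofReal (‖z - x‖ ^ (-s)) ∂μ
        ≤ C * ENNReal.ofReal (R ^ ((finrank ℝ E : ℝ) - s)) := by
  set I := ∫⁻ z in ball (0 : E) 1, ENNReal.ofReal (‖z‖ ^ (-s)) ∂μ with hI
  have hfin : I ≠ ⊤ := by
    refine (IntegrableOn.setLIntegral_lt_top ?_).ne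
    refine integrableOn_ball_of_norm_le_rpow (C := 1) (by exact_mod_cast (hs0.trans_lt hs)) hs
      (ae_of_all _ fun z => ?_) (measurable_norm.pow_const _).aestronglyMeasurable
    rw [one_mul, Real.norm_of_nonneg (by positivity)]
  refine ⟨I.toNNReal, fun x R hR => le_of_eq ?_⟩
  rw [ENNReal.coe_toNNReal hfin, hI, mul_comm, ← preimage_affine_ball x hR,
    setLIntegral_preimage_affine_norm_sub_rpow hR s x measurableSet_ball]

theorem lintegral_compl_ball_norm_sub_rpow_le {s : ℝ} (hs : finrank ℝ E < s) :
    ∃ C : ℝ≥0, ∀ (x : E) (R : ℝ), 0 < R →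
      ∫⁻ z in (ball x R)ᶜ, ENNReal.ofReal (‖z - x‖ ^ (-s)) ∂μ
        ≤ C * ENNReal.ofReal (R ^ ((finrank ℝ E : ℝ) - s)) := by
  set I := ∫⁻ z in (ball (0 : E) 1)ᶜ, ENNReal.ofReal (‖z‖ ^ (-s)) ∂μ with hI
  have hfin : I ≠ ⊤ := by
    refine ne_top_of_le_ne_top
      ((integrable_sqrt_one_add_norm_sq_rpow_neg hs).const_mul (√2 ^ s)).lintegral_lt_top.ne
      ((setLIntegral_mono' measurableSet_ball.compl fun z hz => ?_).trans
        (setLIntegral_le_lintegral _ _))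
    have h1 : 1 ≤ ‖z‖ := by simpa using hz
    refine ENNReal.ofReal_le_ofReal ?_
    have hle : √(1 + ‖z‖ ^ 2) ≤ √2 * ‖z‖ := by
      rw [← Real.sqrt_sq (norm_nonneg z), ← Real.sqrt_mul zero_le_two, Real.sqrt_sq (norm_nonneg z)]
      exact Real.sqrt_le_sqrt (by nlinarith)
    calc ‖z‖ ^ (-s) = √2 ^ s * (√2 * ‖z‖) ^ (-s) := by
          rw [Real.mul_rpow (by positivity) (by positivity), ← mul_assoc,
            ← Real.rpow_add (by positivity), add_neg_cancel, Real.rpow_zero, one_mul]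
      _ ≤ √2 ^ s * √(1 + ‖z‖ ^ 2) ^ (-s) := by
          refine mul_le_mul_of_nonneg_left (Real.rpow_le_rpow_of_nonpos (by positivity) hle
            (neg_nonpos.2 ((Nat.cast_nonneg _).trans hs.le))) (by positivity)
  refine ⟨I.toNNReal, fun x R hR => le_of_eq ?_⟩
  rw [ENNReal.coe_toNNReal hfin, hI, mul_comm, ← preimage_affine_ball x hR, ← preimage_compl,
    setLIntegral_preimage_affine_norm_sub_rpow hR s x measurableSet_ball.compl]

theorem lintegral_ball_norm_rpow_mul_norm_sub_rpow_le {p q : ℝ} (hp : 0 ≤ p) (hq : 0 ≤ q)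
    (hpq : p + q < finrank ℝ E) :
    ∃ C : ℝ≥0, ∀ (x : E) (R : ℝ), 0 < R →
      ∫⁻ z in ball x R, ENNReal.ofReal (‖z‖ ^ (-p) * ‖z - x‖ ^ (-q)) ∂μ
        ≤ C * ENNReal.ofReal (R ^ ((finrank ℝ E : ℝ) - (p + q))) := by
  have := nontrivial_of_lt_finrank (add_nonneg hp hq) hpq
  obtain ⟨C, hC⟩ := lintegral_ball_norm_sub_rpow_le (μ := μ) (add_nonneg hp hq) hpq
  refine ⟨3 * C, fun x R hR => ?_⟩
  have hnear : ∫⁻ z in ball x R ∩ ball 0 R, ENNReal.ofReal (‖z‖ ^ (-p) * ‖z - x‖ ^ (-q)) ∂μ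
      ≤ C * ENNReal.ofReal (R ^ ((finrank ℝ E : ℝ) - (p + q)))
        + C * ENNReal.ofReal (R ^ ((finrank ℝ E : ℝ) - (p + q))) := by
    calc _ ≤ ∫⁻ z in ball x R ∩ ball 0 R, ENNReal.ofReal (‖z‖ ^ (-(p + q))) ∂μ
          + ∫⁻ z in ball x R ∩ ball 0 R, ENNReal.ofReal (‖z - x‖ ^ (-(p + q))) ∂μ := by
          refine lintegral_ofReal_le_add (by fun_prop) ?_
          filter_upwards [ae_restrict_of_ae (μ.ae_ne 0), ae_restrict_of_ae (μ.ae_ne x)]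
            with z h0 hx
          exact rpow_neg_mul_rpow_neg_le (norm_pos_iff.2 h0) (norm_pos_iff.2 (sub_ne_zero.2 hx))
            hp hq
      _ ≤ ∫⁻ z in ball 0 R, ENNReal.ofReal (‖z - 0‖ ^ (-(p + q))) ∂μ
          + ∫⁻ z in ball x R, ENNReal.ofReal (‖z - x‖ ^ (-(p + q))) ∂μ := by
          simp_rw [sub_zero]
          exact add_le_add (lintegral_mono_set inter_subset_right)
            (lintegral_mono_set inter_subset_left)
      _ ≤ _ := add_le_add (hC 0 R hR) (hC x R hR)
  have hfar : ∫⁻ z in ball x R \ ball 0 R, ENNReal.ofReal (‖z‖ ^ (-p) * ‖z - x‖ ^ (-q)) ∂μ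
      ≤ C * ENNReal.ofReal (R ^ ((finrank ℝ E : ℝ) - (p + q))) := by
    refine le_trans ?_ ((lintegral_mono_set (sdiff_subset (t := ball 0 R))).trans (hC x R hR))
    refine lintegral_mono_ae ?_
    filter_upwards [ae_restrict_mem (measurableSet_ball.diff measurableSet_ball),
      ae_restrict_of_ae (μ.ae_ne x)] with z hz hx
    have hρ0 : 0 < ‖z - x‖ := norm_pos_iff.2 (sub_ne_zero.2 hx)
    have hρ : ‖z - x‖ ≤ ‖z‖ := by
      have h₁ : ‖z - x‖ < R := by simpa [dist_eq_norm] using hz.1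
      have h₂ : R ≤ ‖z‖ := by simpa using hz.2
      linarith
    refine ENNReal.ofReal_le_ofReal ?_
    calc ‖z‖ ^ (-p) * ‖z - x‖ ^ (-q) ≤ ‖z - x‖ ^ (-p) * ‖z - x‖ ^ (-q) :=
          mul_le_mul_of_nonneg_right (Real.rpow_le_rpow_of_nonpos hρ0 hρ (by linarith))
            (by positivity)
      _ = ‖z - x‖ ^ (-(p + q)) := by rw [← Real.rpow_add hρ0, neg_add]
  rw [← lintegral_inter_add_sdiff _ (ball x R) measurableSet_ball]
  calc _ ≤ _ := add_le_add hnear hfar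
    _ = _ := by push_cast; ring

theorem lintegral_compl_ball_japanese_mul_norm_sub_rpow_le {a s m : ℝ} (ha : 0 ≤ a)
    (hm : 0 ≤ m) (hms : m ≤ s) (hdim : finrank ℝ E < a + s - m) :
    ∃ C : ℝ≥0, ∀ (x : E) (r : ℝ), 1 / 2 ≤ r →
      ∫⁻ z in (ball x r)ᶜ, ENNReal.ofReal (√(1 + ‖z‖ ^ 2) ^ (-a) * ‖z - x‖ ^ (-s)) ∂μ
        ≤ C * ENNReal.ofReal (r ^ (-m)) := by
  obtain ⟨C₁, hC₁⟩ := lintegral_compl_ball_norm_sub_rpow_le (μ := μ) hdim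
  set I := ∫⁻ z, ENNReal.ofReal (√(1 + ‖z‖ ^ 2) ^ (-(a + s - m))) ∂μ
  have hI : I ≠ ⊤ := (integrable_sqrt_one_add_norm_sq_rpow_neg hdim).lintegral_lt_top.ne
  refine ⟨(I + C₁ * ENNReal.ofReal (2 ^ (a + s - m - finrank ℝ E))).toNNReal,
    fun x r hr => ?_⟩
  have hr0 : 0 < r := by linarith
  rw [ENNReal.coe_toNNReal (by finiteness), mul_comm]
  have hpt : ∀ z ∈ (ball x r)ᶜ, √(1 + ‖z‖ ^ 2) ^ (-a) * ‖z - x‖ ^ (-s)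
      ≤ r ^ (-m) * (√(1 + ‖z‖ ^ 2) ^ (-(a + s - m)) + ‖z - x‖ ^ (-(a + s - m))) := by
    intro z hz
    have hρ : r ≤ ‖z - x‖ := by simpa [dist_eq_norm] using hz
    have hρ0 : 0 < ‖z - x‖ := hr0.trans_le hρ
    have hsplit : ‖z - x‖ ^ (-s) = ‖z - x‖ ^ (-m) * ‖z - x‖ ^ (-(s - m)) := by
      rw [← Real.rpow_add hρ0]; ring_nf
    calc √(1 + ‖z‖ ^ 2) ^ (-a) * ‖z - x‖ ^ (-s)
        = ‖z - x‖ ^ (-m) * (√(1 + ‖z‖ ^ 2) ^ (-a) * ‖z - x‖ ^ (-(s - m))) := by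
          rw [hsplit]; ring
      _ ≤ r ^ (-m) * (√(1 + ‖z‖ ^ 2) ^ (-(a + s - m)) + ‖z - x‖ ^ (-(a + s - m))) := by
          gcongr ?_ * ?_
          · exact Real.rpow_le_rpow_of_nonpos hr0 hρ (by linarith)
          · have := rpow_neg_mul_rpow_neg_le (sqrt_one_add_norm_sq_pos z) hρ0 ha (sub_nonneg.2 hms)
            rwa [add_sub_assoc]
  calc ∫⁻ z in (ball x r)ᶜ, ENNReal.ofReal (√(1 + ‖z‖ ^ 2) ^ (-a) * ‖z - x‖ ^ (-s)) ∂μ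
      ≤ ENNReal.ofReal (r ^ (-m)) * (∫⁻ z in (ball x r)ᶜ,
          ENNReal.ofReal (√(1 + ‖z‖ ^ 2) ^ (-(a + s - m))) ∂μ
        + ∫⁻ z in (ball x r)ᶜ, ENNReal.ofReal (‖z - x‖ ^ (-(a + s - m))) ∂μ) := by
        grw [lintegral_ofReal_le_mul (by positivity)
          (ae_restrict_of_forall_mem measurableSet_ball.compl hpt)]
        gcongr
        exact lintegral_ofReal_le_add (by fun_prop) (ae_of_all _ fun _ => le_rfl)
    _ ≤ ENNReal.ofReal (r ^ (-m)) * (I + C₁ * ENNReal.ofReal (2 ^ (a + s - m - finrank ℝ E))) := by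
        gcongr
        · exact setLIntegral_le_lintegral _ _
        · refine (hC₁ x r hr0).trans ?_
          gcongr
          have := rpow_le_two_rpow_mul_rpow hr (e := finrank ℝ E - (a + s - m)) (σ := 0)
            (by linarith)
          rwa [Real.rpow_zero, mul_one, zero_sub, neg_sub] at this

theorem lintegral_japanese_mul_norm_sub_rpow_le {a s : ℝ} (ha : 0 ≤ a) (hs0 : 0 ≤ s)
    (hs : s < finrank ℝ E) (hdim : finrank ℝ E < a + s) :
    ∃ C : ℝ≥0, ∀ x : E,
      ∫⁻ z, ENNReal.ofReal (√(1 + ‖z‖ ^ 2) ^ (-a) * ‖z - x‖ ^ (-s)) ∂μ ≤ C := by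
  obtain ⟨C₁, hC₁⟩ := lintegral_ball_norm_sub_rpow_le (μ := μ) hs0 hs
  obtain ⟨C₂, hC₂⟩ :=
    lintegral_compl_ball_japanese_mul_norm_sub_rpow_le (μ := μ) ha le_rfl hs0 (by simpa using hdim)
  refine ⟨C₁ + C₂, fun x => ?_⟩
  rw [← lintegral_add_compl _ measurableSet_ball, ENNReal.coe_add]
  gcongr
  · calc ∫⁻ z in ball x 1, ENNReal.ofReal (√(1 + ‖z‖ ^ 2) ^ (-a) * ‖z - x‖ ^ (-s)) ∂μ
        ≤ ∫⁻ z in ball x 1, ENNReal.ofReal (‖z - x‖ ^ (-s)) ∂μ :=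
          lintegral_mono fun z => ENNReal.ofReal_le_ofReal <| mul_le_of_le_one_left
            (by positivity) (sqrt_one_add_norm_sq_rpow_neg_le_one z ha)
      _ ≤ C₁ := by simpa using hC₁ x 1 one_pos
  · simpa using hC₂ x 1 (by norm_num)

theorem lintegral_ball_japanese_mul_norm_sub_rpow_le {s b δ σ : ℝ} (hs0 : 0 ≤ s)
    (hs : s < finrank ℝ E) (hb : 0 ≤ b) (hδ : 0 < δ) (hσ0 : 0 ≤ σ) (hσ : finrank ℝ E - s - b ≤ σ) :
    ∃ C : ℝ≥0, ∀ (x : E) (R : ℝ), 1 / 2 ≤ R →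
      ∫⁻ z in ball x R, ENNReal.ofReal (√(1 + ‖z‖ ^ 2) ^ (-b - δ) * ‖z - x‖ ^ (-s)) ∂μ
        ≤ C * ENNReal.ofReal (R ^ σ) := by
  -- Either the integral over all of `E` is finite, or `⟨z⟩ ^ (-b - δ) ≤ ‖z‖ ^ (-b)` leaves a
  -- Riesz-type integral of total order `s + b < finrank ℝ E` over the ball.
  rcases lt_or_ge (finrank ℝ E : ℝ) (b + δ + s) with hdim | hdim
  · obtain ⟨C, hC⟩ :=
      lintegral_japanese_mul_norm_sub_rpow_le (μ := μ) (by positivity) hs0 hs hdim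
    refine ⟨(C * ENNReal.ofReal (2 ^ σ)).toNNReal, fun x R hR => ?_⟩
    rw [ENNReal.coe_toNNReal (by finiteness), mul_assoc, ← ENNReal.ofReal_mul (by positivity)]
    calc _ ≤ ∫⁻ z, ENNReal.ofReal (√(1 + ‖z‖ ^ 2) ^ (-(b + δ)) * ‖z - x‖ ^ (-s)) ∂μ := by
          rw [neg_add']
          exact setLIntegral_le_lintegral _ _
      _ ≤ C * 1 := by rw [mul_one]; exact hC x
      _ ≤ _ := by
          gcongr
          rw [ENNReal.one_le_ofReal]
          simpa using rpow_le_two_rpow_mul_rpow hR hσ0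
  · have := nontrivial_of_lt_finrank hs0 hs
    obtain ⟨C, hC⟩ :=
      lintegral_ball_norm_rpow_mul_norm_sub_rpow_le (μ := μ) hb hs0 (by linarith)
    refine ⟨(C * ENNReal.ofReal (2 ^ (σ - (finrank ℝ E - (b + s))))).toNNReal,
      fun x R hR => ?_⟩
    rw [ENNReal.coe_toNNReal (by finiteness), mul_assoc, ← ENNReal.ofReal_mul (by positivity)]
    calc _ ≤ ∫⁻ z in ball x R, ENNReal.ofReal (‖z‖ ^ (-b) * ‖z - x‖ ^ (-s)) ∂μ := by
          refine lintegral_mono_ae ?_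
          filter_upwards [ae_restrict_of_ae (μ.ae_ne 0)] with z h0
          refine ENNReal.ofReal_le_ofReal (mul_le_mul_of_nonneg_right ?_ (by positivity))
          calc √(1 + ‖z‖ ^ 2) ^ (-b - δ) ≤ √(1 + ‖z‖ ^ 2) ^ (-b) :=
                Real.rpow_le_rpow_of_exponent_le (one_le_sqrt_one_add_norm_sq z) (by linarith)
            _ ≤ ‖z‖ ^ (-b) := Real.rpow_le_rpow_of_nonpos (norm_pos_iff.2 h0)
                (norm_le_sqrt_one_add_norm_sq z) (by linarith)
      _ ≤ _ := hC x R (by linarith)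
      _ ≤ _ := by
          gcongr
          exact rpow_le_two_rpow_mul_rpow hR (by linarith)

theorem lintegral_norm_sub_rpow_mul_norm_sub_rpow_le {k ℓ : ℝ} (hk0 : 0 ≤ k)
    (hk : k < finrank ℝ E) (hℓ0 : 0 ≤ ℓ) (hℓ : ℓ < finrank ℝ E) (hkℓ : finrank ℝ E < k + ℓ) :
    ∃ C : ℝ≥0, ∀ u₁ u₂ : E, u₁ ≠ u₂ →
      ∫⁻ z, ENNReal.ofReal (‖z - u₁‖ ^ (-k) * ‖z - u₂‖ ^ (-ℓ)) ∂μ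
        ≤ C * ENNReal.ofReal (‖u₁ - u₂‖ ^ ((finrank ℝ E : ℝ) - (k + ℓ))) := by
  obtain ⟨Cₖ, hCₖ⟩ := lintegral_ball_norm_sub_rpow_le (μ := μ) hk0 hk
  obtain ⟨Cₗ, hCₗ⟩ := lintegral_ball_norm_sub_rpow_le (μ := μ) hℓ0 hℓ
  obtain ⟨C, hC⟩ := lintegral_compl_ball_norm_sub_rpow_le (μ := μ) hkℓ
  refine ⟨((Cₖ + Cₗ + ENNReal.ofReal (3 ^ ℓ) * C)
    * ENNReal.ofReal (2 ^ (k + ℓ - finrank ℝ E))).toNNReal, fun u₁ u₂ hne => ?_⟩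
  rw [ENNReal.coe_toNNReal (by finiteness)]
  set r := ‖u₁ - u₂‖ / 2
  have hr : 0 < r := by have := norm_pos_iff.2 (sub_ne_zero.2 hne); positivity
  have hdecomp := lintegral_le_three_regions (μ := μ) (fun _ => 1) (fun _ => zero_le_one) hk0 hℓ0
    hr (u₁ := u₁) (u₂ := u₂) (by ring)
  simp only [one_mul] at hdecomp
  calc _ ≤ ENNReal.ofReal (r ^ (-ℓ)) * (Cₖ * ENNReal.ofReal (r ^ ((finrank ℝ E : ℝ) - k)))
        + ENNReal.ofReal (r ^ (-k)) * (Cₗ * ENNReal.ofReal (r ^ ((finrank ℝ E : ℝ) - ℓ)))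
        + ENNReal.ofReal (3 ^ ℓ) * (C * ENNReal.ofReal (r ^ ((finrank ℝ E : ℝ) - (k + ℓ)))) := by
        grw [hdecomp, hCₖ u₁ r hr, hCₗ u₂ r hr, hC u₁ r hr]
    _ = (Cₖ + Cₗ + ENNReal.ofReal (3 ^ ℓ) * C)
        * ENNReal.ofReal (r ^ ((finrank ℝ E : ℝ) - (k + ℓ))) := by
        rw [mul_left_comm, ofReal_rpow_mul_ofReal_rpow hr (c := finrank ℝ E - (k + ℓ)) (by ring),
          mul_left_comm (ENNReal.ofReal _),
          ofReal_rpow_mul_ofReal_rpow hr (c := finrank ℝ E - (k + ℓ)) (by ring)]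
        ring
    _ = _ := by
        rw [mul_assoc, ← ENNReal.ofReal_mul (by positivity), Real.div_rpow (norm_nonneg _)
          zero_le_two, div_eq_mul_inv, ← Real.rpow_neg zero_le_two, neg_sub, mul_comm (2 ^ _)]

theorem lintegral_japanese_two_point_le_of_add_lt {a k ℓ : ℝ} (ha : 0 ≤ a)
    (hk0 : 0 ≤ k) (hℓ0 : 0 ≤ ℓ) (hkℓ : k + ℓ < finrank ℝ E) (hdim : finrank ℝ E < a + (k + ℓ)) :
    ∃ C : ℝ≥0, ∀ u₁ u₂ : E,
      ∫⁻ z, ENNReal.ofReal (√(1 + ‖z‖ ^ 2) ^ (-a) * ‖z - u₁‖ ^ (-k) * ‖z - u₂‖ ^ (-ℓ)) ∂μ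
        ≤ C := by
  have := nontrivial_of_lt_finrank (add_nonneg hk0 hℓ0) hkℓ
  obtain ⟨C, hC⟩ :=
    lintegral_japanese_mul_norm_sub_rpow_le (μ := μ) ha (add_nonneg hk0 hℓ0) hkℓ hdim
  refine ⟨2 * C, fun u₁ u₂ => ?_⟩
  calc _ ≤ ∫⁻ z, ENNReal.ofReal (√(1 + ‖z‖ ^ 2) ^ (-a) * ‖z - u₁‖ ^ (-(k + ℓ))) ∂μ
        + ∫⁻ z, ENNReal.ofReal (√(1 + ‖z‖ ^ 2) ^ (-a) * ‖z - u₂‖ ^ (-(k + ℓ))) ∂μ := by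
        refine lintegral_ofReal_le_add (by fun_prop) ?_
        filter_upwards [μ.ae_ne u₁, μ.ae_ne u₂] with z h₁ h₂
        rw [mul_assoc, ← mul_add]
        exact mul_le_mul_of_nonneg_left (rpow_neg_mul_rpow_neg_le
          (norm_pos_iff.2 (sub_ne_zero.2 h₁)) (norm_pos_iff.2 (sub_ne_zero.2 h₂)) hk0 hℓ0)
          (by positivity)
    _ ≤ C + C := add_le_add (hC u₁) (hC u₂)
    _ = _ := by push_cast; ring

theorem lintegral_japanese_two_point_le_rpow_neg_max {a k ℓ : ℝ} (ha : 0 ≤ a) (hk0 : 0 ≤ k)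
    (hk : k < finrank ℝ E) (hℓ0 : 0 ≤ ℓ) (hℓ : ℓ < finrank ℝ E)
    (hdim : finrank ℝ E < a + (k + ℓ)) (hkℓ : k + ℓ ≠ finrank ℝ E) :
    ∃ C : ℝ≥0, ∀ u₁ u₂ : E, u₁ ≠ u₂ →
      ∫⁻ z, ENNReal.ofReal (√(1 + ‖z‖ ^ 2) ^ (-a) * ‖z - u₁‖ ^ (-k) * ‖z - u₂‖ ^ (-ℓ)) ∂μ
        ≤ C * ENNReal.ofReal (‖u₁ - u₂‖ ^ (-max 0 (k + ℓ - finrank ℝ E))) := by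
  rcases hkℓ.lt_or_gt with hlt | hgt
  · obtain ⟨C, hC⟩ :=
      lintegral_japanese_two_point_le_of_add_lt (μ := μ) ha hk0 hℓ0 hlt hdim
    refine ⟨C, fun u₁ u₂ _ => ?_⟩
    rw [max_eq_left (by linarith), neg_zero, Real.rpow_zero, ENNReal.ofReal_one, mul_one]
    exact hC u₁ u₂
  · obtain ⟨C, hC⟩ := lintegral_norm_sub_rpow_mul_norm_sub_rpow_le (μ := μ) hk0 hk hℓ0 hℓ hgt
    refine ⟨C, fun u₁ u₂ hne => ?_⟩
    rw [max_eq_right (by linarith), neg_sub]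
    refine le_trans (lintegral_mono fun z => ENNReal.ofReal_le_ofReal ?_) (hC u₁ u₂ hne)
    rw [mul_assoc]
    exact mul_le_of_le_one_left (by positivity) (sqrt_one_add_norm_sq_rpow_neg_le_one z ha)

theorem lintegral_japanese_two_point_le_rpow_neg_of_one_lt {k ℓ β δ m : ℝ} (hk0 : 0 ≤ k)
    (hk : k < finrank ℝ E) (hℓ0 : 0 ≤ ℓ) (hℓ : ℓ < finrank ℝ E) (hβ : 0 ≤ β) (hδ : 0 < δ)
    (hm0 : 0 ≤ m) (hmk : m ≤ k) (hmℓ : m ≤ ℓ) (hm : m ≤ k + ℓ + β - finrank ℝ E) :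
    ∃ C : ℝ≥0, ∀ u₁ u₂ : E, 1 < ‖u₁ - u₂‖ →
      ∫⁻ z, ENNReal.ofReal (√(1 + ‖z‖ ^ 2) ^ (-β - δ) * ‖z - u₁‖ ^ (-k) * ‖z - u₂‖ ^ (-ℓ)) ∂μ
        ≤ C * ENNReal.ofReal (‖u₁ - u₂‖ ^ (-m)) := by
  obtain ⟨C₁, hC₁⟩ := lintegral_ball_japanese_mul_norm_sub_rpow_le (μ := μ) (σ := ℓ - m)
    hk0 hk hβ hδ (by linarith) (by linarith)
  obtain ⟨C₂, hC₂⟩ := lintegral_ball_japanese_mul_norm_sub_rpow_le (μ := μ) (σ := k - m)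
    hℓ0 hℓ hβ hδ (by linarith) (by linarith)
  obtain ⟨C₃, hC₃⟩ := lintegral_compl_ball_japanese_mul_norm_sub_rpow_le (μ := μ)
    (a := β + δ) (s := k + ℓ) (by positivity) hm0 (by linarith) (by linarith)
  refine ⟨((C₁ + C₂ + ENNReal.ofReal (3 ^ ℓ) * C₃) * ENNReal.ofReal (2 ^ m)).toNNReal,
    fun u₁ u₂ hu => ?_⟩
  rw [ENNReal.coe_toNNReal (by finiteness)]
  set r := ‖u₁ - u₂‖ / 2 with hr_def
  have hr : 1 / 2 ≤ r := by rw [hr_def]; linarith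
  have hr0 : 0 < r := by linarith
  have hdecomp := lintegral_le_three_regions (μ := μ) (fun z => √(1 + ‖z‖ ^ 2) ^ (-β - δ))
    (fun _ => by positivity) hk0 hℓ0 hr0 (u₁ := u₁) (u₂ := u₂) (by ring)
  rw [neg_add' β δ] at hC₃
  calc _ ≤ ENNReal.ofReal (r ^ (-ℓ)) * (C₁ * ENNReal.ofReal (r ^ (ℓ - m)))
        + ENNReal.ofReal (r ^ (-k)) * (C₂ * ENNReal.ofReal (r ^ (k - m)))
        + ENNReal.ofReal (3 ^ ℓ) * (C₃ * ENNReal.ofReal (r ^ (-m))) := by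
        grw [hdecomp, hC₁ u₁ r hr, hC₂ u₂ r hr, hC₃ u₁ r hr]
    _ = (C₁ + C₂ + ENNReal.ofReal (3 ^ ℓ) * C₃) * ENNReal.ofReal (r ^ (-m)) := by
        rw [mul_left_comm, ofReal_rpow_mul_ofReal_rpow hr0 (c := -m) (by ring),
          mul_left_comm (ENNReal.ofReal _), ofReal_rpow_mul_ofReal_rpow hr0 (c := -m) (by ring)]
        ring
    _ = _ := by
        rw [mul_assoc, ← ENNReal.ofReal_mul (by positivity), Real.div_rpow (norm_nonneg _)
          zero_le_two, div_eq_mul_inv, ← Real.rpow_neg zero_le_two, neg_neg, mul_comm (2 ^ _)]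

end Singular

theorem stmt_1_general (n : ℕ) (k ℓ β δ : ℝ)
    (hk0 : 0 ≤ k) (hkn : k < n) (hl0 : 0 ≤ ℓ) (hln : ℓ < n)
    (hβ : 0 < β) (hsum : (n : ℝ) ≤ k + ℓ + β) (hne : k + ℓ ≠ n) (hδ : 0 < δ) :
    ∃ C > 0, ∀ u₁ u₂ : EuclideanSpace ℝ (Fin n), u₁ ≠ u₂ →
      (‖u₁ - u₂‖ ≤ 1 →
        (∫ z : EuclideanSpace ℝ (Fin n),
            Real.sqrt (1 + ‖z‖ ^ 2) ^ (-β - δ) * ‖z - u₁‖ ^ (-k) * ‖z - u₂‖ ^ (-ℓ))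
          ≤ C * ‖u₁ - u₂‖ ^ (-(max 0 (k + ℓ - n)))) ∧
      (1 < ‖u₁ - u₂‖ →
        (∫ z : EuclideanSpace ℝ (Fin n),
            Real.sqrt (1 + ‖z‖ ^ 2) ^ (-β - δ) * ‖z - u₁‖ ^ (-k) * ‖z - u₂‖ ^ (-ℓ))
          ≤ C * ‖u₁ - u₂‖ ^ (-(min k (min ℓ (k + ℓ + β - n))))) := by
  have hdim : (finrank ℝ (EuclideanSpace ℝ (Fin n)) : ℝ) = n := by simp
  obtain ⟨C₁, hC₁⟩ := lintegral_japanese_two_point_le_rpow_neg_max (μ := volume) (a := β + δ)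
    (by positivity) hk0 (by rwa [hdim]) hl0 (by rwa [hdim]) (by rw [hdim]; linarith) (by rwa [hdim])
  obtain ⟨C₂, hC₂⟩ := lintegral_japanese_two_point_le_rpow_neg_of_one_lt (μ := volume)
    (m := min k (min ℓ (k + ℓ + β - n))) hk0 (by rwa [hdim]) hl0 (by rwa [hdim]) hβ.le hδ
    (le_min hk0 (le_min hl0 (by linarith))) (min_le_left _ _)
    ((min_le_right _ _).trans (min_le_left _ _))
    (by rw [hdim]; exact (min_le_right _ _).trans (min_le_right _ _))
  rw [hdim, neg_add' β δ] at hC₁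
  refine ⟨C₁ + C₂ + 1, by positivity, fun u₁ u₂ hu => ⟨fun _ => ?_, fun hu₁ => ?_⟩⟩
  · refine (integral_le_of_lintegral_ofReal_le (fun z => by positivity) (by fun_prop)
      (by positivity) (hC₁ u₁ u₂ hu)).trans ?_
    gcongr
    linarith [C₂.coe_nonneg]
  · refine (integral_le_of_lintegral_ofReal_le (fun z => by positivity) (by fun_prop)
      (by positivity) (hC₂ u₁ u₂ hu₁)).trans ?_
    gcongr
    linarith [C₁.coe_nonneg]

theorem stmt_1 (n : ℕ) (hn : 1 ≤ n) (k ℓ β δ : ℝ)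
    (hk0 : 0 ≤ k) (hkn : k < n) (hl0 : 0 ≤ ℓ) (hln : ℓ < n)
    (hβ : 0 < β) (hsum : (n : ℝ) ≤ k + ℓ + β) (hne : k + ℓ ≠ n) (hδ : 0 < δ) :
    ∃ C > 0, ∀ u₁ u₂ : EuclideanSpace ℝ (Fin n), u₁ ≠ u₂ →
      (‖u₁ - u₂‖ ≤ 1 →
        (∫ z : EuclideanSpace ℝ (Fin n),
            Real.sqrt (1 + ‖z‖ ^ 2) ^ (-β - δ) * ‖z - u₁‖ ^ (-k) * ‖z - u₂‖ ^ (-ℓ))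
          ≤ C * ‖u₁ - u₂‖ ^ (-(max 0 (k + ℓ - n)))) ∧
      (1 < ‖u₁ - u₂‖ →
        (∫ z : EuclideanSpace ℝ (Fin n),
            Real.sqrt (1 + ‖z‖ ^ 2) ^ (-β - δ) * ‖z - u₁‖ ^ (-k) * ‖z - u₂‖ ^ (-ℓ))
          ≤ C * ‖u₁ - u₂‖ ^ (-(min k (min ℓ (k + ℓ + β - n))))) :=
  stmt_1_general n k ℓ β δ hk0 hkn hl0 hln hβ hsum hne hδ
end

section
/- Let n ≥ 1 be an integer and ε > 0. Then there exists C > 0 (depending only on n and ε) such that for every y ∈ ℝⁿ, ∫_{ℝⁿ} ⟨x⟩^{−(n−1)/2} ⟨y⟩^{−(n−1)/2} ⟨|x|−|y|⟩^{−(n+1)/2−ε} dx ≤ C. -/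
/-!
The integrand is radial in `x`. Peetre's inequality `⟨y⟩ ≤ √2 ⟨|x| - |y|⟩ ⟨x⟩` trades the factor
`⟨y⟩^{-(n-1)/2}` for `⟨x⟩^{-(n-1)/2}` at the cost of `⟨|x| - |y|⟩^{(n-1)/2}`. In polar coordinates
the resulting `⟨r⟩^{-(n-1)}` absorbs the Jacobian `r^{n-1}`, which leaves `∫ ⟨r - |y|⟩^{-1-ε} dr`,
a translate of a convergent integral.
-/

open MeasureTheory Real Set

theorem sqrt_one_add_sq_le_sqrt_two_mul (a b : ℝ) :
    √(1 + a ^ 2) ≤ √2 * √(1 + (a - b) ^ 2) * √(1 + b ^ 2) := by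
  rw [← sqrt_mul zero_le_two, ← sqrt_mul (by positivity)]
  exact sqrt_le_sqrt (by nlinarith [sq_nonneg (2 * b - a), sq_nonneg (b * (a - b))])

theorem rpow_neg_le_of_le_mul {s t c p : ℝ} (hs : 0 < s) (hc : 0 < c) (hst : s ≤ c * t)
    (hp : 0 ≤ p) : t ^ (-p) ≤ c ^ p * s ^ (-p) := by
  have ht : 0 < t := pos_of_mul_pos_right (hs.trans_le hst) hc.le
  calc t ^ (-p) = c ^ p * (c * t) ^ (-p) := by
        rw [mul_rpow hc.le ht.le, ← mul_assoc, ← rpow_add hc, add_neg_cancel, rpow_zero, one_mul]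
    _ ≤ c ^ p * s ^ (-p) :=
        mul_le_mul_of_nonneg_left (rpow_le_rpow_of_nonpos hs hst (neg_nonpos.2 hp)) (by positivity)

theorem pow_mul_sqrt_one_add_sq_rpow_le {r b p q : ℝ} (hr : 0 ≤ r) (hp : 0 ≤ p) :
    r ^ (2 * p) * (√(1 + r ^ 2) ^ (-p) * √(1 + b ^ 2) ^ (-p) * √(1 + (r - b) ^ 2) ^ (-q)) ≤
      √2 ^ p * √(1 + (r - b) ^ 2) ^ (p - q) := by
  set A := √(1 + r ^ 2)
  set D := √(1 + (r - b) ^ 2)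
  have hA : 0 < A := by positivity
  have hD : 0 < D := by positivity
  have hrA : r ^ (2 * p) * A ^ (-p + -p) ≤ 1 := by
    rw [← neg_add, ← two_mul, rpow_neg hA.le]
    refine mul_inv_le_one_of_le₀ (rpow_le_rpow hr ?_ (by positivity)) (by positivity)
    exact (le_abs_self r).trans (abs_le_sqrt (by linarith))
  have hB : √(1 + b ^ 2) ^ (-p) ≤ (√2 * D) ^ p * A ^ (-p) :=
    rpow_neg_le_of_le_mul hA (by positivity) (sqrt_one_add_sq_le_sqrt_two_mul r b) hp
  calc r ^ (2 * p) * (A ^ (-p) * √(1 + b ^ 2) ^ (-p) * D ^ (-q))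
      ≤ r ^ (2 * p) * (A ^ (-p) * ((√2 * D) ^ p * A ^ (-p)) * D ^ (-q)) := by gcongr
    _ = √2 ^ p * (r ^ (2 * p) * A ^ (-p + -p)) * D ^ (p + -q) := by
      rw [mul_rpow (by positivity) hD.le, rpow_add hA, rpow_add hD]; ring
    _ ≤ √2 ^ p * 1 * D ^ (p + -q) := by gcongr
    _ = √2 ^ p * D ^ (p - q) := by rw [mul_one, sub_eq_add_neg]

theorem integrable_sqrt_one_add_sq_rpow_neg {s : ℝ} (hs : 1 < s) :
    Integrable fun t : ℝ => √(1 + t ^ 2) ^ (-s) := by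
  have h := integrable_rpow_neg_one_add_norm_sq (E := ℝ) (μ := volume) (r := s)
    (by rwa [Module.finrank_self, Nat.cast_one])
  refine h.congr (Filter.Eventually.of_forall fun t => ?_)
  simp only [norm_eq_abs, sq_abs]
  rw [sqrt_eq_rpow, ← rpow_mul (by positivity)]
  ring_nf

theorem integral_fun_norm_addHaar_le {E : Type*} [NormedAddCommGroup E] [NormedSpace ℝ E]
    [FiniteDimensional ℝ E] [Nontrivial E] [MeasurableSpace E] [BorelSpace E] (μ : Measure E)
    [μ.IsAddHaarMeasure] {f g : ℝ → ℝ} (hg : IntegrableOn g (Ioi 0))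
    (hfg : ∀ r > 0, |r ^ (Module.finrank ℝ E - 1) * f r| ≤ g r) :
    ∫ x, f ‖x‖ ∂μ ≤ Module.finrank ℝ E * μ.real (Metric.ball 0 1) * ∫ r in Ioi 0, g r := by
  rw [integral_fun_norm_addHaar μ f, smul_eq_mul, nsmul_eq_mul, ← mul_assoc]
  refine mul_le_mul_of_nonneg_left ((Real.le_norm_self _).trans
    (norm_integral_le_of_norm_le hg ?_)) (by positivity)
  filter_upwards [ae_restrict_mem measurableSet_Ioi] with r hr
  exact hfg r hr

theorem stmt_4 (n : ℕ) (hn : 1 ≤ n) (ε : ℝ) (hε : 0 < ε) :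
    ∃ C > 0, ∀ y : EuclideanSpace ℝ (Fin n),
      (∫ x : EuclideanSpace ℝ (Fin n),
          Real.sqrt (1 + ‖x‖ ^ 2) ^ (-(((n : ℝ) - 1) / 2)) *
            Real.sqrt (1 + ‖y‖ ^ 2) ^ (-(((n : ℝ) - 1) / 2)) *
              Real.sqrt (1 + (‖x‖ - ‖y‖) ^ 2) ^ (-(((n : ℝ) + 1) / 2 + ε)))
        ≤ C := by
  have : Nontrivial (EuclideanSpace ℝ (Fin n)) :=
    Module.nontrivial_of_finrank_pos (R := ℝ) (by rw [finrank_euclideanSpace_fin]; omega)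
  set p : ℝ := ((n : ℝ) - 1) / 2
  have hdim : ((n - 1 : ℕ) : ℝ) = 2 * p := by rw [Nat.cast_sub hn]; push_cast; ring
  have hp : 0 ≤ p := by rw [← mul_nonneg_iff_of_pos_left two_pos, ← hdim]; positivity
  set V := volume.real (Metric.ball (0 : EuclideanSpace ℝ (Fin n)) 1)
  set J := ∫ t : ℝ, √(1 + t ^ 2) ^ (-(1 + ε))
  have hJ := integrable_sqrt_one_add_sq_rpow_neg (s := 1 + ε) (by linarith)
  refine ⟨n * V * (√2 ^ p * J) + 1, by positivity, fun y => ?_⟩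
  have hg : Integrable fun r => √2 ^ p * √(1 + (r - ‖y‖) ^ 2) ^ (-(1 + ε)) :=
    (hJ.comp_sub_right ‖y‖).const_mul _
  calc _ ≤ n * V * ∫ r in Ioi 0, √2 ^ p * √(1 + (r - ‖y‖) ^ 2) ^ (-(1 + ε)) := by
        refine (integral_fun_norm_addHaar_le _
          (f := fun a ↦ √(1 + a ^ 2) ^ (-p) * √(1 + ‖y‖ ^ 2) ^ (-p) *
            √(1 + (a - ‖y‖) ^ 2) ^ (-((n + 1) / 2 + ε)))
          hg.integrableOn fun r hr ↦ ?_).trans_eq (by rw [finrank_euclideanSpace_fin])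
        rw [finrank_euclideanSpace_fin, abs_of_nonneg (by positivity), ← rpow_natCast, hdim]
        convert pow_mul_sqrt_one_add_sq_rpow_le hr.le hp using 3
        ring
    _ ≤ n * V * (√2 ^ p * J) := by
        gcongr
        refine (setIntegral_le_integral hg (Filter.Eventually.of_forall fun r => ?_)).trans_eq ?_
        · positivity
        · rw [integral_const_mul, integral_sub_right_eq_self (fun t ↦ √(1 + t ^ 2) ^ (-(1 + ε)))]
    _ ≤ n * V * (√2 ^ p * J) + 1 := le_add_of_nonneg_right zero_le_one
end

section
/- Let n ≥ 1 be an integer and let p > 1 be a real number. Then there exists C > 0 (depending only on n and p) such that for every y ∈ ℝⁿ, ∫_{{x : |x| > 2|y|}} ⟨x⟩^{−(n−1)p/2} ⟨y⟩^{−(n−1)p/2} ⟨|x|−|y|⟩^{−(n+1)p/2} dx ≤ C ⟨y⟩^{n − (3n−1)p/2}. -/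
/-!
On the region `‖x‖ > 2‖y‖` we have `‖x‖ - ‖y‖ ≥ ‖x‖ / 2`, so `⟨‖x‖ - ‖y‖⟩` is comparable to `⟨x⟩`
and the integrand is at most a constant times `⟨y⟩^(-(n-1)p/2) (1 + ‖x‖)^(-np)`. Since `np > n`,
rescaling `x = R u` shows that the tail `∫_{‖x‖ > R} (1 + ‖x‖)^(-np) dx` is `O((1 + R)^(n - np))`;
with `R = 2‖y‖` the powers of `⟨y⟩` add up to `n - (3n-1)p/2`.
-/

open MeasureTheory Real Set Module
open scoped Pointwise

lemma div_rpow_neg {x w : ℝ} (r : ℝ) (hx : 0 ≤ x) (hw : 0 < w) :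
    (x / w) ^ (-r) = w ^ r * x ^ (-r) := by
  rw [div_rpow hx hw.le, rpow_neg hw.le, div_eq_mul_inv, inv_inv, mul_comm]

lemma sqrt_one_add_sq_rpow_neg_le {t a : ℝ} (ht : 0 ≤ t) (ha : 0 ≤ a) :
    √(1 + t ^ 2) ^ (-a) ≤ √2 ^ a * (1 + t) ^ (-a) := by
  have h := one_add_norm_le_sqrt_two_mul_sqrt t
  rw [Real.norm_of_nonneg ht] at h
  calc √(1 + t ^ 2) ^ (-a) ≤ ((1 + t) / √2) ^ (-a) :=
        rpow_le_rpow_of_nonpos (by positivity) (by rwa [div_le_iff₀' (by positivity)])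
          (neg_nonpos.2 ha)
    _ = √2 ^ a * (1 + t) ^ (-a) := div_rpow_neg a (by positivity) (by positivity)

lemma sqrt_one_add_sq_rpow_neg_mul_le {s t a b : ℝ} (ht : 0 ≤ t) (hts : 2 * t ≤ s)
    (ha : 0 ≤ a) (hb : 0 ≤ b) :
    √(1 + s ^ 2) ^ (-a) * √(1 + (s - t) ^ 2) ^ (-b) ≤
      √2 ^ a * (2 * √2) ^ b * (1 + s) ^ (-(a + b)) := by
  have hshift : (1 + (s - t)) ^ (-b) ≤ 2 ^ b * (1 + s) ^ (-b) :=
    calc (1 + (s - t)) ^ (-b) ≤ ((1 + s) / 2) ^ (-b) :=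
          rpow_le_rpow_of_nonpos (by linarith) (by linarith) (neg_nonpos.2 hb)
      _ = 2 ^ b * (1 + s) ^ (-b) := div_rpow_neg b (by linarith) two_pos
  have hs : 0 ≤ 1 + s := by linarith
  have hx := sqrt_one_add_sq_rpow_neg_le (by linarith : 0 ≤ s) ha
  have hxy := (sqrt_one_add_sq_rpow_neg_le (by linarith : 0 ≤ s - t) hb).trans
    (mul_le_mul_of_nonneg_left hshift (by positivity))
  calc √(1 + s ^ 2) ^ (-a) * √(1 + (s - t) ^ 2) ^ (-b)
      ≤ (√2 ^ a * (1 + s) ^ (-a)) * (√2 ^ b * (2 ^ b * (1 + s) ^ (-b))) :=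
        mul_le_mul hx hxy (by positivity) (mul_nonneg (by positivity) (rpow_nonneg hs _))
    _ = √2 ^ a * (2 * √2) ^ b * (1 + s) ^ (-(a + b)) := by
        rw [mul_rpow (by positivity) (by positivity), neg_add, rpow_add (by linarith)]
        ring

lemma smul_setOf_one_lt_norm {E : Type*} [NormedAddCommGroup E] [NormedSpace ℝ E] {R : ℝ}
    (hR : 0 < R) :
    R • {u : E | 1 < ‖u‖} = {x | R < ‖x‖} := by
  ext x
  rw [mem_smul_set_iff_inv_smul_mem₀ hR.ne', mem_ofPred_eq, mem_ofPred_eq, norm_smul,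
    norm_inv, Real.norm_of_nonneg hR.le, inv_mul_eq_div, one_lt_div hR]

section AddHaar

variable {E : Type*} [NormedAddCommGroup E] [NormedSpace ℝ E] [FiniteDimensional ℝ E]
  [MeasurableSpace E] [BorelSpace E] (μ : Measure E) [μ.IsAddHaarMeasure] {q : ℝ}

lemma integral_one_add_norm_rpow_neg_pos (hq : (finrank ℝ E : ℝ) < q) :
    0 < ∫ x, (1 + ‖x‖) ^ (-q) ∂μ := by
  have hpos : ∀ x : E, 0 < (1 + ‖x‖) ^ (-q) := fun x => by positivity
  rw [integral_pos_iff_support_of_nonneg (fun x => (hpos x).le) (integrable_one_add_norm hq),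
    Function.support_eq_univ fun x => (hpos x).ne']
  exact Measure.measure_univ_pos.2 (NeZero.ne μ)

/-- Rescaling `x = R • u` turns the tail `R < ‖x‖` into `1 < ‖u‖`, where
`1 + R ‖u‖ ≥ R (1 + ‖u‖) / 2`. -/
lemma setIntegral_lt_norm_one_add_norm_rpow_neg_le (hq : (finrank ℝ E : ℝ) < q) {R : ℝ}
    (hR : 0 < R) :
    ∫ x in {x | R < ‖x‖}, (1 + ‖x‖) ^ (-q) ∂μ ≤
      2 ^ q * (∫ x, (1 + ‖x‖) ^ (-q) ∂μ) * R ^ ((finrank ℝ E : ℝ) - q) := by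
  set s : Set E := {u | 1 < ‖u‖}
  have hq0 : 0 ≤ q := (Nat.cast_nonneg _).trans hq.le
  have hs : MeasurableSet s := measurableSet_lt measurable_const measurable_norm
  have hI := integrable_one_add_norm (μ := μ) hq
  have hpt : ∀ u ∈ s, (1 + ‖R • u‖) ^ (-q) ≤ 2 ^ q * R ^ (-q) * (1 + ‖u‖) ^ (-q) := by
    intro u hu
    have hu : 1 < ‖u‖ := hu
    rw [norm_smul, Real.norm_of_nonneg hR.le]
    calc (1 + R * ‖u‖) ^ (-q) ≤ (R * (1 + ‖u‖) / 2) ^ (-q) :=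
          rpow_le_rpow_of_nonpos (by positivity) (by nlinarith) (neg_nonpos.2 hq0)
      _ = 2 ^ q * R ^ (-q) * (1 + ‖u‖) ^ (-q) := by
          rw [div_rpow_neg q (by positivity) two_pos, mul_rpow hR.le (by positivity), mul_assoc]
  have hscaled :
      ∫ u in s, (1 + ‖R • u‖) ^ (-q) ∂μ ≤ 2 ^ q * R ^ (-q) * ∫ x, (1 + ‖x‖) ^ (-q) ∂μ :=
    calc ∫ u in s, (1 + ‖R • u‖) ^ (-q) ∂μ
        ≤ ∫ u in s, 2 ^ q * R ^ (-q) * (1 + ‖u‖) ^ (-q) ∂μ :=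
          integral_mono_of_nonneg (ae_of_all _ fun u => by positivity)
            (hI.const_mul _).integrableOn ((ae_restrict_iff' hs).2 (ae_of_all _ hpt))
      _ = 2 ^ q * R ^ (-q) * ∫ u in s, (1 + ‖u‖) ^ (-q) ∂μ := integral_const_mul _ _
      _ ≤ 2 ^ q * R ^ (-q) * ∫ x, (1 + ‖x‖) ^ (-q) ∂μ :=
          mul_le_mul_of_nonneg_left
            (setIntegral_le_integral hI (ae_of_all _ fun x => by positivity)) (by positivity)
  have hscale := Measure.setIntegral_comp_smul_of_pos μ (fun x : E => (1 + ‖x‖) ^ (-q)) s hR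
  rw [smul_setOf_one_lt_norm hR, eq_inv_smul_iff₀ (by positivity), smul_eq_mul] at hscale
  rw [← hscale, ← rpow_natCast]
  calc R ^ (finrank ℝ E : ℝ) * ∫ u in s, (1 + ‖R • u‖) ^ (-q) ∂μ
      ≤ R ^ (finrank ℝ E : ℝ) * (2 ^ q * R ^ (-q) * ∫ x, (1 + ‖x‖) ^ (-q) ∂μ) := by gcongr
    _ = 2 ^ q * (∫ x, (1 + ‖x‖) ^ (-q) ∂μ) * R ^ ((finrank ℝ E : ℝ) - q) := by
        rw [sub_eq_add_neg, rpow_add hR]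
        ring

lemma exists_setIntegral_lt_norm_one_add_norm_rpow_neg_le (hq : (finrank ℝ E : ℝ) < q) :
    ∃ C > 0, ∀ R ≥ 0, ∫ x in {x | R < ‖x‖}, (1 + ‖x‖) ^ (-q) ∂μ ≤
      C * (1 + R) ^ ((finrank ℝ E : ℝ) - q) := by
  set d : ℝ := (finrank ℝ E : ℝ)
  set I := ∫ x, (1 + ‖x‖) ^ (-q) ∂μ
  have hI0 : 0 < I := integral_one_add_norm_rpow_neg_pos μ hq
  refine ⟨2 ^ q * I * 2 ^ (q - d), by positivity, fun R hR => ?_⟩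
  rcases le_or_gt R 1 with hR1 | hR1
  · have hq0 : 0 ≤ q := (Nat.cast_nonneg _).trans hq.le
    have hsmall : 1 ≤ 2 ^ (q - d) * (1 + R) ^ (d - q) := by
      rw [← neg_sub q, ← div_rpow_neg _ (by positivity) two_pos]
      exact one_le_rpow_of_pos_of_le_one_of_nonpos (by positivity) (by linarith) (by linarith)
    calc ∫ x in {x | R < ‖x‖}, (1 + ‖x‖) ^ (-q) ∂μ ≤ I :=
          setIntegral_le_integral (integrable_one_add_norm hq) (ae_of_all _ fun x => by positivity)
      _ = 1 * I * 1 := by ring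
      _ ≤ 2 ^ q * I * (2 ^ (q - d) * (1 + R) ^ (d - q)) := by
          gcongr
          exact one_le_rpow one_le_two hq0
      _ = 2 ^ q * I * 2 ^ (q - d) * (1 + R) ^ (d - q) := by ring
  · calc ∫ x in {x | R < ‖x‖}, (1 + ‖x‖) ^ (-q) ∂μ ≤ 2 ^ q * I * R ^ (d - q) :=
          setIntegral_lt_norm_one_add_norm_rpow_neg_le μ hq (by linarith)
      _ ≤ 2 ^ q * I * ((1 + R) / 2) ^ (d - q) :=
          mul_le_mul_of_nonneg_left
            (rpow_le_rpow_of_nonpos (by positivity) (by linarith) (by linarith)) (by positivity)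
      _ = 2 ^ q * I * 2 ^ (q - d) * (1 + R) ^ (d - q) := by
          rw [← neg_sub, div_rpow_neg _ (by positivity) two_pos]
          ring

lemma setIntegral_two_mul_norm_lt_le_one_add_norm_rpow_neg (y : E) {a b : ℝ} (ha : 0 ≤ a)
    (hb : 0 ≤ b) (hab : (finrank ℝ E : ℝ) < a + b) :
    ∫ x in {x | 2 * ‖y‖ < ‖x‖},
        √(1 + ‖x‖ ^ 2) ^ (-a) * √(1 + ‖y‖ ^ 2) ^ (-a) * √(1 + (‖x‖ - ‖y‖) ^ 2) ^ (-b) ∂μ ≤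
      √2 ^ a * (2 * √2) ^ b * √(1 + ‖y‖ ^ 2) ^ (-a) *
        ∫ x in {x | 2 * ‖y‖ < ‖x‖}, (1 + ‖x‖) ^ (-(a + b)) ∂μ := by
  have hS : MeasurableSet {x : E | 2 * ‖y‖ < ‖x‖} :=
    measurableSet_lt measurable_const measurable_norm
  rw [← integral_const_mul]
  refine integral_mono_of_nonneg (ae_of_all _ fun x => by positivity)
    ((integrable_one_add_norm hab).const_mul _).integrableOn
    ((ae_restrict_iff' hS).2 (ae_of_all _ fun x hx => ?_))
  dsimp only
  calc _ = √(1 + ‖y‖ ^ 2) ^ (-a) *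
          (√(1 + ‖x‖ ^ 2) ^ (-a) * √(1 + (‖x‖ - ‖y‖) ^ 2) ^ (-b)) := by ring
    _ ≤ √(1 + ‖y‖ ^ 2) ^ (-a) * (√2 ^ a * (2 * √2) ^ b * (1 + ‖x‖) ^ (-(a + b))) :=
        mul_le_mul_of_nonneg_left
          (sqrt_one_add_sq_rpow_neg_mul_le (norm_nonneg y) hx.le ha hb) (by positivity)
    _ = _ := by ring

end AddHaar

theorem stmt_7 (n : ℕ) (hn : 1 ≤ n) (p : ℝ) (hp : 1 < p) :
    ∃ C > 0, ∀ y : EuclideanSpace ℝ (Fin n),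
      (∫ x in {x : EuclideanSpace ℝ (Fin n) | 2 * ‖y‖ < ‖x‖},
          Real.sqrt (1 + ‖x‖ ^ 2) ^ (-(((n : ℝ) - 1) * p / 2)) *
            Real.sqrt (1 + ‖y‖ ^ 2) ^ (-(((n : ℝ) - 1) * p / 2)) *
              Real.sqrt (1 + (‖x‖ - ‖y‖) ^ 2) ^ (-(((n : ℝ) + 1) * p / 2)))
        ≤ C * Real.sqrt (1 + ‖y‖ ^ 2) ^ ((n : ℝ) - (3 * (n : ℝ) - 1) * p / 2) := by
  have hn' : (1 : ℝ) ≤ n := by exact_mod_cast hn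
  set a : ℝ := ((n : ℝ) - 1) * p / 2
  set b : ℝ := ((n : ℝ) + 1) * p / 2
  have ha : 0 ≤ a := by positivity
  have hb : 0 ≤ b := by positivity
  have hq : (finrank ℝ (EuclideanSpace ℝ (Fin n)) : ℝ) < a + b := by
    rw [finrank_euclideanSpace_fin]; simp only [a, b]; nlinarith
  obtain ⟨C, hC, htail⟩ := exists_setIntegral_lt_norm_one_add_norm_rpow_neg_le volume hq
  rw [finrank_euclideanSpace_fin] at htail
  refine ⟨√2 ^ a * (2 * √2) ^ b * C, by positivity, fun y => ?_⟩
  set cy := √(1 + ‖y‖ ^ 2)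
  have hcy : cy ≤ 1 + 2 * ‖y‖ := by linarith [sqrt_one_add_norm_sq_le y, norm_nonneg y]
  calc _ ≤ √2 ^ a * (2 * √2) ^ b * cy ^ (-a) * (C * cy ^ ((n : ℝ) - (a + b))) := by
        refine (setIntegral_two_mul_norm_lt_le_one_add_norm_rpow_neg volume y ha hb hq).trans ?_
        gcongr
        refine (htail _ (by positivity)).trans (mul_le_mul_of_nonneg_left ?_ hC.le)
        exact rpow_le_rpow_of_nonpos (by positivity) hcy
          (by rw [finrank_euclideanSpace_fin] at hq; linarith)
    _ = √2 ^ a * (2 * √2) ^ b * C * cy ^ ((n : ℝ) - (3 * (n : ℝ) - 1) * p / 2) := by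
        rw [mul_mul_mul_comm, ← rpow_add (by positivity)]
        congr 2
        simp only [a, b]
        ring
end

section
/- Let n ≥ 1 and m ≥ 1 be integers. There exist constants c, C > 0 (depending only on n and m) such that for every unit vector ω ∈ ℝⁿ and every ξ ∈ ℝⁿ, c (1+|ξ|²)^{m−1} ≤ q_ω(ξ) ≤ C (1+|ξ|²)^{m−1}, where q_ω(ξ) := Σ_{ℓ=0}^{m−1} |ω−ξ|^{2ℓ} |ξ|^{2(m−1−ℓ)}. In particular q_ω(ξ) > 0 for all ξ. -/
/-! With `a = ‖ω - ξ‖²` and `b = ‖ξ‖²`, the sum is `∑ a^ℓ b^(m-1-ℓ)`, which lies between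
`max a b ^ (m-1)` (one of its terms) and `(a + b)^(m-1)` (binomial theorem). Since `‖ω‖ = 1`,
the triangle inequality gives `max a b ≥ 1/4`, `max a b ≥ b` and `a ≤ (1 + ‖ξ‖)² ≤ 2 (1 + b)`,
so both `max a b` and `a + b` are comparable to `1 + b`. -/

open Finset

section OrderedSemiring

variable {R : Type*} [CommSemiring R] [LinearOrder R] [IsStrictOrderedRing R]

lemma max_pow_le_sum_range_pow_mul_pow {a b : R} (ha : 0 ≤ a) (hb : 0 ≤ b) (k : ℕ) :
    max a b ^ k ≤ ∑ ℓ ∈ range (k + 1), a ^ ℓ * b ^ (k - ℓ) := by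
  have hnonneg : ∀ ℓ ∈ range (k + 1), 0 ≤ a ^ ℓ * b ^ (k - ℓ) := fun ℓ _ => by positivity
  rcases le_total a b with hab | hba
  · simpa [max_eq_right hab] using single_le_sum hnonneg (mem_range.mpr k.succ_pos)
  · simpa [max_eq_left hba] using single_le_sum hnonneg (mem_range.mpr k.lt_succ_self)

lemma sum_range_pow_mul_pow_le_add_pow {a b : R} (ha : 0 ≤ a) (hb : 0 ≤ b) (k : ℕ) :
    ∑ ℓ ∈ range (k + 1), a ^ ℓ * b ^ (k - ℓ) ≤ (a + b) ^ k := by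
  rw [add_pow]
  refine sum_le_sum fun ℓ hℓ => le_mul_of_one_le_right (by positivity) ?_
  exact_mod_cast Nat.choose_pos (Nat.lt_succ_iff.mp (mem_range.mp hℓ))

end OrderedSemiring

lemma one_add_sq_div_eight_le_max_sq {x y : ℝ} (hx : 0 ≤ x) (hy : 0 ≤ y) (hxy : 1 ≤ x + y) :
    (1 + y ^ 2) / 8 ≤ max (x ^ 2) (y ^ 2) := by
  rcases le_total x y with h | h
  · rw [max_eq_right (pow_le_pow_left₀ hx h 2)]
    nlinarith
  · have : y ^ 2 ≤ x ^ 2 := pow_le_pow_left₀ hy h 2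
    rw [max_eq_left this]
    nlinarith

lemma sq_add_sq_le_three_mul {x y : ℝ} (hx : 0 ≤ x) (hy : 0 ≤ y) (hxy : x ≤ 1 + y) :
    x ^ 2 + y ^ 2 ≤ 3 * (1 + y ^ 2) := by
  nlinarith [sq_nonneg (1 - y)]

theorem stmt_8_general (n m : ℕ) (hm : 1 ≤ m) :
    ∃ c > 0, ∃ C > 0, ∀ ω ξ : EuclideanSpace ℝ (Fin n), ‖ω‖ = 1 →
      (0 < ∑ ℓ ∈ Finset.range m, ‖ω - ξ‖ ^ (2 * ℓ) * ‖ξ‖ ^ (2 * (m - 1 - ℓ))) ∧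
      c * (1 + ‖ξ‖ ^ 2) ^ (m - 1) ≤
        ∑ ℓ ∈ Finset.range m, ‖ω - ξ‖ ^ (2 * ℓ) * ‖ξ‖ ^ (2 * (m - 1 - ℓ)) ∧
      (∑ ℓ ∈ Finset.range m, ‖ω - ξ‖ ^ (2 * ℓ) * ‖ξ‖ ^ (2 * (m - 1 - ℓ))) ≤
        C * (1 + ‖ξ‖ ^ 2) ^ (m - 1) := by
  obtain ⟨k, rfl⟩ : ∃ k, m = k + 1 := ⟨m - 1, by omega⟩
  refine ⟨(1 / 8) ^ k, by positivity, 3 ^ k, by positivity, fun ω ξ hω => ?_⟩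
  set x := ‖ω - ξ‖
  set y := ‖ξ‖
  have hx : 0 ≤ x := norm_nonneg _
  have hy : 0 ≤ y := norm_nonneg _
  have hsum : ∑ ℓ ∈ range (k + 1), x ^ (2 * ℓ) * y ^ (2 * (k + 1 - 1 - ℓ)) =
      ∑ ℓ ∈ range (k + 1), (x ^ 2) ^ ℓ * (y ^ 2) ^ (k - ℓ) := by
    simp only [Nat.add_sub_cancel, pow_mul]
  have hxy : 1 ≤ x + y := hω ▸ norm_le_norm_sub_add ω ξ
  have hx_le : x ≤ 1 + y := hω ▸ norm_sub_le ω ξ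
  have lower : (1 / 8) ^ k * (1 + y ^ 2) ^ k ≤
      ∑ ℓ ∈ range (k + 1), (x ^ 2) ^ ℓ * (y ^ 2) ^ (k - ℓ) := calc
    (1 / 8) ^ k * (1 + y ^ 2) ^ k = ((1 + y ^ 2) / 8) ^ k := by rw [← mul_pow]; ring
    _ ≤ max (x ^ 2) (y ^ 2) ^ k :=
      pow_le_pow_left₀ (by positivity) (one_add_sq_div_eight_le_max_sq hx hy hxy) k
    _ ≤ _ := max_pow_le_sum_range_pow_mul_pow (sq_nonneg x) (sq_nonneg y) k
  have upper : ∑ ℓ ∈ range (k + 1), (x ^ 2) ^ ℓ * (y ^ 2) ^ (k - ℓ) ≤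
      3 ^ k * (1 + y ^ 2) ^ k := calc
    _ ≤ (x ^ 2 + y ^ 2) ^ k := sum_range_pow_mul_pow_le_add_pow (sq_nonneg x) (sq_nonneg y) k
    _ ≤ (3 * (1 + y ^ 2)) ^ k :=
      pow_le_pow_left₀ (by positivity) (sq_add_sq_le_three_mul hx hy hx_le) k
    _ = 3 ^ k * (1 + y ^ 2) ^ k := mul_pow _ _ _
  rw [hsum]
  exact ⟨lower.trans_lt' (by positivity), lower, upper⟩

theorem stmt_8 (n m : ℕ) (hn : 1 ≤ n) (hm : 1 ≤ m) :
    ∃ c > 0, ∃ C > 0, ∀ ω ξ : EuclideanSpace ℝ (Fin n), ‖ω‖ = 1 →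
      (0 < ∑ ℓ ∈ Finset.range m, ‖ω - ξ‖ ^ (2 * ℓ) * ‖ξ‖ ^ (2 * (m - 1 - ℓ))) ∧
      c * (1 + ‖ξ‖ ^ 2) ^ (m - 1) ≤
        ∑ ℓ ∈ Finset.range m, ‖ω - ξ‖ ^ (2 * ℓ) * ‖ξ‖ ^ (2 * (m - 1 - ℓ)) ∧
      (∑ ℓ ∈ Finset.range m, ‖ω - ξ‖ ^ (2 * ℓ) * ‖ξ‖ ^ (2 * (m - 1 - ℓ))) ≤
        C * (1 + ‖ξ‖ ^ 2) ^ (m - 1) :=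
  stmt_8_general n m hm
end

section
/- Let n ≥ 1 and m ≥ 1 be integers, and let ω ∈ ℝⁿ be a unit vector. Then the function p_ω(ξ) := 1/q_ω(ξ), where q_ω(ξ) := Σ_{ℓ=0}^{m−1} |ω−ξ|^{2ℓ} |ξ|^{2(m−1−ℓ)}, is a smooth function on ℝⁿ, and for every integer N ≥ 0 there exists C > 0 (depending only on n, m, N) such that for every unit vector ω and all ξ ∈ ℝⁿ, the N-th total derivative satisfies ‖D^N p_ω(ξ)‖ ≤ C ⟨ξ⟩^{−(2m−2+N)}. -/
/-!
Write `q_ω(ξ) = F (ω - ξ, ξ)` with `F (x, y) = ∑ ‖x‖ ^ (2ℓ) ‖y‖ ^ (2(m-1-ℓ))`. The function `F`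
is smooth, homogeneous of degree `2m - 2` and positive away from the origin, so `Φ = 1 / F` is
smooth on `{0}ᶜ` and homogeneous of degree `-(2m - 2)`. Then `D^N Φ` is homogeneous of degree
`-(2m - 2) - N`; bounding it on the (compact) unit sphere gives
`‖D^N Φ v‖ ≤ C ‖v‖ ^ (-(2m - 2) - N)`. Finally `ξ ↦ (ω - ξ, ξ)` is affine with linear part of
norm `≤ 1`, and `⟨ξ⟩ ≤ 3 ‖(ω - ξ, ξ)‖` because `‖ω‖ = 1`.
-/

open Real Finset

section IteratedFDerivLocal

variable {E F G : Type*} [NormedAddCommGroup E] [NormedSpace ℝ E] [NormedAddCommGroup F]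
  [NormedSpace ℝ F] [NormedAddCommGroup G] [NormedSpace ℝ G] {f : E → F} {s : Set E} {N : ℕ}

theorem ContinuousLinearMap.iteratedFDeriv_comp_right_of_isOpen (g : G →L[ℝ] E)
    (hf : ContDiffOn ℝ N f s) (hs : IsOpen s) {x : G} (hx : g x ∈ s) :
    iteratedFDeriv ℝ N (f ∘ g) x =
      (iteratedFDeriv ℝ N f (g x)).compContinuousLinearMap fun _ => g := by
  have hs' : IsOpen (g ⁻¹' s) := hs.preimage g.continuous
  rw [← iteratedFDerivWithin_of_isOpen N hs' hx, ← iteratedFDerivWithin_of_isOpen N hs hx]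
  exact g.iteratedFDerivWithin_comp_right hf hs.uniqueDiffOn hs'.uniqueDiffOn hx le_rfl

theorem norm_iteratedFDeriv_comp_affine_le (hf : ContDiffOn ℝ N f s) (hs : IsOpen s)
    (A : G →L[ℝ] E) (b : E) {x : G} (hx : b + A x ∈ s) :
    ‖iteratedFDeriv ℝ N (fun y => f (b + A y)) x‖ ≤
      ‖iteratedFDeriv ℝ N f (b + A x)‖ * ‖A‖ ^ N := by
  have htrans : ContDiffOn ℝ N (fun z => f (b + z)) ((b + ·) ⁻¹' s) :=
    hf.comp (contDiff_const.add contDiff_id).contDiffOn fun _ hz => hz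
  rw [show (fun y => f (b + A y)) = (fun z => f (b + z)) ∘ A from rfl,
    A.iteratedFDeriv_comp_right_of_isOpen htrans (hs.preimage (continuous_const_add b)) hx,
    iteratedFDeriv_comp_add_left]
  simpa using (iteratedFDeriv ℝ N f (b + A x)).norm_compContinuousLinearMap_le fun _ => A

end IteratedFDerivLocal

section Homogeneous

variable {V F : Type*} [NormedAddCommGroup V] [NormedSpace ℝ V] [NormedAddCommGroup F]
  [NormedSpace ℝ F] {Φ : V → F} {d : ℝ} {N : ℕ}

theorem ContinuousMultilinearMap.compContinuousLinearMap_smul_id {ι : Type*} [Fintype ι]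
    (M : ContinuousMultilinearMap ℝ (fun _ : ι => V) F) (s : ℝ) :
    M.compContinuousLinearMap (fun _ => s • ContinuousLinearMap.id ℝ V) =
      s ^ Fintype.card ι • M := by
  ext v
  simp [M.map_smul_univ]

theorem iteratedFDeriv_smul_of_homogeneous (hΦ : ContDiffOn ℝ N Φ {0}ᶜ)
    (hhom : ∀ s : ℝ, 0 < s → ∀ v, Φ (s • v) = s ^ d • Φ v) {s : ℝ} (hs : 0 < s) {u : V}
    (hu : u ≠ 0) :
    s ^ N • iteratedFDeriv ℝ N Φ (s • u) = s ^ d • iteratedFDeriv ℝ N Φ u := by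
  have hsu : (s • ContinuousLinearMap.id ℝ V) u ∈ ({0}ᶜ : Set V) := by
    simpa using And.intro hs.ne' hu
  have hcomp := (s • ContinuousLinearMap.id ℝ V).iteratedFDeriv_comp_right_of_isOpen hΦ
    isOpen_compl_singleton hsu
  rw [ContinuousMultilinearMap.compContinuousLinearMap_smul_id, Fintype.card_fin] at hcomp
  have hfun : Φ ∘ (s • ContinuousLinearMap.id ℝ V) = fun v => s ^ d • Φ v :=
    funext fun v => hhom s hs v
  rw [hfun, iteratedFDeriv_const_smul_apply'
    (hΦ.contDiffAt (isOpen_compl_singleton.mem_nhds hu))] at hcomp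
  simpa using hcomp.symm

theorem exists_norm_iteratedFDeriv_le_of_homogeneous [FiniteDimensional ℝ V]
    (hΦ : ContDiffOn ℝ N Φ {0}ᶜ) (hhom : ∀ s : ℝ, 0 < s → ∀ v, Φ (s • v) = s ^ d • Φ v) :
    ∃ C > 0, ∀ v ≠ 0, ‖iteratedFDeriv ℝ N Φ v‖ ≤ C * ‖v‖ ^ (d - N) := by
  obtain ⟨C, hC⟩ := (isCompact_sphere (0 : V) 1).exists_bound_of_continuousOn
    ((ContinuousOn.continuousOn_iteratedFDeriv hΦ isOpen_compl_singleton le_rfl).mono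
      fun u hu => by simp_all [← norm_ne_zero_iff])
  refine ⟨max C 1, by positivity, fun v hv => ?_⟩
  have hs : 0 < ‖v‖ := norm_pos_iff.2 hv
  set u := ‖v‖⁻¹ • v
  have hvu : v = ‖v‖ • u := by simp [u, smul_smul, hs.ne']
  have hu : ‖u‖ = 1 := by simp [u, norm_smul, hs.ne']
  have hscale := congrArg norm <| iteratedFDeriv_smul_of_homogeneous hΦ hhom hs
    (ne_zero_of_norm_ne_zero (hu.trans_ne one_ne_zero))
  rw [← hvu, norm_smul, norm_smul, Real.norm_of_nonneg (by positivity),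
    Real.norm_of_nonneg (by positivity)] at hscale
  have hbound : ‖iteratedFDeriv ℝ N Φ u‖ ≤ max C 1 :=
    (hC u (by simpa using hu)).trans (le_max_left _ _)
  rw [Real.rpow_sub hs, Real.rpow_natCast, mul_div_assoc', le_div_iff₀ (by positivity),
    mul_comm, hscale, mul_comm]
  exact mul_le_mul_of_nonneg_right hbound (by positivity)

end Homogeneous

section NormPowSum

variable {E : Type*} [NormedAddCommGroup E] (m : ℕ)

/-- `q_ω(ξ) = normPowSum m (ω - ξ, ξ)`. -/
noncomputable def normPowSum (v : E × E) : ℝ :=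
  ∑ ℓ ∈ range m, ‖v.1‖ ^ (2 * ℓ) * ‖v.2‖ ^ (2 * (m - 1 - ℓ))

theorem contDiff_normPowSum [InnerProductSpace ℝ E] : ContDiff ℝ ⊤ (normPowSum (E := E) m) := by
  refine ContDiff.sum fun ℓ _ => ?_
  simp only [pow_mul]
  exact ((contDiff_norm_sq ℝ).comp contDiff_fst).pow ℓ |>.mul
    (((contDiff_norm_sq ℝ).comp contDiff_snd).pow _)

theorem normPowSum_smul [NormedSpace ℝ E] (s : ℝ) (v : E × E) :
    normPowSum m (s • v) = s ^ (2 * (m - 1)) * normPowSum m v := by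
  rw [normPowSum, normPowSum, mul_sum]
  refine sum_congr rfl fun ℓ hℓ => ?_
  have hdeg : 2 * ℓ + 2 * (m - 1 - ℓ) = 2 * (m - 1) := by
    have := mem_range.1 hℓ
    omega
  simp only [Prod.smul_fst, Prod.smul_snd, norm_smul, mul_pow, Real.norm_eq_abs,
    (even_two_mul _).pow_abs, ← hdeg, pow_add]
  ring

variable {m}

theorem pow_norm_le_normPowSum (hm : 1 ≤ m) (v : E × E) :
    ‖v‖ ^ (2 * (m - 1)) ≤ normPowSum m v := by
  have hterm : ∀ ℓ ∈ range m, 0 ≤ ‖v.1‖ ^ (2 * ℓ) * ‖v.2‖ ^ (2 * (m - 1 - ℓ)) :=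
    fun _ _ => by positivity
  rcases max_cases ‖v.1‖ ‖v.2‖ with ⟨hmax, -⟩ | ⟨hmax, -⟩
  · have := single_le_sum hterm (mem_range.2 (Nat.sub_one_lt_of_lt hm))
    simpa [normPowSum, Prod.norm_def, hmax] using this
  · have := single_le_sum hterm (mem_range.2 hm)
    simpa [normPowSum, Prod.norm_def, hmax] using this

theorem normPowSum_pos (hm : 1 ≤ m) {v : E × E} (hv : v ≠ 0) : 0 < normPowSum m v :=
  (pow_pos (norm_pos_iff.2 hv) _).trans_le (pow_norm_le_normPowSum hm v)

theorem contDiffOn_inv_normPowSum [InnerProductSpace ℝ E] (hm : 1 ≤ m) :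
    ContDiffOn ℝ ⊤ (fun v : E × E => (normPowSum m v)⁻¹) {0}ᶜ :=
  (contDiff_normPowSum m).contDiffOn.inv fun _ hv => (normPowSum_pos hm hv).ne'

theorem inv_normPowSum_smul [NormedSpace ℝ E] (hm : 1 ≤ m) {s : ℝ} (hs : 0 < s) (v : E × E) :
    (normPowSum m (s • v))⁻¹ = s ^ (-(2 * (m : ℝ) - 2)) • (normPowSum m v)⁻¹ := by
  have hdeg : (2 * (m : ℝ) - 2) = ((2 * (m - 1) : ℕ) : ℝ) := by
    rw [Nat.cast_mul, Nat.cast_sub hm]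
    push_cast
    ring
  rw [normPowSum_smul, hdeg, Real.rpow_neg hs.le, Real.rpow_natCast, mul_inv, smul_eq_mul]

end NormPowSum

section Symbol

variable {E : Type*} [NormedAddCommGroup E] {m : ℕ}

theorem sub_prod_self_ne_zero {ω : E} (hω : ω ≠ 0) (ξ : E) : (ω - ξ, ξ) ≠ 0 := by
  intro h
  have hξ : ξ = 0 := congrArg Prod.snd h
  exact hω (by simpa [hξ] using congrArg Prod.fst h)

theorem sqrt_one_add_sq_le_three_mul_norm_sub_prod {ω : E} (hω : ‖ω‖ = 1) (ξ : E) :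
    √(1 + ‖ξ‖ ^ 2) ≤ 3 * ‖(ω - ξ, ξ)‖ := by
  have h₁ : ‖ω - ξ‖ ≤ ‖(ω - ξ, ξ)‖ := norm_fst_le (ω - ξ, ξ)
  have h₂ : ‖ξ‖ ≤ ‖(ω - ξ, ξ)‖ := norm_snd_le (ω - ξ, ξ)
  have htri : ‖ω‖ - ‖ξ‖ ≤ ‖ω - ξ‖ := norm_sub_norm_le ω ξ
  rw [Real.sqrt_le_iff]
  constructor <;> nlinarith [norm_nonneg ξ]

variable [InnerProductSpace ℝ E]

theorem contDiff_inv_normPowSum_sub_prod (hm : 1 ≤ m) {ω : E} (hω : ω ≠ 0) :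
    ContDiff ℝ ⊤ (fun ξ : E => (normPowSum m (ω - ξ, ξ))⁻¹) :=
  (contDiffOn_inv_normPowSum hm).comp_contDiff
    ((contDiff_const.sub contDiff_id).prodMk contDiff_id) (sub_prod_self_ne_zero hω)

theorem exists_norm_iteratedFDeriv_inv_normPowSum_sub_prod_le [FiniteDimensional ℝ E]
    (hm : 1 ≤ m) (N : ℕ) :
    ∃ C > 0, ∀ ω : E, ‖ω‖ = 1 → ∀ ξ : E,
      ‖iteratedFDeriv ℝ N (fun ξ => (normPowSum m (ω - ξ, ξ))⁻¹) ξ‖ ≤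
        C * √(1 + ‖ξ‖ ^ 2) ^ (-(2 * (m : ℝ) - 2 + N)) := by
  have hΦ := (contDiffOn_inv_normPowSum (E := E) hm).of_le (m := N) le_top
  obtain ⟨C, hC, hbound⟩ := exists_norm_iteratedFDeriv_le_of_homogeneous hΦ
    fun s hs v => inv_normPowSum_smul hm hs v
  have hk : 0 ≤ 2 * (m : ℝ) - 2 + N := by
    have : (1 : ℝ) ≤ m := by exact_mod_cast hm
    linarith [N.cast_nonneg (α := ℝ)]
  refine ⟨C * 3 ^ (2 * (m : ℝ) - 2 + N), by positivity, fun ω hω ξ => ?_⟩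
  set A : E →L[ℝ] E × E := (-ContinuousLinearMap.id ℝ E).prod (ContinuousLinearMap.id ℝ E)
  have hA : ‖A‖ ≤ 1 := A.opNorm_le_bound zero_le_one fun η => by simp [A, Prod.norm_def]
  have hAff : ∀ η, ((ω, 0) : E × E) + A η = (ω - η, η) := fun η => by
    simp [A, sub_eq_add_neg]
  have hne := sub_prod_self_ne_zero (ne_zero_of_norm_ne_zero (hω.trans_ne one_ne_zero)) ξ
  have hR : 0 < √(1 + ‖ξ‖ ^ 2) / 3 := by positivity
  calc ‖iteratedFDeriv ℝ N (fun ξ => (normPowSum m (ω - ξ, ξ))⁻¹) ξ‖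
      ≤ ‖iteratedFDeriv ℝ N (fun v => (normPowSum m v)⁻¹) (ω - ξ, ξ)‖ * ‖A‖ ^ N := by
        simpa only [hAff] using
          norm_iteratedFDeriv_comp_affine_le hΦ isOpen_compl_singleton A (ω, 0) (x := ξ)
            ((hAff ξ).symm ▸ hne)
    _ ≤ C * ‖(ω - ξ, ξ)‖ ^ (-(2 * (m : ℝ) - 2 + N)) * 1 := by
        rw [neg_add']
        exact mul_le_mul (hbound _ hne) (pow_le_one₀ (norm_nonneg A) hA) (by positivity)
          (by positivity)
    _ ≤ C * (√(1 + ‖ξ‖ ^ 2) / 3) ^ (-(2 * (m : ℝ) - 2 + N)) := by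
        rw [mul_one]
        refine mul_le_mul_of_nonneg_left (Real.rpow_le_rpow_of_nonpos hR ?_ (neg_nonpos.2 hk)) hC.le
        linarith [sqrt_one_add_sq_le_three_mul_norm_sub_prod hω ξ]
    _ = C * 3 ^ (2 * (m : ℝ) - 2 + N) * √(1 + ‖ξ‖ ^ 2) ^ (-(2 * (m : ℝ) - 2 + N)) := by
        rw [Real.div_rpow (Real.sqrt_nonneg _) zero_le_three, Real.rpow_neg zero_le_three,
          div_inv_eq_mul]
        ring

end Symbol

theorem stmt_9_general (n m : ℕ) (hm : 1 ≤ m) :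
    (∀ ω : EuclideanSpace ℝ (Fin n), ‖ω‖ = 1 →
      ContDiff ℝ (⊤ : ℕ∞) (fun ξ : EuclideanSpace ℝ (Fin n) =>
        (∑ ℓ ∈ Finset.range m, ‖ω - ξ‖ ^ (2 * ℓ) * ‖ξ‖ ^ (2 * (m - 1 - ℓ)))⁻¹)) ∧
    ∀ N : ℕ, ∃ C > 0, ∀ ω : EuclideanSpace ℝ (Fin n), ‖ω‖ = 1 →
      ∀ ξ : EuclideanSpace ℝ (Fin n),
        ‖iteratedFDeriv ℝ N (fun ξ : EuclideanSpace ℝ (Fin n) =>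
            (∑ ℓ ∈ Finset.range m, ‖ω - ξ‖ ^ (2 * ℓ) * ‖ξ‖ ^ (2 * (m - 1 - ℓ)))⁻¹) ξ‖ ≤
          C * Real.sqrt (1 + ‖ξ‖ ^ 2) ^ (-(2 * (m : ℝ) - 2 + N)) :=
  ⟨fun _ hω => (contDiff_inv_normPowSum_sub_prod hm
      (ne_zero_of_norm_ne_zero (hω.trans_ne one_ne_zero))).of_le le_top,
    exists_norm_iteratedFDeriv_inv_normPowSum_sub_prod_le hm⟩

theorem stmt_9 (n m : ℕ) (hn : 1 ≤ n) (hm : 1 ≤ m) :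
    (∀ ω : EuclideanSpace ℝ (Fin n), ‖ω‖ = 1 →
      ContDiff ℝ (⊤ : ℕ∞) (fun ξ : EuclideanSpace ℝ (Fin n) =>
        (∑ ℓ ∈ Finset.range m, ‖ω - ξ‖ ^ (2 * ℓ) * ‖ξ‖ ^ (2 * (m - 1 - ℓ)))⁻¹)) ∧
    ∀ N : ℕ, ∃ C > 0, ∀ ω : EuclideanSpace ℝ (Fin n), ‖ω‖ = 1 →
      ∀ ξ : EuclideanSpace ℝ (Fin n),
        ‖iteratedFDeriv ℝ N (fun ξ : EuclideanSpace ℝ (Fin n) =>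
            (∑ ℓ ∈ Finset.range m, ‖ω - ξ‖ ^ (2 * ℓ) * ‖ξ‖ ^ (2 * (m - 1 - ℓ)))⁻¹) ξ‖ ≤
          C * Real.sqrt (1 + ‖ξ‖ ^ 2) ^ (-(2 * (m : ℝ) - 2 + N)) :=
  stmt_9_general n m hm
end

section
/- Let n ≥ 1 and m ≥ 1 be integers. For every integer N ≥ 0 there exists C > 0 (depending only on n, m, N) such that for every ε > 0, every unit vector ω ∈ ℝⁿ, and every ξ ∈ ℝⁿ, the function ξ ↦ p_ω(ξ) e^{−ε p_ω(ξ)} is smooth and its N-th total derivative satisfies ‖D^N [p_ω e^{−ε p_ω}](ξ)‖ ≤ C ⟨ξ⟩^{−(2m−2+N)}, with C independent of ε. -/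
/-!
Say that `f` has symbol bound `(d, K)` up to order `n` if `‖D^j f ξ‖ ≤ K (1 + ‖ξ‖)^(d - j)` for
`j ≤ n`. By the Leibniz rule such bounds multiply, and `‖ξ - ω‖²` has order `2` with constants
independent of `‖ω‖ ≤ 1`, so `q_ω` has order `2m - 2` uniformly in `ω`. For a unit vector `ω`,
at every `ξ` one of the extreme terms `‖ξ‖^(2m-2)`, `‖ω - ξ‖^(2m-2)` of `q_ω` is at least
`((1 + ‖ξ‖) / 3)^(2m-2)`, so `q_ω ≍ (1 + ‖ξ‖)^(2m-2)`.

Compositions `G ∘ f` with `f ≍ (1 + ‖ξ‖)^d` are estimated at a fixed point `x` by writing them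
through `g (f ξ / f x)`: the normalised function equals `1` at `x` and its `k`-th derivative there
is `O((1 + ‖x‖)^(-k))`, so Faà di Bruno only involves the derivatives of `g` at the single point
`1`. This gives `p_ω = 1 / q_ω` order `-(2m - 2)`. Finally `p e^{-εp} = c · g (p / c)` with
`c = p x` and `g s = s e^{-εcs}`, and `|g^{(k)}(1)| ≤ 2 k!` for every `εc ≥ 0` because
`t^k e^{-t} ≤ k!`: this is why the constant does not depend on `ε`.
-/

open Real Finset Nat

section SymbolBound

variable {E F G H : Type*} [NormedAddCommGroup E] [NormedSpace ℝ E]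
  [NormedAddCommGroup F] [NormedSpace ℝ F] [NormedAddCommGroup G] [NormedSpace ℝ G]
  [NormedAddCommGroup H] [NormedSpace ℝ H]

def HasSymbolBound (n : ℕ) (d K : ℝ) (f : E → F) : Prop :=
  ∀ j ≤ n, ∀ ξ, ‖iteratedFDeriv ℝ j f ξ‖ ≤ K * (1 + ‖ξ‖) ^ (d - j)

theorem hasSymbolBound_const (n : ℕ) (c : F) : HasSymbolBound n 0 ‖c‖ (fun _ : E => c) := by
  intro j _ ξ
  rcases j with _ | j
  · simp
  · rw [iteratedFDeriv_const_of_ne j.succ_ne_zero, Pi.zero_apply, norm_zero]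
    positivity

theorem hasSymbolBound_sub_const {ω : E} (hω : ‖ω‖ ≤ 1) (n : ℕ) :
    HasSymbolBound n 1 1 (fun ξ : E => ξ - ω) := by
  have hderiv : fderiv ℝ (fun ξ : E => ξ - ω) = fun _ => ContinuousLinearMap.id ℝ E := by
    funext ξ; rw [fderiv_sub_const, fderiv_fun_id]
  intro j _ ξ
  rcases j with _ | _ | j
  · simpa using (norm_sub_le ξ ω).trans (by linarith)
  · rw [← norm_iteratedFDeriv_fderiv, hderiv, norm_iteratedFDeriv_zero]
    simpa using ContinuousLinearMap.norm_id_le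
  · rw [← norm_iteratedFDeriv_fderiv, hderiv, iteratedFDeriv_const_of_ne j.succ_ne_zero,
      Pi.zero_apply, norm_zero]
    positivity

namespace HasSymbolBound

variable {n : ℕ} {d e K L : ℝ} {f : E → F} {g : E → G}

theorem nonneg (h : HasSymbolBound n d K f) : 0 ≤ K :=
  nonneg_of_mul_nonneg_left ((norm_nonneg _).trans (h 0 n.zero_le 0)) (by positivity)

theorem apply_le {f : E → ℝ} (h : HasSymbolBound n d K f) (ξ : E) : f ξ ≤ K * (1 + ‖ξ‖) ^ d := by
  have h0 := h 0 n.zero_le ξ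
  rw [norm_iteratedFDeriv_zero, Real.norm_eq_abs, Nat.cast_zero, sub_zero] at h0
  exact (le_abs_self _).trans h0

theorem bilinear (B : F →L[ℝ] G →L[ℝ] H) (hB : ‖B‖ ≤ 1) (hfK : HasSymbolBound n d K f)
    (hgL : HasSymbolBound n e L g) (hf : ContDiff ℝ n f) (hg : ContDiff ℝ n g) :
    HasSymbolBound n (d + e) (2 ^ n * K * L) (fun ξ => B (f ξ) (g ξ)) := by
  intro j hj ξ
  have hr : 0 < 1 + ‖ξ‖ := by positivity
  have hterm : ∀ i ∈ range (j + 1), (j.choose i : ℝ) * ‖iteratedFDeriv ℝ i f ξ‖ *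
      ‖iteratedFDeriv ℝ (j - i) g ξ‖ ≤ j.choose i * (K * L * (1 + ‖ξ‖) ^ (d + e - j)) := by
    intro i hi
    have hij : i ≤ j := Nat.lt_succ_iff.mp (mem_range.mp hi)
    have hexp : (1 + ‖ξ‖) ^ (d - i) * (1 + ‖ξ‖) ^ (e - (j - i : ℕ)) = (1 + ‖ξ‖) ^ (d + e - j) := by
      rw [← rpow_add hr, Nat.cast_sub hij]; ring_nf
    rw [mul_assoc]
    refine mul_le_mul_of_nonneg_left ?_ (by positivity)
    calc _ ≤ (K * (1 + ‖ξ‖) ^ (d - i)) * (L * (1 + ‖ξ‖) ^ (e - (j - i : ℕ))) :=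
          mul_le_mul (hfK i (hij.trans hj) ξ) (hgL _ ((j.sub_le i).trans hj) ξ) (norm_nonneg _)
            (mul_nonneg hfK.nonneg (by positivity))
      _ = K * L * (1 + ‖ξ‖) ^ (d + e - j) := by rw [← hexp]; ring
  have hKL : 0 ≤ K * L * (1 + ‖ξ‖) ^ (d + e - j) :=
    mul_nonneg (mul_nonneg hfK.nonneg hgL.nonneg) (by positivity)
  calc _ ≤ _ := B.norm_iteratedFDeriv_le_of_bilinear_of_le_one hf hg ξ (by exact_mod_cast hj) hB
    _ ≤ _ := sum_le_sum hterm
    _ = 2 ^ j * (K * L * (1 + ‖ξ‖) ^ (d + e - j)) := by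
      rw [← sum_mul, ← Nat.cast_sum, Nat.sum_range_choose]; push_cast; rfl
    _ ≤ 2 ^ n * (K * L * (1 + ‖ξ‖) ^ (d + e - j)) := by gcongr; norm_num
    _ = _ := by ring

theorem mul {f g : E → ℝ} (hfK : HasSymbolBound n d K f) (hgL : HasSymbolBound n e L g)
    (hf : ContDiff ℝ n f) (hg : ContDiff ℝ n g) :
    HasSymbolBound n (d + e) (2 ^ n * K * L) (fun ξ => f ξ * g ξ) :=
  hfK.bilinear (ContinuousLinearMap.mul ℝ ℝ) (ContinuousLinearMap.opNorm_mul_le _ _) hgL hf hg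

theorem pow {f : E → ℝ} (h : HasSymbolBound n d K f) (hf : ContDiff ℝ n f) (k : ℕ) :
    HasSymbolBound n (k * d) ((2 ^ n * K) ^ k) (fun ξ => f ξ ^ k) := by
  induction k with
  | zero => simpa using hasSymbolBound_const (E := E) n (1 : ℝ)
  | succ k ih =>
    convert ih.mul h (hf.pow k) hf using 1
    · push_cast; ring
    · ring
    · funext ξ; ring

theorem sum {ι : Type*} {s : Finset ι} {f : ι → E → F} (h : ∀ i ∈ s, HasSymbolBound n d K (f i))
    (hf : ∀ i ∈ s, ContDiff ℝ n (f i)) :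
    HasSymbolBound n d (#s * K) (fun ξ => ∑ i ∈ s, f i ξ) := by
  intro j hj ξ
  rw [iteratedFDeriv_fun_sum_apply fun i hi => ((hf i hi).of_le (by exact_mod_cast hj)).contDiffAt]
  calc _ ≤ ∑ i ∈ s, ‖iteratedFDeriv ℝ j (f i) ξ‖ := norm_sum_le _ _
    _ ≤ ∑ _i ∈ s, K * (1 + ‖ξ‖) ^ (d - j) := sum_le_sum fun i hi => h i hi j hj ξ
    _ = _ := by rw [sum_const, nsmul_eq_mul, mul_assoc]

end HasSymbolBound

end SymbolBound

section Composition

variable {E : Type*} [NormedAddCommGroup E] [NormedSpace ℝ E]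

theorem norm_iteratedFDeriv_const_mul {h : E → ℝ} {j : ℕ} {x : E} (a : ℝ)
    (hh : ContDiffAt ℝ j h x) :
    ‖iteratedFDeriv ℝ j (fun y => a * h y) x‖ = |a| * ‖iteratedFDeriv ℝ j h x‖ := by
  rw [← Real.norm_eq_abs, ← norm_smul, ← iteratedFDeriv_const_smul_apply hh]
  rfl

theorem norm_iteratedFDeriv_comp_div_le {f : E → ℝ} {g : ℝ → ℝ} {n : ℕ}
    (hf : ContDiff ℝ n f) (hpos : ∀ y, 0 < f y) (hg : ContDiffOn ℝ n g (Set.Ioi 0)) (x : E)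
    {C D : ℝ} (hC : ∀ i ≤ n, |iteratedDeriv i g 1| ≤ C)
    (hD : ∀ i, 1 ≤ i → i ≤ n → ‖iteratedFDeriv ℝ i f x‖ ≤ f x * D ^ i) :
    ‖iteratedFDeriv ℝ n (fun y => g (f y / f x)) x‖ ≤ n ! * C * D ^ n := by
  have hfx := hpos x
  have hcomp : (fun y => g (f y / f x)) = g ∘ fun y => (f x)⁻¹ * f y := by
    funext y; simp [div_eq_inv_mul]
  have hu : ContDiff ℝ n (fun y => (f x)⁻¹ * f y) := contDiff_const.mul hf
  rw [hcomp]
  refine norm_iteratedFDeriv_comp_le' (t := Set.Ioi 0) ?_ isOpen_Ioi.uniqueDiffOn hg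
    hu le_rfl x (fun i hi => ?_) (fun i hi hin => ?_)
  · rintro _ ⟨y, rfl⟩
    exact mul_pos (inv_pos.2 hfx) (hpos y)
  · have h1 : (f x)⁻¹ * f x = 1 := inv_mul_cancel₀ hfx.ne'
    rw [h1, iteratedFDerivWithin_of_isOpen i isOpen_Ioi (Set.mem_Ioi.2 one_pos),
      norm_iteratedFDeriv_eq_norm_iteratedDeriv, Real.norm_eq_abs]
    exact hC i hi
  · rw [norm_iteratedFDeriv_const_mul _ ((hf.of_le (by exact_mod_cast hin)).contDiffAt),
      abs_inv, abs_of_pos hfx, inv_mul_le_iff₀ hfx]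
    exact hD i hi hin

theorem abs_iteratedDeriv_inv_one (k : ℕ) : |iteratedDeriv k (fun s : ℝ => s⁻¹) 1| = k ! := by
  rw [iteratedDeriv_eq_iterate, iter_deriv_inv]
  simp

theorem iteratedDeriv_succ_mul_exp_neg (a : ℝ) (k : ℕ) :
    iteratedDeriv (k + 1) (fun s : ℝ => s * exp (-a * s)) =
      fun s => (-a) ^ k * exp (-a * s) * (k + 1 - a * s) := by
  have hexp : ∀ s, HasDerivAt (fun s : ℝ => exp (-a * s)) (exp (-a * s) * (-a)) s := fun s => by
    simpa using ((hasDerivAt_id s).const_mul (-a)).exp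
  induction k with
  | zero =>
    funext s
    have h : HasDerivAt (fun s : ℝ => s * exp (-a * s))
        (1 * exp (-a * s) + s * (exp (-a * s) * (-a))) s :=
      (hasDerivAt_id' s).mul (hexp s)
    rw [iteratedDeriv_one, h.deriv]
    push_cast; ring
  | succ k ih =>
    funext s
    rw [iteratedDeriv_succ, ih]
    have h : HasDerivAt (fun s : ℝ => (-a) ^ k * exp (-a * s) * (k + 1 - a * s))
        ((-a) ^ k * (exp (-a * s) * (-a)) * (k + 1 - a * s) +
          (-a) ^ k * exp (-a * s) * (0 - a * 1)) s :=
      ((hexp s).const_mul ((-a) ^ k)).mul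
        ((hasDerivAt_const s ((k : ℝ) + 1)).sub ((hasDerivAt_id' s).const_mul a))
    rw [h.deriv]
    push_cast; ring

theorem pow_mul_exp_neg_le_factorial {a : ℝ} (ha : 0 ≤ a) (k : ℕ) : a ^ k * exp (-a) ≤ k ! := by
  have h := pow_div_factorial_le_exp (x := a) ha k
  rw [div_le_iff₀ (by positivity)] at h
  calc a ^ k * exp (-a) ≤ exp a * k ! * exp (-a) := by gcongr
    _ = k ! := by rw [mul_comm (exp a), mul_assoc, ← exp_add, add_neg_cancel, exp_zero, mul_one]

theorem abs_iteratedDeriv_mul_exp_neg_one_le {a : ℝ} (ha : 0 ≤ a) (k : ℕ) :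
    |iteratedDeriv k (fun s : ℝ => s * exp (-a * s)) 1| ≤ 2 * k ! := by
  rcases k with _ | k
  · rw [iteratedDeriv_zero, one_mul, mul_one, abs_of_pos (exp_pos _)]
    norm_num
    linarith [exp_le_one_iff.2 (neg_nonpos.2 ha)]
  · rw [iteratedDeriv_succ_mul_exp_neg]
    simp only [mul_one, abs_mul, abs_pow, abs_neg, abs_of_nonneg ha, abs_of_pos (exp_pos _)]
    have hlin : |(k : ℝ) + 1 - a| ≤ (k + 1) + a := by
      rw [abs_le]; constructor <;> linarith
    calc a ^ k * exp (-a) * |(k : ℝ) + 1 - a|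
        ≤ a ^ k * exp (-a) * ((k + 1) + a) := by gcongr
      _ = (k + 1) * (a ^ k * exp (-a)) + a ^ (k + 1) * exp (-a) := by ring
      _ ≤ (k + 1) * k ! + (k + 1) ! := by
        gcongr
        · exact pow_mul_exp_neg_le_factorial ha k
        · exact pow_mul_exp_neg_le_factorial ha (k + 1)
      _ = 2 * (k + 1) ! := by push_cast [factorial_succ]; ring

end Composition

namespace HasSymbolBound

variable {E : Type*} [NormedAddCommGroup E] [NormedSpace ℝ E] {n : ℕ} {d K c : ℝ} {f : E → ℝ}

theorem inv_mul_rpow_neg_le_inv (h : HasSymbolBound n d K f) (hpos : ∀ ξ, 0 < f ξ) (ξ : E) :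
    K⁻¹ * (1 + ‖ξ‖) ^ (-d) ≤ (f ξ)⁻¹ := by
  rw [rpow_neg (by positivity), ← mul_inv]
  exact inv_anti₀ (hpos ξ) (h.apply_le ξ)

theorem norm_iteratedFDeriv_le_mul (h : HasSymbolBound n d K f) (hc : 0 < c)
    (hlow : ∀ ξ, c * (1 + ‖ξ‖) ^ d ≤ f ξ) {i : ℕ} (hi : 1 ≤ i) (hin : i ≤ n) (ξ : E) :
    ‖iteratedFDeriv ℝ i f ξ‖ ≤ f ξ * (max 1 (K / c) / (1 + ‖ξ‖)) ^ i := by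
  have hr : 0 < 1 + ‖ξ‖ := by positivity
  have hKc : K / c ≤ max 1 (K / c) ^ i :=
    (le_max_right _ _).trans (le_self_pow₀ (le_max_left _ _) (by omega))
  calc _ ≤ K * (1 + ‖ξ‖) ^ (d - i) := h i hin ξ
    _ = c * (1 + ‖ξ‖) ^ d * (K / c) / (1 + ‖ξ‖) ^ i := by
      rw [rpow_sub hr, rpow_natCast]; field_simp
    _ ≤ f ξ * max 1 (K / c) ^ i / (1 + ‖ξ‖) ^ i := by
      have hf0 : 0 ≤ f ξ := (by positivity : 0 ≤ c * (1 + ‖ξ‖) ^ d).trans (hlow ξ)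
      gcongr
      exacts [div_nonneg h.nonneg hc.le, hlow ξ]
    _ = _ := by rw [div_pow, mul_div_assoc]

theorem norm_iteratedFDeriv_comp_div_le (h : HasSymbolBound n d K f) (hf : ContDiff ℝ n f)
    (hc : 0 < c) (hlow : ∀ ξ, c * (1 + ‖ξ‖) ^ d ≤ f ξ) {g : ℝ → ℝ}
    (hg : ContDiffOn ℝ n g (Set.Ioi 0)) {C : ℝ} (hC : ∀ i ≤ n, |iteratedDeriv i g 1| ≤ C)
    {j : ℕ} (hj : j ≤ n) (x : E) :
    ‖iteratedFDeriv ℝ j (fun y => g (f y / f x)) x‖ ≤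
      n ! * C * max 1 (K / c) ^ n * (1 + ‖x‖) ^ (-(j : ℝ)) := by
  have hr : 0 < 1 + ‖x‖ := by positivity
  have hpos : ∀ ξ, 0 < f ξ := fun ξ => (by positivity : 0 < c * (1 + ‖ξ‖) ^ d).trans_le (hlow ξ)
  have hC0 : 0 ≤ C := (abs_nonneg _).trans (hC 0 n.zero_le)
  have hjn : (j : WithTop ℕ∞) ≤ n := by exact_mod_cast hj
  calc _ ≤ j ! * C * (max 1 (K / c) / (1 + ‖x‖)) ^ j :=
        _root_.norm_iteratedFDeriv_comp_div_le (hf.of_le hjn) hpos (hg.of_le hjn) x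
          (fun i hi => hC i (hi.trans hj))
          (fun i hi hin => h.norm_iteratedFDeriv_le_mul hc hlow hi (hin.trans hj) x)
    _ = j ! * C * max 1 (K / c) ^ j * (1 + ‖x‖) ^ (-(j : ℝ)) := by
      rw [div_pow, rpow_neg hr.le, rpow_natCast]; ring
    _ ≤ _ := by
      have hfac : (j ! : ℝ) ≤ n ! := by exact_mod_cast factorial_le hj
      have hpow : max 1 (K / c) ^ j ≤ max 1 (K / c) ^ n := pow_le_pow_right₀ (le_max_left _ _) hj
      gcongr

theorem inv (h : HasSymbolBound n d K f) (hf : ContDiff ℝ n f) (hc : 0 < c)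
    (hlow : ∀ ξ, c * (1 + ‖ξ‖) ^ d ≤ f ξ) :
    HasSymbolBound n (-d) (n ! * n ! * max 1 (K / c) ^ n / c) (fun ξ => (f ξ)⁻¹) := by
  intro j hj x
  have hr : 0 < 1 + ‖x‖ := by positivity
  have hpos : ∀ ξ, 0 < f ξ := fun ξ => (by positivity : 0 < c * (1 + ‖ξ‖) ^ d).trans_le (hlow ξ)
  have hsplit : (fun ξ => (f ξ)⁻¹) = fun ξ => (f x)⁻¹ * (f ξ / f x)⁻¹ := by
    funext ξ
    rw [inv_div, ← mul_div_assoc, inv_mul_cancel₀ (hpos x).ne', one_div]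
  have hsmooth : ContDiff ℝ j (fun ξ => (f ξ / f x)⁻¹) :=
    ((hf.of_le (by exact_mod_cast hj)).div_const _).inv fun ξ => (div_pos (hpos ξ) (hpos x)).ne'
  have hinv : (f x)⁻¹ ≤ c⁻¹ * (1 + ‖x‖) ^ (-d) := by
    rw [rpow_neg hr.le, ← mul_inv]
    exact inv_anti₀ (by positivity) (hlow x)
  have hcomp := h.norm_iteratedFDeriv_comp_div_le hf hc hlow (g := fun s => s⁻¹) (C := n !)
    ((contDiffOn_inv ℝ).mono fun s hs => ne_of_gt hs)
    (fun i hi => by rw [abs_iteratedDeriv_inv_one]; exact_mod_cast factorial_le hi) hj x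
  rw [hsplit, norm_iteratedFDeriv_const_mul _ hsmooth.contDiffAt, abs_of_pos (inv_pos.2 (hpos x))]
  calc _ ≤ c⁻¹ * (1 + ‖x‖) ^ (-d) * (n ! * n ! * max 1 (K / c) ^ n * (1 + ‖x‖) ^ (-(j : ℝ))) :=
        mul_le_mul hinv hcomp (norm_nonneg _) (by positivity)
    _ = _ := by rw [sub_eq_add_neg (-d), rpow_add hr]; ring

theorem mul_exp_neg (h : HasSymbolBound n d K f) (hf : ContDiff ℝ n f) (hc : 0 < c)
    (hlow : ∀ ξ, c * (1 + ‖ξ‖) ^ d ≤ f ξ) {ε : ℝ} (hε : 0 ≤ ε) :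
    HasSymbolBound n d (K * (n ! * (2 * n !) * max 1 (K / c) ^ n))
      (fun ξ => f ξ * exp (-ε * f ξ)) := by
  intro j hj x
  have hr : 0 < 1 + ‖x‖ := by positivity
  have hfx : 0 < f x := (by positivity : 0 < c * (1 + ‖x‖) ^ d).trans_le (hlow x)
  set g : ℝ → ℝ := fun s => s * exp (-(ε * f x) * s)
  have hg : ContDiff ℝ n g := by fun_prop
  have hsplit : (fun ξ => f ξ * exp (-ε * f ξ)) = fun ξ => f x * g (f ξ / f x) := by
    funext ξ
    simp only [g]
    rw [show -(ε * f x) * (f ξ / f x) = -ε * f ξ by field_simp]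
    field_simp
  have hcomp := h.norm_iteratedFDeriv_comp_div_le hf hc hlow hg.contDiffOn (C := 2 * n !)
    (fun i hi => (abs_iteratedDeriv_mul_exp_neg_one_le (by positivity) i).trans
      (by gcongr)) hj x
  have hsmooth : ContDiff ℝ j (fun ξ => g (f ξ / f x)) :=
    (hg.comp (hf.div_const _)).of_le (by exact_mod_cast hj)
  rw [hsplit, norm_iteratedFDeriv_const_mul _ hsmooth.contDiffAt, abs_of_pos hfx]
  calc _ ≤ K * (1 + ‖x‖) ^ d * (n ! * (2 * n !) * max 1 (K / c) ^ n * (1 + ‖x‖) ^ (-(j : ℝ))) :=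
        mul_le_mul (h.apply_le x) hcomp (norm_nonneg _) (mul_nonneg h.nonneg (by positivity))
    _ = _ := by rw [sub_eq_add_neg d, rpow_add hr]; ring

end HasSymbolBound

section Weight

variable {E : Type*} [NormedAddCommGroup E]

def qPoly (m : ℕ) (ω ξ : E) : ℝ :=
  ∑ ℓ ∈ range m, ‖ω - ξ‖ ^ (2 * ℓ) * ‖ξ‖ ^ (2 * (m - 1 - ℓ))

theorem qPoly_eq_sum_sq (m : ℕ) (ω : E) :
    qPoly m ω = fun ξ => ∑ ℓ ∈ range m, (‖ξ - ω‖ ^ 2) ^ ℓ * (‖ξ - 0‖ ^ 2) ^ (m - 1 - ℓ) := by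
  funext ξ
  simp only [qPoly, norm_sub_rev ω ξ, sub_zero, pow_mul]

theorem contDiff_norm_sub_sq [InnerProductSpace ℝ E] (a : E) :
    ContDiff ℝ (⊤ : ℕ∞) (fun ξ : E => ‖ξ - a‖ ^ 2) :=
  (contDiff_norm_sq ℝ).comp (contDiff_id.sub contDiff_const)

theorem contDiff_qPoly [InnerProductSpace ℝ E] (m : ℕ) (ω : E) :
    ContDiff ℝ (⊤ : ℕ∞) (qPoly m ω) := by
  rw [qPoly_eq_sum_sq]
  exact ContDiff.sum fun ℓ _ => ((contDiff_norm_sub_sq ω).pow ℓ).mul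
    ((contDiff_norm_sub_sq 0).pow _)

theorem hasSymbolBound_norm_sub_sq [InnerProductSpace ℝ E] {ω : E} (hω : ‖ω‖ ≤ 1) (n : ℕ) :
    HasSymbolBound n 2 (2 ^ n) (fun ξ : E => ‖ξ - ω‖ ^ 2) := by
  have hsub : ContDiff ℝ n (fun ξ : E => ξ - ω) := contDiff_id.sub contDiff_const
  have h := (hasSymbolBound_sub_const hω n).bilinear (innerSL ℝ) (norm_innerSL_le ℝ)
    (hasSymbolBound_sub_const hω n) hsub hsub
  have hinner : (fun ξ : E => ‖ξ - ω‖ ^ 2) = fun ξ => innerSL ℝ (ξ - ω) (ξ - ω) := by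
    funext ξ; rw [innerSL_apply_apply, real_inner_self_eq_norm_sq]
  rw [hinner]
  convert h using 1 <;> norm_num

theorem hasSymbolBound_qPoly [InnerProductSpace ℝ E] (m n : ℕ) {ω : E} (hω : ‖ω‖ ≤ 1) :
    HasSymbolBound n ((2 * (m - 1) : ℕ) : ℝ) (m * (2 ^ n * (2 ^ n * 2 ^ n) ^ (m - 1)))
      (qPoly m ω) := by
  have hsq := hasSymbolBound_norm_sub_sq hω n
  have hsq₀ := hasSymbolBound_norm_sub_sq (norm_zero.trans_le zero_le_one : ‖(0 : E)‖ ≤ 1) n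
  have hcd : ∀ a : E, ContDiff ℝ n (fun ξ : E => ‖ξ - a‖ ^ 2) :=
    fun a => (contDiff_norm_sub_sq a).of_le (by exact_mod_cast le_top)
  have hterm : ∀ ℓ ∈ range m, HasSymbolBound n ((2 * (m - 1) : ℕ) : ℝ)
      (2 ^ n * (2 ^ n * 2 ^ n) ^ (m - 1))
      (fun ξ => (‖ξ - ω‖ ^ 2) ^ ℓ * (‖ξ - 0‖ ^ 2) ^ (m - 1 - ℓ)) := by
    intro ℓ hℓ
    have hℓ : ℓ ≤ m - 1 := by have := mem_range.1 hℓ; omega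
    convert (hsq.pow (hcd ω) ℓ).mul (hsq₀.pow (hcd 0) (m - 1 - ℓ)) ((hcd ω).pow ℓ) ((hcd 0).pow _)
      using 1
    · have : 2 * (m - 1) = ℓ * 2 + (m - 1 - ℓ) * 2 := by omega
      exact_mod_cast this
    · rw [mul_assoc, ← pow_add (2 ^ n * 2 ^ n), Nat.add_sub_cancel' hℓ]
  rw [qPoly_eq_sum_sq]
  simpa only [card_range] using
    HasSymbolBound.sum hterm fun ℓ _ => ((hcd ω).pow ℓ).mul ((hcd 0).pow _)

theorem max_pow_le_qPoly {m : ℕ} (hm : 1 ≤ m) (ω ξ : E) :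
    max ‖ξ‖ ‖ω - ξ‖ ^ (2 * (m - 1)) ≤ qPoly m ω ξ := by
  have hnn : ∀ ℓ ∈ range m, 0 ≤ ‖ω - ξ‖ ^ (2 * ℓ) * ‖ξ‖ ^ (2 * (m - 1 - ℓ)) :=
    fun _ _ => by positivity
  unfold qPoly
  rcases max_choice ‖ξ‖ ‖ω - ξ‖ with h | h <;> rw [h]
  · simpa using single_le_sum hnn (mem_range.2 (by omega : 0 < m))
  · simpa using single_le_sum hnn (mem_range.2 (by omega : m - 1 < m))

theorem one_add_norm_le_three_mul_max {ω : E} (hω : ‖ω‖ = 1) (ξ : E) :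
    1 + ‖ξ‖ ≤ 3 * max ‖ξ‖ ‖ω - ξ‖ := by
  have h : 1 - ‖ξ‖ ≤ ‖ω - ξ‖ := hω ▸ norm_sub_norm_le ω ξ
  rcases le_total ‖ξ‖ (1 / 2) with hξ | hξ
  · linarith [le_max_right ‖ξ‖ ‖ω - ξ‖]
  · linarith [le_max_left ‖ξ‖ ‖ω - ξ‖]

theorem le_qPoly {m : ℕ} (hm : 1 ≤ m) {ω : E} (hω : ‖ω‖ = 1) (ξ : E) :
    (3 ^ (2 * (m - 1)))⁻¹ * (1 + ‖ξ‖) ^ ((2 * (m - 1) : ℕ) : ℝ) ≤ qPoly m ω ξ := by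
  rw [rpow_natCast, ← div_eq_inv_mul, ← div_pow]
  calc _ ≤ max ‖ξ‖ ‖ω - ξ‖ ^ (2 * (m - 1)) := by
        gcongr
        linarith [one_add_norm_le_three_mul_max hω ξ]
    _ ≤ _ := max_pow_le_qPoly hm ω ξ

theorem qPoly_pos {m : ℕ} (hm : 1 ≤ m) {ω : E} (hω : ‖ω‖ = 1) (ξ : E) : 0 < qPoly m ω ξ :=
  lt_of_lt_of_le (by positivity) (le_qPoly hm hω ξ)

end Weight

theorem stmt_10_general (n m : ℕ) (hm : 1 ≤ m) (N : ℕ) :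
    ∃ C > 0, ∀ ε : ℝ, 0 < ε → ∀ ω : EuclideanSpace ℝ (Fin n), ‖ω‖ = 1 →
      ContDiff ℝ (⊤ : ℕ∞) (fun ξ : EuclideanSpace ℝ (Fin n) =>
        (∑ ℓ ∈ Finset.range m, ‖ω - ξ‖ ^ (2 * ℓ) * ‖ξ‖ ^ (2 * (m - 1 - ℓ)))⁻¹ *
          Real.exp (-ε * (∑ ℓ ∈ Finset.range m, ‖ω - ξ‖ ^ (2 * ℓ) * ‖ξ‖ ^ (2 * (m - 1 - ℓ)))⁻¹)) ∧
      ∀ ξ : EuclideanSpace ℝ (Fin n),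
        ‖iteratedFDeriv ℝ N (fun ξ : EuclideanSpace ℝ (Fin n) =>
            (∑ ℓ ∈ Finset.range m, ‖ω - ξ‖ ^ (2 * ℓ) * ‖ξ‖ ^ (2 * (m - 1 - ℓ)))⁻¹ *
              Real.exp (-ε * (∑ ℓ ∈ Finset.range m,
                ‖ω - ξ‖ ^ (2 * ℓ) * ‖ξ‖ ^ (2 * (m - 1 - ℓ)))⁻¹)) ξ‖ ≤
          C * Real.sqrt (1 + ‖ξ‖ ^ 2) ^ (-(2 * (m : ℝ) - 2 + N)) := by
  set Kq : ℝ := m * (2 ^ N * (2 ^ N * 2 ^ N) ^ (m - 1))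
  set c : ℝ := (3 ^ (2 * (m - 1)))⁻¹
  set Kp : ℝ := N ! * N ! * max 1 (Kq / c) ^ N / c
  have hKq : 0 < Kq := mul_pos (by exact_mod_cast hm) (by positivity)
  refine ⟨Kp * (N ! * (2 * N !) * max 1 (Kp / Kq⁻¹) ^ N), by positivity, fun ε hε ω hω => ?_⟩
  have hqpos := qPoly_pos hm hω
  have hq := hasSymbolBound_qPoly m N hω.le
  have hp_smooth : ContDiff ℝ (⊤ : ℕ∞) (fun ξ => (qPoly m ω ξ)⁻¹) :=
    (contDiff_qPoly m ω).inv fun ξ => (hqpos ξ).ne'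
  have hp := hq.inv ((contDiff_qPoly m ω).of_le (by exact_mod_cast le_top)) (by positivity)
    (le_qPoly hm hω)
  have hpe := hp.mul_exp_neg (hp_smooth.of_le (by exact_mod_cast le_top)) (inv_pos.2 hKq)
    (hq.inv_mul_rpow_neg_le_inv hqpos) hε.le
  refine ⟨hp_smooth.mul (contDiff_exp.comp (contDiff_const.mul hp_smooth)), fun ξ => ?_⟩
  have hexp : -((2 * (m - 1) : ℕ) : ℝ) - N = -(2 * (m : ℝ) - 2 + N) := by
    push_cast [Nat.cast_sub hm]; ring
  calc _ ≤ _ := hpe N le_rfl ξ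
    _ ≤ _ := by
      have hm' : (1 : ℝ) ≤ m := by exact_mod_cast hm
      have hsqrt : √(1 + ‖ξ‖ ^ 2) ≤ 1 + ‖ξ‖ :=
        (sqrt_le_left (by positivity)).2 (by nlinarith [norm_nonneg ξ])
      rw [hexp]
      exact mul_le_mul_of_nonneg_left (rpow_le_rpow_of_nonpos (by positivity) hsqrt
        (by linarith [N.cast_nonneg (α := ℝ)])) (by positivity)

theorem stmt_10 (n m : ℕ) (hn : 1 ≤ n) (hm : 1 ≤ m) (N : ℕ) :
    ∃ C > 0, ∀ ε : ℝ, 0 < ε → ∀ ω : EuclideanSpace ℝ (Fin n), ‖ω‖ = 1 →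
      ContDiff ℝ (⊤ : ℕ∞) (fun ξ : EuclideanSpace ℝ (Fin n) =>
        (∑ ℓ ∈ Finset.range m, ‖ω - ξ‖ ^ (2 * ℓ) * ‖ξ‖ ^ (2 * (m - 1 - ℓ)))⁻¹ *
          Real.exp (-ε * (∑ ℓ ∈ Finset.range m, ‖ω - ξ‖ ^ (2 * ℓ) * ‖ξ‖ ^ (2 * (m - 1 - ℓ)))⁻¹)) ∧
      ∀ ξ : EuclideanSpace ℝ (Fin n),
        ‖iteratedFDeriv ℝ N (fun ξ : EuclideanSpace ℝ (Fin n) =>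
            (∑ ℓ ∈ Finset.range m, ‖ω - ξ‖ ^ (2 * ℓ) * ‖ξ‖ ^ (2 * (m - 1 - ℓ)))⁻¹ *
              Real.exp (-ε * (∑ ℓ ∈ Finset.range m,
                ‖ω - ξ‖ ^ (2 * ℓ) * ‖ξ‖ ^ (2 * (m - 1 - ℓ)))⁻¹)) ξ‖ ≤
          C * Real.sqrt (1 + ‖ξ‖ ^ 2) ^ (-(2 * (m : ℝ) - 2 + N)) :=
  stmt_10_general n m hm N
end

section
/- Let n ≥ 1 and m ≥ 1 be integers. For every integer N ≥ 0 there exists C > 0 (depending only on n, m, N) such that for every ε > 0, every unit vector ω ∈ ℝⁿ, and every ξ ∈ ℝⁿ, the N-th total derivative of ξ ↦ p_ω(ξ)(e^{−ε p_ω(ξ)} − 1) satisfies ‖D^N [p_ω (e^{−ε p_ω} − 1)](ξ)‖ ≤ C ε ⟨ξ⟩^{−(4m−4+N)}. -/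
/-
Call `f` a symbol of order `k` when `‖D^j f x‖ ≲ ⟨x⟩^(k - j)`. By Leibniz such bounds multiply,
so `q_ω` is a symbol of order `2(m - 1)` uniformly in `‖ω‖ ≤ 1`; for `‖ω‖ = 1` it is also bounded
below by a multiple of `⟨ξ⟩^(2(m - 1))`, since `|ω - ξ| + |ξ| ≥ 1`.

Compositions are handled by Faà di Bruno after rescaling at a fixed point `x₀`: if `f` is a symbol
of order `k` then `⟨x₀⟩^(-k) f` has `j`-th derivatives `≲ ⟨x₀⟩^(-j)` at `x₀`, so `g(⟨x₀⟩^(-k) f)`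
gains `⟨x₀⟩^(-j)` as soon as the derivatives of `g` are bounded at `⟨x₀⟩^(-k) f(x₀)`. With
`g t = t⁻¹` (and `⟨x₀⟩^(-k) q(x₀) ≍ 1`) this makes `p_ω` a symbol of order `-2(m - 1)`. With
`g t = exp (-u t) - 1`, `u = ε ⟨x₀⟩^(-2(m - 1))`, every derivative of `g` on `t ≍ 1` is `O(u)`
because `u^i e^(-u/c) ≤ i! c^i`; so `e^(-ε p_ω) - 1` is a symbol of order `-2(m - 1)` with
constant `O(ε)`, and one more Leibniz step gives order `-4(m - 1)`.
-/

open Real Finset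
open scoped Nat

noncomputable section

section Seminormed

variable {E : Type*} [SeminormedAddCommGroup E]

def japaneseBracket (x : E) : ℝ := √(1 + ‖x‖ ^ 2)

lemma one_le_japaneseBracket (x : E) : 1 ≤ japaneseBracket x :=
  Real.one_le_sqrt.2 (by nlinarith [norm_nonneg x])

lemma japaneseBracket_pos (x : E) : 0 < japaneseBracket x :=
  one_pos.trans_le (one_le_japaneseBracket x)

lemma norm_le_japaneseBracket (x : E) : ‖x‖ ≤ japaneseBracket x :=
  Real.le_sqrt_of_sq_le (by linarith)

lemma sq_japaneseBracket (x : E) : japaneseBracket x ^ 2 = 1 + ‖x‖ ^ 2 :=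
  Real.sq_sqrt (by positivity)

def qSymbol (m : ℕ) (ω ξ : E) : ℝ :=
  ∑ ℓ ∈ range m, ‖ω - ξ‖ ^ (2 * ℓ) * ‖ξ‖ ^ (2 * (m - 1 - ℓ))

lemma japaneseBracket_pow_le_five_pow_mul_qSymbol {m : ℕ} (hm : 1 ≤ m) {ω : E} (hω : 1 ≤ ‖ω‖)
    (ξ : E) :
    japaneseBracket ξ ^ (2 * (m - 1)) ≤ 5 ^ (m - 1) * qSymbol m ω ξ := by
  set a := ‖ω - ξ‖
  set b := ‖ξ‖
  have hterm : ∀ ℓ ∈ range m, 0 ≤ a ^ (2 * ℓ) * b ^ (2 * (m - 1 - ℓ)) :=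
    fun _ _ => by positivity
  have hmax : max a b ^ (2 * (m - 1)) ≤ qSymbol m ω ξ := by
    rcases max_cases a b with ⟨hab, -⟩ | ⟨hab, -⟩ <;> rw [hab, qSymbol]
    · simpa using single_le_sum hterm (mem_range.2 (by omega : m - 1 < m))
    · simpa using single_le_sum hterm (mem_range.2 (by omega : 0 < m))
  -- `ω = (ω - ξ) + ξ` forces `max a b ≥ 1 / 2`, which absorbs the `1` in `⟨ξ⟩²`.
  have hsq : japaneseBracket ξ ^ 2 ≤ 5 * max a b ^ 2 := by
    have h1 : 1 ≤ a + b := hω.trans ((norm_add_le _ _).trans_eq' (by rw [sub_add_cancel]))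
    have ha := le_max_left a b
    have hb := le_max_right a b
    rw [sq_japaneseBracket]
    nlinarith [norm_nonneg ξ]
  calc japaneseBracket ξ ^ (2 * (m - 1)) = (japaneseBracket ξ ^ 2) ^ (m - 1) := pow_mul _ _ _
    _ ≤ (5 * max a b ^ 2) ^ (m - 1) := by gcongr
    _ = 5 ^ (m - 1) * max a b ^ (2 * (m - 1)) := by rw [mul_pow, pow_mul]
    _ ≤ 5 ^ (m - 1) * qSymbol m ω ξ := by gcongr

end Seminormed

lemma norm_iteratedFDerivWithin_inv_le (i : ℕ) {c t : ℝ} (hc : 0 < c) (hct : 1 ≤ c * t) :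
    ‖iteratedFDerivWithin ℝ i (·⁻¹) (Set.Ioi 0) t‖ ≤ i ! * c ^ (i + 1) := by
  have ht : 0 < t := pos_of_mul_pos_right (one_pos.trans_le hct) hc.le
  have htc : t⁻¹ ≤ c := by rwa [inv_le_iff_one_le_mul₀ ht]
  rw [iteratedFDerivWithin_of_isOpen i isOpen_Ioi ht, norm_iteratedFDeriv_eq_norm_iteratedDeriv,
    iteratedDeriv_eq_iterate, iter_deriv_inv, norm_mul, norm_mul, norm_pow, norm_neg, norm_one,
    one_pow, one_mul, Real.norm_natCast, Real.norm_of_nonneg (zpow_pos ht _).le,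
    show (-1 - i : ℤ) = -((i + 1 : ℕ) : ℤ) by push_cast; ring, zpow_neg, zpow_natCast,
    ← inv_pow]
  gcongr

lemma pow_mul_exp_neg_div_le {u c : ℝ} (hu : 0 ≤ u) (hc : 0 < c) (i : ℕ) :
    u ^ i * exp (-(u / c)) ≤ i ! * c ^ i := by
  have h := pow_div_factorial_le_exp _ (div_nonneg hu hc.le) i
  rw [div_pow, div_div, div_le_iff₀ (by positivity)] at h
  rw [exp_neg, ← div_eq_mul_inv, div_le_iff₀ (exp_pos _)]
  linarith

lemma norm_exp_neg_mul_sub_one_le {u t : ℝ} (hu : 0 ≤ u) (ht : 0 ≤ t) :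
    ‖exp (-u * t) - 1‖ ≤ u * t := by
  have h1 : exp (-u * t) ≤ 1 := exp_le_one_iff.2 (by nlinarith)
  rw [Real.norm_of_nonpos (by linarith)]
  linarith [add_one_le_exp (-u * t)]

lemma norm_iteratedFDeriv_exp_neg_mul_sub_one_le {u c t : ℝ} (hu : 0 ≤ u) (hc : 0 < c)
    (hct : 1 ≤ c * t) (i : ℕ) :
    ‖iteratedFDeriv ℝ (i + 1) (fun t => exp (-u * t) - 1) t‖ ≤ u * (i ! * c ^ i) := by
  rw [show (fun t => exp (-u * t) - 1) = (fun t => exp (-u * t)) - fun _ => 1 from rfl,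
    iteratedFDeriv_sub_apply (by fun_prop) contDiffAt_const,
    iteratedFDeriv_const_of_ne (Nat.succ_ne_zero i), Pi.zero_apply, sub_zero,
    norm_iteratedFDeriv_eq_norm_iteratedDeriv, iteratedDeriv_exp_const_mul, norm_mul, norm_pow,
    norm_neg, Real.norm_of_nonneg hu, Real.norm_of_nonneg (exp_pos _).le, pow_succ',
    mul_assoc]
  refine mul_le_mul_of_nonneg_left ?_ hu
  calc u ^ i * exp (-u * t) ≤ u ^ i * exp (-(u / c)) := by
        gcongr
        rw [neg_mul, neg_le_neg_iff, div_le_iff₀ hc]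
        nlinarith
    _ ≤ i ! * c ^ i := pow_mul_exp_neg_div_le hu hc i

variable {E F G H : Type*} [NormedAddCommGroup E] [NormedSpace ℝ E]
  [NormedAddCommGroup F] [NormedSpace ℝ F] [NormedAddCommGroup G] [NormedSpace ℝ G]
  [NormedAddCommGroup H] [NormedSpace ℝ H]

structure SymbolEstimate (N : ℕ) (k : ℤ) (A : ℝ) (f : E → F) : Prop where
  contDiff : ContDiff ℝ (⊤ : ℕ∞) f
  norm_iteratedFDeriv_le :
    ∀ j ≤ N, ∀ x, ‖iteratedFDeriv ℝ j f x‖ ≤ A * japaneseBracket x ^ (k - j)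


namespace SymbolEstimate

variable {N : ℕ} {k l : ℤ} {A B : ℝ} {f : E → F}

lemma nonneg (hf : SymbolEstimate N k A f) : 0 ≤ A := by
  have h := hf.norm_iteratedFDeriv_le 0 N.zero_le 0
  exact nonneg_of_mul_nonneg_left ((norm_nonneg _).trans h)
    (zpow_pos (japaneseBracket_pos _) _)

lemma mono (hf : SymbolEstimate N k A f) (hAB : A ≤ B) : SymbolEstimate N k B f :=
  ⟨hf.contDiff, fun j hj x => (hf.norm_iteratedFDeriv_le j hj x).trans
    (mul_le_mul_of_nonneg_right hAB (zpow_pos (japaneseBracket_pos x) _).le)⟩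

lemma norm_le (hf : SymbolEstimate N k A f) (x : E) : ‖f x‖ ≤ A * japaneseBracket x ^ k := by
  simpa using hf.norm_iteratedFDeriv_le 0 N.zero_le x

lemma zpow_neg_le_mul_inv {q : E → ℝ} (hq : SymbolEstimate N k A q) {x : E} (hx : 0 < q x) :
    japaneseBracket x ^ (-k) ≤ A * (q x)⁻¹ := by
  rw [zpow_neg, ← div_eq_mul_inv, le_div_iff₀ hx,
    inv_mul_le_iff₀ (zpow_pos (japaneseBracket_pos x) k)]
  exact (le_norm_self _).trans ((hq.norm_le x).trans_eq (mul_comm _ _))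

lemma bilinear {g : E → G} (Φ : F →L[ℝ] G →L[ℝ] H) (hΦ : ‖Φ‖ ≤ 1)
    (hf : SymbolEstimate N k A f) (hg : SymbolEstimate N l B g) :
    SymbolEstimate N (k + l) (2 ^ N * A * B) (fun x => Φ (f x) (g x)) := by
  refine ⟨(Φ.contDiff.comp hf.contDiff).clm_apply hg.contDiff, fun j hj x => ?_⟩
  have hA := hf.nonneg
  have hB := hg.nonneg
  set w := japaneseBracket x
  have hw := japaneseBracket_pos x
  have hterm : ∀ i ∈ range (j + 1), (j.choose i : ℝ) * ‖iteratedFDeriv ℝ i f x‖ *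
      ‖iteratedFDeriv ℝ (j - i) g x‖ ≤ j.choose i * (A * B * w ^ (k + l - j)) := by
    intro i hi
    have hij : i ≤ j := Nat.lt_succ_iff.1 (mem_range.1 hi)
    rw [mul_assoc]
    refine mul_le_mul_of_nonneg_left ?_ (Nat.cast_nonneg _)
    calc ‖iteratedFDeriv ℝ i f x‖ * ‖iteratedFDeriv ℝ (j - i) g x‖
        ≤ A * w ^ (k - i) * (B * w ^ (l - (j - i : ℕ))) :=
          mul_le_mul (hf.norm_iteratedFDeriv_le i (hij.trans hj) x)
            (hg.norm_iteratedFDeriv_le _ ((Nat.sub_le _ _).trans hj) x) (norm_nonneg _)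
            (mul_nonneg hA (zpow_pos hw _).le)
      _ = A * B * w ^ (k + l - j) := by
          rw [mul_mul_mul_comm, ← zpow_add₀ hw.ne']
          congr 2
          push_cast [hij]
          ring
  calc ‖iteratedFDeriv ℝ j (fun x => Φ (f x) (g x)) x‖
      ≤ ∑ i ∈ range (j + 1), (j.choose i : ℝ) * ‖iteratedFDeriv ℝ i f x‖ *
          ‖iteratedFDeriv ℝ (j - i) g x‖ :=
        Φ.norm_iteratedFDeriv_le_of_bilinear_of_le_one hf.contDiff hg.contDiff x
          (mod_cast le_top) hΦ
    _ ≤ 2 ^ j * (A * B * w ^ (k + l - j)) := by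
        refine (sum_le_sum hterm).trans_eq ?_
        rw [← sum_mul, ← Nat.cast_sum, Nat.sum_range_choose, Nat.cast_pow, Nat.cast_ofNat]
    _ ≤ 2 ^ N * A * B * w ^ (k + l - j) := by
        rw [mul_assoc (2 ^ N * A), mul_assoc (2 ^ N : ℝ), ← mul_assoc A]
        exact mul_le_mul_of_nonneg_right (pow_le_pow_right₀ one_le_two hj)
          (mul_nonneg (mul_nonneg hA hB) (zpow_pos hw _).le)

lemma mul {f g : E → ℝ} (hf : SymbolEstimate N k A f)
    (hg : SymbolEstimate N l B g) :
    SymbolEstimate N (k + l) (2 ^ N * A * B) (fun x => f x * g x) :=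
  hf.bilinear (ContinuousLinearMap.mul ℝ ℝ) (ContinuousLinearMap.opNorm_mul_le ℝ ℝ) hg

lemma const (N : ℕ) (c : F) : SymbolEstimate N 0 ‖c‖ (fun _ : E => c) := by
  refine ⟨contDiff_const, fun j _ x => ?_⟩
  rcases j with _ | j
  · simp
  · rw [iteratedFDeriv_const_of_ne (Nat.succ_ne_zero j), Pi.zero_apply, norm_zero]
    exact mul_nonneg (norm_nonneg c) (zpow_pos (japaneseBracket_pos x) _).le

lemma pow {f : E → ℝ} (hf : SymbolEstimate N k A f) (n : ℕ) :
    SymbolEstimate N (n * k) ((2 ^ N * A) ^ n) (fun x => f x ^ n) := by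
  induction n with
  | zero => simpa using const (E := E) N (1 : ℝ)
  | succ n ih =>
    convert hf.mul ih using 1
    · push_cast; ring
    · ring
    · simp only [pow_succ']

lemma sum {ι : Type*} (s : Finset ι) {f : ι → E → F} {A : ι → ℝ}
    (hf : ∀ i ∈ s, SymbolEstimate N k (A i) (f i)) :
    SymbolEstimate N k (∑ i ∈ s, A i) (fun x => ∑ i ∈ s, f i x) := by
  refine ⟨ContDiff.sum fun i hi => (hf i hi).contDiff, fun j hj x => ?_⟩
  rw [iteratedFDeriv_sum fun i hi => (hf i hi).contDiff.of_le (mod_cast le_top),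
    Finset.sum_apply, sum_mul]
  exact (norm_sum_le _ _).trans (sum_le_sum fun i hi => (hf i hi).norm_iteratedFDeriv_le j hj x)

lemma norm_iteratedFDeriv_comp_le {f : E → ℝ} {g : ℝ → F} {t : Set ℝ}
    (hf : SymbolEstimate N k A f) (ht : UniqueDiffOn ℝ t)
    (hg : ContDiffOn ℝ (⊤ : ℕ∞) g t) (x₀ : E)
    (hft : ∀ x, japaneseBracket x₀ ^ (-k) * f x ∈ t) {n : ℕ} (hn : n ≤ N) {C : ℝ}
    (hC : ∀ i ≤ n,
      ‖iteratedFDerivWithin ℝ i g t (japaneseBracket x₀ ^ (-k) * f x₀)‖ ≤ C) :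
    ‖iteratedFDeriv ℝ n (fun x => g (japaneseBracket x₀ ^ (-k) * f x)) x₀‖ ≤
      n ! * C * max A 1 ^ n * japaneseBracket x₀ ^ (-n : ℤ) := by
  set w := japaneseBracket x₀
  have hw := japaneseBracket_pos x₀
  have hD : ∀ i, 1 ≤ i → i ≤ n →
      ‖iteratedFDeriv ℝ i (fun x => w ^ (-k) * f x) x₀‖ ≤ (max A 1 / w) ^ i := by
    intro i hi1 hin
    have hs : 0 < w ^ (-k) := zpow_pos hw _
    rw [show (fun x => w ^ (-k) * f x) = fun x => w ^ (-k) • f x from rfl,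
      iteratedFDeriv_const_smul_apply' (hf.contDiff.contDiffAt.of_le (mod_cast le_top)),
      norm_smul, Real.norm_of_nonneg hs.le, div_pow, div_eq_mul_inv, ← zpow_natCast w,
      ← zpow_neg]
    calc w ^ (-k) * ‖iteratedFDeriv ℝ i f x₀‖ ≤ w ^ (-k) * (A * w ^ (k - i)) :=
          mul_le_mul_of_nonneg_left (hf.norm_iteratedFDeriv_le i (hin.trans hn) x₀) hs.le
      _ = A * w ^ (-(i : ℤ)) := by
          rw [mul_left_comm, ← zpow_add₀ hw.ne', show -k + (k - i) = -(i : ℤ) by ring]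
      _ ≤ max A 1 ^ i * w ^ (-(i : ℤ)) := by
          refine mul_le_mul_of_nonneg_right ?_ (zpow_pos hw _).le
          exact (le_max_left A 1).trans (le_self_pow₀ (le_max_right A 1) (by omega))
  have h := norm_iteratedFDeriv_comp_le' (Set.range_subset_iff.2 hft) ht hg
    (contDiff_const.mul hf.contDiff) (mod_cast le_top) x₀ hC hD
  rwa [div_pow, div_eq_mul_inv, ← mul_assoc, ← zpow_natCast w, ← zpow_neg] at h

lemma inv {q : E → ℝ} (hq : SymbolEstimate N k A q) {c : ℝ} (hc : 0 < c)
    (hlow : ∀ x, japaneseBracket x ^ k ≤ c * q x) :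
    SymbolEstimate N (-k) (N ! * (N ! * max c 1 ^ (N + 1)) * max A 1 ^ N)
      (fun x => (q x)⁻¹) := by
  have hqpos (x : E) : 0 < q x :=
    pos_of_mul_pos_right ((zpow_pos (japaneseBracket_pos x) k).trans_le (hlow x)) hc.le
  refine ⟨hq.contDiff.inv fun x => (hqpos x).ne', fun j hj x₀ => ?_⟩
  set w := japaneseBracket x₀
  have hw := japaneseBracket_pos x₀
  have hs : 0 < w ^ (-k) := zpow_pos hw _
  have hcq : 1 ≤ c * (w ^ (-k) * q x₀) := by
    rw [mul_left_comm, zpow_neg, ← div_eq_inv_mul, le_div_iff₀ (zpow_pos hw k), one_mul]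
    exact hlow x₀
  have hC : ∀ i ≤ j,
      ‖iteratedFDerivWithin ℝ i (·⁻¹) (Set.Ioi 0) (w ^ (-k) * q x₀)‖ ≤ N ! * max c 1 ^ (N + 1) := by
    intro i hi
    refine (norm_iteratedFDerivWithin_inv_le i hc hcq).trans ?_
    gcongr ?_ * ?_
    · exact_mod_cast Nat.factorial_le (hi.trans hj)
    · calc c ^ (i + 1) ≤ max c 1 ^ (i + 1) := by gcongr; exact le_max_left _ _
        _ ≤ max c 1 ^ (N + 1) := pow_le_pow_right₀ (le_max_right _ _) (by omega)
  have hcomp := hq.norm_iteratedFDeriv_comp_le (uniqueDiffOn_Ioi 0)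
    ((contDiffOn_inv ℝ).mono fun _ hy => (Set.mem_Ioi.1 hy).ne') x₀
    (fun x => mul_pos hs (hqpos x)) hj hC
  have hrescale : (fun x => (q x)⁻¹) = fun x => w ^ (-k) • (w ^ (-k) * q x)⁻¹ := by
    ext x
    rw [smul_eq_mul, mul_inv, ← mul_assoc, mul_inv_cancel₀ hs.ne', one_mul]
  rw [hrescale, iteratedFDeriv_const_smul_apply' ?_, norm_smul, Real.norm_of_nonneg hs.le]
  · calc w ^ (-k) * ‖iteratedFDeriv ℝ j (fun x => (w ^ (-k) * q x)⁻¹) x₀‖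
        ≤ w ^ (-k) * (j ! * (N ! * max c 1 ^ (N + 1)) * max A 1 ^ j * w ^ (-j : ℤ)) :=
          mul_le_mul_of_nonneg_left hcomp hs.le
      _ = j ! * (N ! * max c 1 ^ (N + 1)) * max A 1 ^ j * w ^ (-k - j) := by
          rw [sub_eq_add_neg, zpow_add₀ hw.ne']
          ring
      _ ≤ N ! * (N ! * max c 1 ^ (N + 1)) * max A 1 ^ N * w ^ (-k - j) := by
          gcongr
          · exact le_max_right _ _
  · exact ((contDiff_const.mul hq.contDiff).inv fun x => (mul_pos hs (hqpos x)).ne')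
      |>.contDiffAt.of_le (mod_cast le_top)

lemma exp_neg_mul_sub_one {p : E → ℝ} (hp : SymbolEstimate N k A p) {c : ℝ} (hc : 0 < c)
    (hlow : ∀ x, japaneseBracket x ^ k ≤ c * p x) {ε : ℝ} (hε : 0 ≤ ε) :
    SymbolEstimate N k (ε * (N ! * max A (N ! * max c 1 ^ N) * max A 1 ^ N))
      (fun x => exp (-ε * p x) - 1) := by
  refine ⟨(contDiff_exp.comp (contDiff_const.mul hp.contDiff)).sub contDiff_const,
    fun j hj x₀ => ?_⟩
  set w := japaneseBracket x₀
  have hw := japaneseBracket_pos x₀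
  set u := ε * w ^ k
  have hu : 0 ≤ u := mul_nonneg hε (zpow_pos hw k).le
  set K := max A (N ! * max c 1 ^ N)
  have hcp : 1 ≤ c * (w ^ (-k) * p x₀) := by
    rw [mul_left_comm, zpow_neg, ← div_eq_inv_mul, le_div_iff₀ (zpow_pos hw k), one_mul]
    exact hlow x₀
  have hp0 : 0 ≤ w ^ (-k) * p x₀ := nonneg_of_mul_nonneg_right (zero_le_one.trans hcp) hc
  have hpA : w ^ (-k) * p x₀ ≤ A := by
    rw [zpow_neg, inv_mul_eq_div, div_le_iff₀ (zpow_pos hw k)]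
    exact (le_norm_self _).trans (hp.norm_le x₀)
  have hC : ∀ i ≤ j, ‖iteratedFDerivWithin ℝ i (fun t => exp (-u * t) - 1) Set.univ
      (w ^ (-k) * p x₀)‖ ≤ u * K := by
    intro i hi
    rw [iteratedFDerivWithin_univ]
    rcases i with _ | i
    · rw [norm_iteratedFDeriv_zero]
      refine (norm_exp_neg_mul_sub_one_le hu hp0).trans ?_
      exact mul_le_mul_of_nonneg_left (hpA.trans (le_max_left _ _)) hu
    · refine (norm_iteratedFDeriv_exp_neg_mul_sub_one_le hu hc hcp i).trans ?_
      refine mul_le_mul_of_nonneg_left ((le_max_right A _).trans' ?_) hu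
      gcongr ?_ * ?_
      · exact_mod_cast Nat.factorial_le (by omega)
      · calc c ^ i ≤ max c 1 ^ i := by gcongr; exact le_max_left _ _
          _ ≤ max c 1 ^ N := pow_le_pow_right₀ (le_max_right _ _) (by omega)
  have hcomp := hp.norm_iteratedFDeriv_comp_le uniqueDiffOn_univ
    (by fun_prop : ContDiff ℝ (⊤ : ℕ∞) fun t => exp (-u * t) - 1).contDiffOn x₀
    (fun _ => Set.mem_univ _) hj hC
  have hrescale : (fun x => exp (-ε * p x) - 1) =
      fun x => exp (-u * (w ^ (-k) * p x)) - 1 := by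
    ext x
    rw [neg_mul, neg_mul, ← mul_assoc, mul_assoc ε, zpow_neg,
      mul_inv_cancel₀ (zpow_pos hw k).ne', mul_one]
  rw [hrescale]
  calc _ ≤ j ! * (u * K) * max A 1 ^ j * w ^ (-j : ℤ) := hcomp
    _ = ε * (j ! * K * max A 1 ^ j) * w ^ (k - j) := by
        rw [sub_eq_add_neg, zpow_add₀ hw.ne']
        ring
    _ ≤ ε * (N ! * K * max A 1 ^ N) * w ^ (k - j) := by
        gcongr
        · exact le_max_right _ _

end SymbolEstimate

lemma symbolEstimate_sub_const (N : ℕ) {c : E} (hc : ‖c‖ ≤ 1) :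
    SymbolEstimate N 1 2 (fun y => y - c) := by
  refine ⟨contDiff_id.sub contDiff_const, fun j _ x => ?_⟩
  have hfderiv : fderiv ℝ (fun y : E => y - c) = fun _ => ContinuousLinearMap.id ℝ E := by
    ext1 y
    rw [fderiv_sub_const, fderiv_fun_id]
  match j with
  | 0 =>
    rw [norm_iteratedFDeriv_zero]
    calc ‖x - c‖ ≤ ‖x‖ + ‖c‖ := norm_sub_le x c
      _ ≤ 2 * japaneseBracket x ^ (1 - (0 : ℕ) : ℤ) := by
        simp only [Nat.cast_zero, sub_zero, zpow_one]
        linarith [norm_le_japaneseBracket x, one_le_japaneseBracket x]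
  | 1 =>
    rw [norm_iteratedFDeriv_one, hfderiv]
    refine ContinuousLinearMap.norm_id_le.trans ?_
    norm_num
  | j + 2 =>
    rw [← norm_iteratedFDeriv_fderiv, hfderiv, iteratedFDeriv_const_of_ne (Nat.succ_ne_zero j),
      Pi.zero_apply, norm_zero]
    exact mul_nonneg zero_le_two (zpow_pos (japaneseBracket_pos x) _).le

section InnerProductSpace

variable {E : Type*} [NormedAddCommGroup E] [InnerProductSpace ℝ E]

lemma symbolEstimate_norm_sub_sq (N : ℕ) {c : E} (hc : ‖c‖ ≤ 1) :
    SymbolEstimate N 2 (2 ^ N * 2 * 2) (fun y => ‖y - c‖ ^ 2) := by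
  have h := (symbolEstimate_sub_const N hc).bilinear (innerSL ℝ) (norm_innerSL_le ℝ)
    (symbolEstimate_sub_const N hc)
  convert h using 1
  · norm_num
  · ext y
    rw [innerSL_apply_apply, real_inner_self_eq_norm_sq]

lemma exists_symbolEstimate_qSymbol (N m : ℕ) :
    ∃ A, ∀ ω : E, ‖ω‖ ≤ 1 →
      SymbolEstimate N (2 * (m - 1) : ℕ) A (qSymbol m ω) := by
  set B : ℝ := 2 ^ N * (2 ^ N * 2 * 2)
  refine ⟨m * (2 ^ N * B ^ (m - 1)), fun ω hω => ?_⟩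
  have hterm : ∀ ℓ ∈ range m, SymbolEstimate N (2 * (m - 1) : ℕ) (2 ^ N * B ^ (m - 1))
      (fun ξ => ‖ω - ξ‖ ^ (2 * ℓ) * ‖ξ‖ ^ (2 * (m - 1 - ℓ))) := by
    intro ℓ hℓ
    have hℓm : ℓ ≤ m - 1 := by rw [mem_range] at hℓ; omega
    have h := ((symbolEstimate_norm_sub_sq N hω).pow ℓ).mul
      ((symbolEstimate_norm_sub_sq N (norm_zero.trans_le zero_le_one)).pow (m - 1 - ℓ))
    convert h using 1
    · push_cast [hℓm, Nat.cast_sub]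
      ring
    · rw [mul_assoc, ← pow_add, Nat.add_sub_cancel' hℓm]
    · ext ξ
      rw [norm_sub_rev, sub_zero, pow_mul, pow_mul]
  have h := SymbolEstimate.sum (range m) hterm
  rwa [sum_const, card_range, nsmul_eq_mul] at h

end InnerProductSpace

end

theorem stmt_11_general (n m : ℕ) (hm : 1 ≤ m) (N : ℕ) :
    ∃ C > 0, ∀ ε : ℝ, 0 < ε → ∀ ω : EuclideanSpace ℝ (Fin n), ‖ω‖ = 1 →
      ∀ ξ : EuclideanSpace ℝ (Fin n),
        ‖iteratedFDeriv ℝ N (fun ξ : EuclideanSpace ℝ (Fin n) =>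
            (∑ ℓ ∈ Finset.range m, ‖ω - ξ‖ ^ (2 * ℓ) * ‖ξ‖ ^ (2 * (m - 1 - ℓ)))⁻¹ *
              (Real.exp (-ε * (∑ ℓ ∈ Finset.range m,
                ‖ω - ξ‖ ^ (2 * ℓ) * ‖ξ‖ ^ (2 * (m - 1 - ℓ)))⁻¹) - 1)) ξ‖ ≤
          C * ε * Real.sqrt (1 + ‖ξ‖ ^ 2) ^ (-(4 * (m : ℝ) - 4 + N)) := by
  obtain ⟨Aq, hq⟩ := exists_symbolEstimate_qSymbol (E := EuclideanSpace ℝ (Fin n)) N m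
  set Ap : ℝ := N ! * (N ! * max (5 ^ (m - 1)) 1 ^ (N + 1)) * max Aq 1 ^ N
  set K : ℝ := N ! * max Ap (N ! * max (max Aq 1) 1 ^ N) * max Ap 1 ^ N
  refine ⟨2 ^ N * Ap * K, by positivity, fun ε hε ω hω ξ => ?_⟩
  have hqω := hq ω hω.le
  have hlow (x : EuclideanSpace ℝ (Fin n)) :
      japaneseBracket x ^ ((2 * (m - 1) : ℕ) : ℤ) ≤ 5 ^ (m - 1) * qSymbol m ω x := by
    rw [zpow_natCast]
    exact japaneseBracket_pow_le_five_pow_mul_qSymbol hm hω.ge x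
  have hqpos (x : EuclideanSpace ℝ (Fin n)) : 0 < qSymbol m ω x :=
    pos_of_mul_pos_right ((zpow_pos (japaneseBracket_pos x) _).trans_le (hlow x))
      (by positivity)
  have hp := hqω.inv (by positivity) hlow
  have hG := hp.exp_neg_mul_sub_one (lt_max_of_lt_right one_pos)
    (fun x => (hqω.mono (le_max_left Aq 1)).zpow_neg_le_mul_inv (hqpos x)) hε.le
  refine ((hp.mul hG).norm_iteratedFDeriv_le N le_rfl ξ).trans_eq ?_
  have hexponent : ((-(2 * (m - 1) : ℕ) + -(2 * (m - 1) : ℕ) - N : ℤ) : ℝ) =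
      -(4 * (m : ℝ) - 4 + N) := by
    push_cast [hm]
    ring
  rw [← hexponent, Real.rpow_intCast]
  simp only [japaneseBracket, Ap, K]
  ring

theorem stmt_11 (n m : ℕ) (hn : 1 ≤ n) (hm : 1 ≤ m) (N : ℕ) :
    ∃ C > 0, ∀ ε : ℝ, 0 < ε → ∀ ω : EuclideanSpace ℝ (Fin n), ‖ω‖ = 1 →
      ∀ ξ : EuclideanSpace ℝ (Fin n),
        ‖iteratedFDeriv ℝ N (fun ξ : EuclideanSpace ℝ (Fin n) =>
            (∑ ℓ ∈ Finset.range m, ‖ω - ξ‖ ^ (2 * ℓ) * ‖ξ‖ ^ (2 * (m - 1 - ℓ)))⁻¹ *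
              (Real.exp (-ε * (∑ ℓ ∈ Finset.range m,
                ‖ω - ξ‖ ^ (2 * ℓ) * ‖ξ‖ ^ (2 * (m - 1 - ℓ)))⁻¹) - 1)) ξ‖ ≤
          C * ε * Real.sqrt (1 + ‖ξ‖ ^ 2) ^ (-(4 * (m : ℝ) - 4 + N)) :=
  stmt_11_general n m hm N
end

section
/- Let n and m be positive integers with n > 2m, let k ≥ 1 be an integer, and let A > 0. Suppose F : (0,∞) → ℂ is k-times continuously differentiable and satisfies |F^{(N)}(r)| ≤ A ⟨r⟩^{(n+1)/2 − 2m − N} for all r > 0 and 0 ≤ N ≤ k. Then there exists C > 0 (depending only on n, m, k, A) such that for all r > 0 and all λ with 0 < λ < 1, λ^{k−1} |d^k/dλ^k ( e^{iλr} r^{2m−n} F(λr) )| ≤ C ( r^{2m+1−n} + r^{k−(n−1)/2} ). -/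
/-! By Leibniz's rule the `k`-th derivative is a sum over `j ≤ k` of
`C(k,j) (ir)^j e^{iλr} r^{2m-n} · r^{k-j} F^{(k-j)}(λr)`. With `s = λr`, the `j`-th term of
`λ^{k-1} |…|` is at most `A C(k,j) r^{2m+1-n} s^{k-1} ⟨s⟩^e` where `e = (n+1)/2 - 2m - (k-j)`.
As `max 1 s ≤ ⟨s⟩ ≤ √2 max 1 s`, this is `≲ r^{2m+1-n} (max 1 s)^{k-1+e}`, and because `s ≤ r`
and `k-1+e ≤ b := k-1+(n+1)/2-2m`, we get `(max 1 s)^{k-1+e} ≤ 1 + r^b`. Finally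
`r^{2m+1-n} (1 + r^b) = r^{2m+1-n} + r^{k-(n-1)/2}`. -/

open Real Set
open scoped ContDiff

theorem rpow_le_rpow_abs_mul_rpow {t y c : ℝ} (ht : 0 < t) (hty : t ≤ y) (hyc : y ≤ c * t)
    (e : ℝ) : y ^ e ≤ c ^ |e| * t ^ e := by
  have hc : 1 ≤ c := le_of_mul_le_mul_right (by linarith) ht
  rcases le_total 0 e with he | he
  · rw [abs_of_nonneg he, ← mul_rpow (by positivity) ht.le]
    exact rpow_le_rpow (ht.le.trans hty) hyc he
  · calc y ^ e ≤ t ^ e := rpow_le_rpow_of_nonpos ht hty he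
      _ ≤ c ^ |e| * t ^ e :=
        le_mul_of_one_le_left (by positivity) (one_le_rpow hc (abs_nonneg e))

theorem max_one_le_sqrt_one_add_sq (s : ℝ) : max 1 s ≤ √(1 + s ^ 2) :=
  max_le (le_sqrt_of_sq_le (by nlinarith)) (le_sqrt_of_sq_le (by nlinarith))

theorem sqrt_one_add_sq_le_sqrt_two_mul_max {s : ℝ} (hs : 0 ≤ s) :
    √(1 + s ^ 2) ≤ √2 * max 1 s := by
  rw [← sqrt_sq (by positivity : 0 ≤ max 1 s), ← sqrt_mul zero_le_two]
  refine sqrt_le_sqrt ?_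
  have h1 : 1 ≤ max 1 s := le_max_left 1 s
  have h2 : s ≤ max 1 s := le_max_right 1 s
  nlinarith

theorem pow_mul_sqrt_one_add_sq_rpow_le_s13 {s : ℝ} (hs : 0 ≤ s) (a : ℕ) (e : ℝ) :
    s ^ a * √(1 + s ^ 2) ^ e ≤ √2 ^ |e| * max 1 s ^ ((a : ℝ) + e) := by
  have hmax : 0 < max 1 s := lt_max_of_lt_left one_pos
  rw [rpow_add hmax, rpow_natCast]
  calc s ^ a * √(1 + s ^ 2) ^ e ≤ max 1 s ^ a * (√2 ^ |e| * max 1 s ^ e) := by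
        gcongr
        · exact le_max_right 1 s
        · exact rpow_le_rpow_abs_mul_rpow hmax (max_one_le_sqrt_one_add_sq s)
            (sqrt_one_add_sq_le_sqrt_two_mul_max hs) e
    _ = √2 ^ |e| * (max 1 s ^ a * max 1 s ^ e) := by ring

theorem max_one_mul_rpow_le_one_add_rpow {lam r q b : ℝ} (hlam : 0 < lam) (hlam1 : lam ≤ 1)
    (hr : 0 < r) (hqb : q ≤ b) : max 1 (lam * r) ^ q ≤ 1 + r ^ b := by
  rcases le_total (lam * r) 1 with hs | hs
  · rw [max_eq_left hs, one_rpow]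
    linarith [rpow_nonneg hr.le b]
  rw [max_eq_right hs]
  have hsr : lam * r ≤ r := mul_le_of_le_one_left hr.le hlam1
  rcases le_total q 0 with hq | hq
  · linarith [rpow_le_one_of_one_le_of_nonpos hs hq, rpow_nonneg hr.le b]
  · calc (lam * r) ^ q ≤ r ^ q := rpow_le_rpow (by positivity) hsr hq
      _ ≤ r ^ b := rpow_le_rpow_of_exponent_le (hs.trans hsr) hqb
      _ ≤ 1 + r ^ b := le_add_of_nonneg_left zero_le_one

theorem pow_mul_sum_choose_mul_le {k : ℕ} {A lam r b : ℝ} {x e : ℕ → ℝ} (hA : 0 ≤ A)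
    (hlam : 0 < lam) (hlam1 : lam ≤ 1) (hr : 0 < r)
    (hx : ∀ N ≤ k, x N ≤ A * √(1 + (lam * r) ^ 2) ^ e N)
    (heb : ∀ N ≤ k, ((k - 1 : ℕ) : ℝ) + e N ≤ b) :
    (lam * r) ^ (k - 1) * ∑ i ∈ Finset.range (k + 1), k.choose i * x (k - i) ≤
      A * (∑ i ∈ Finset.range (k + 1), k.choose i * √2 ^ |e (k - i)|) * (1 + r ^ b) := by
  rw [Finset.mul_sum, Finset.mul_sum, Finset.sum_mul]
  refine Finset.sum_le_sum fun i _ => ?_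
  have hN : k - i ≤ k := Nat.sub_le k i
  calc (lam * r) ^ (k - 1) * (k.choose i * x (k - i))
      = k.choose i * ((lam * r) ^ (k - 1) * x (k - i)) := by ring
    _ ≤ k.choose i * ((lam * r) ^ (k - 1) * (A * √(1 + (lam * r) ^ 2) ^ e (k - i))) := by
        gcongr
        exact hx _ hN
    _ = k.choose i * (A * ((lam * r) ^ (k - 1) * √(1 + (lam * r) ^ 2) ^ e (k - i))) := by ring
    _ ≤ k.choose i *
          (A * (√2 ^ |e (k - i)| * max 1 (lam * r) ^ (((k - 1 : ℕ) : ℝ) + e (k - i)))) := by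
        gcongr _ * (_ * ?_)
        exact pow_mul_sqrt_one_add_sq_rpow_le_s13 (by positivity) _ _
    _ ≤ k.choose i * (A * (√2 ^ |e (k - i)| * (1 + r ^ b))) := by
        gcongr
        exact max_one_mul_rpow_le_one_add_rpow hlam hlam1 hr (heb _ hN)
    _ = A * (k.choose i * √2 ^ |e (k - i)|) * (1 + r ^ b) := by ring

open Complex in
theorem iteratedDeriv_cexp_ofReal_mul (a : ℂ) (i : ℕ) :
    iteratedDeriv i (fun t : ℝ => cexp (a * t)) = fun t : ℝ => a ^ i * cexp (a * t) := by
  induction i with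
  | zero => simp
  | succ i ih =>
    ext t
    rw [iteratedDeriv_succ, ih]
    have h := (((hasDerivAt_id t).ofReal_comp.const_mul a).cexp).const_mul (a ^ i)
    simpa [pow_succ, mul_comm, mul_left_comm, mul_assoc] using h.deriv

open Complex in
theorem norm_iteratedDerivWithin_cexp_I_mul {s : Set ℝ} (hs : IsOpen s) {x : ℝ} (hx : x ∈ s)
    (r : ℝ) (i : ℕ) :
    ‖iteratedDerivWithin i (fun μ : ℝ => cexp (I * μ * r)) s x‖ = |r| ^ i := by
  have hphase : (fun μ : ℝ => cexp (I * μ * r)) = fun μ : ℝ => cexp ((I * r) * μ) := by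
    ext μ; ring_nf
  rw [iteratedDerivWithin_of_isOpen hs hx, hphase, iteratedDeriv_cexp_ofReal_mul]
  simp [Complex.norm_exp]

open Complex in
theorem norm_iteratedDerivWithin_phase_mul_dilate_le {F : ℝ → ℂ} {k : ℕ}
    (hF : ContDiffOn ℝ k F (Ioi 0)) (c : ℝ) {r lam : ℝ} (hr : 0 < r) (hlam : 0 < lam) :
    ‖iteratedDerivWithin k (fun μ : ℝ => cexp (I * μ * r) * (c : ℂ) * F (μ * r)) (Ioi 0) lam‖ ≤
      |c| * r ^ k * ∑ i ∈ Finset.range (k + 1),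
        k.choose i * ‖iteratedDerivWithin (k - i) F (Ioi 0) (lam * r)‖ := by
  have hlam' : lam ∈ Ioi (0 : ℝ) := hlam
  have hphase : ContDiff ℝ ω fun μ : ℝ => cexp (I * μ * r) :=
    ((contDiff_const.mul ofRealCLM.contDiff).mul contDiff_const).cexp
  have hmaps : MapsTo (fun μ : ℝ => r * μ) (Ioi 0) (Ioi 0) := fun μ hμ => mul_pos hr hμ
  have hdilate : ContDiffOn ℝ k (fun μ : ℝ => F (r * μ)) (Ioi 0) :=
    hF.comp (contDiff_const.mul contDiff_id).contDiffOn hmaps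
  simp_rw [mul_comm _ r]
  rw [show (fun μ : ℝ => cexp (I * μ * r) * (c : ℂ) * F (r * μ)) =
      (fun μ : ℝ => cexp (I * μ * r) * (c : ℂ)) * fun μ => F (r * μ) from rfl,
    iteratedDerivWithin_mul hlam' (uniqueDiffOn_Ioi 0)
      ((hphase.mul contDiff_const).of_le le_top).contDiffWithinAt (hdilate _ hlam'),
    Finset.mul_sum]
  refine (norm_sum_le _ _).trans (Finset.sum_le_sum fun i hi => le_of_eq ?_)
  have hik : i ≤ k := Nat.lt_succ_iff.mp (Finset.mem_range.mp hi)
  rw [iteratedDerivWithin_mul_const hlam' (uniqueDiffOn_Ioi 0)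
      (hphase.of_le le_top).contDiffWithinAt,
    iteratedDerivWithin_comp_const_smul hlam' (uniqueDiffOn_Ioi 0)
      (hF.of_le (by exact_mod_cast Nat.sub_le k i)) r hmaps,
    norm_mul, norm_mul, norm_mul, norm_smul, norm_iteratedDerivWithin_cexp_I_mul isOpen_Ioi hlam',
    norm_pow, Real.norm_eq_abs, abs_of_pos hr, Complex.norm_real, Real.norm_eq_abs]
  have hpow : r ^ k = r ^ i * r ^ (k - i) := by rw [← pow_add, Nat.add_sub_cancel' hik]
  rw [Complex.norm_natCast, hpow]
  ring

theorem stmt_13_general (n m : ℕ)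
    (k : ℕ) (hk : 1 ≤ k) (A : ℝ) (hA : 0 < A)
    (F : ℝ → ℂ) (hF : ContDiffOn ℝ k F (Set.Ioi 0))
    (hFbound : ∀ r : ℝ, 0 < r → ∀ N : ℕ, N ≤ k →
      ‖iteratedDerivWithin N F (Set.Ioi 0) r‖ ≤
        A * Real.sqrt (1 + r ^ 2) ^ (((n : ℝ) + 1) / 2 - 2 * m - N)) :
    ∃ C > 0, ∀ r : ℝ, 0 < r → ∀ lam : ℝ, 0 < lam → lam < 1 →
      lam ^ (k - 1) *
        ‖iteratedDerivWithin k
            (fun μ : ℝ => Complex.exp (Complex.I * μ * r) *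
              (r ^ (2 * (m : ℝ) - n) : ℝ) * F (μ * r)) (Set.Ioi 0) lam‖ ≤
        C * (r ^ (2 * (m : ℝ) + 1 - n) + r ^ ((k : ℝ) - ((n : ℝ) - 1) / 2)) := by
  set e : ℕ → ℝ := fun N => ((n : ℝ) + 1) / 2 - 2 * m - N
  set b : ℝ := (k : ℝ) - 1 + ((n : ℝ) + 1) / 2 - 2 * m
  have hC : 0 < A * ∑ i ∈ Finset.range (k + 1), k.choose i * √2 ^ |e (k - i)| :=
    mul_pos hA <| Finset.sum_pos (fun i hi => mul_pos (Nat.cast_pos.2 (Nat.choose_pos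
      (Nat.lt_succ_iff.1 (Finset.mem_range.1 hi)))) (by positivity)) Finset.nonempty_range_add_one
  refine ⟨_, hC, fun r hr lam hlam hlam1 => ?_⟩
  have hsum := pow_mul_sum_choose_mul_le (b := b) hA.le hlam hlam1.le hr
    (fun N hN => hFbound _ (mul_pos hlam hr) N hN)
    (fun N _ => by simp only [b, Nat.cast_sub hk]; linarith [Nat.cast_nonneg (α := ℝ) N])
  have hscale : lam ^ (k - 1) * (|r ^ (2 * (m : ℝ) - n)| * r ^ k) =
      (lam * r) ^ (k - 1) * r ^ (2 * (m : ℝ) + 1 - n) := by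
    rw [abs_of_pos (rpow_pos_of_pos hr _), show 2 * (m : ℝ) + 1 - n = 2 * m - n + 1 by ring,
      rpow_add_one hr.ne', ← Nat.sub_add_cancel hk, pow_succ, Nat.add_sub_cancel, mul_pow]
    ring
  refine (mul_le_mul_of_nonneg_left (norm_iteratedDerivWithin_phase_mul_dilate_le hF _ hr hlam)
    (by positivity)).trans ?_
  calc _ = r ^ (2 * (m : ℝ) + 1 - n) * ((lam * r) ^ (k - 1) * ∑ i ∈ Finset.range (k + 1),
          k.choose i * ‖iteratedDerivWithin (k - i) F (Ioi 0) (lam * r)‖) := by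
        rw [← mul_assoc, hscale]; ring
    _ ≤ r ^ (2 * (m : ℝ) + 1 - n) * ((A * ∑ i ∈ Finset.range (k + 1),
          k.choose i * √2 ^ |e (k - i)|) * (1 + r ^ b)) := by gcongr
    _ = _ := by
        rw [show (k : ℝ) - ((n : ℝ) - 1) / 2 = 2 * m + 1 - n + b by ring, rpow_add hr]; ring

theorem stmt_13 (n m : ℕ) (hn : 1 ≤ n) (hm : 1 ≤ m) (hnm : 2 * m < n)
    (k : ℕ) (hk : 1 ≤ k) (A : ℝ) (hA : 0 < A)
    (F : ℝ → ℂ) (hF : ContDiffOn ℝ k F (Set.Ioi 0))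
    (hFbound : ∀ r : ℝ, 0 < r → ∀ N : ℕ, N ≤ k →
      ‖iteratedDerivWithin N F (Set.Ioi 0) r‖ ≤
        A * Real.sqrt (1 + r ^ 2) ^ (((n : ℝ) + 1) / 2 - 2 * m - N)) :
    ∃ C > 0, ∀ r : ℝ, 0 < r → ∀ lam : ℝ, 0 < lam → lam < 1 →
      lam ^ (k - 1) *
        ‖iteratedDerivWithin k
            (fun μ : ℝ => Complex.exp (Complex.I * μ * r) *
              (r ^ (2 * (m : ℝ) - n) : ℝ) * F (μ * r)) (Set.Ioi 0) lam‖ ≤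
        C * (r ^ (2 * (m : ℝ) + 1 - n) + r ^ ((k : ℝ) - ((n : ℝ) - 1) / 2)) :=
  stmt_13_general n m k hk A hA F hF hFbound
end

section
/- Let n and m be positive integers with n > 2m and m ≥ 2, let k ≥ 1 be an integer, and let A > 0. Suppose F : (0,∞) → ℂ is k-times continuously differentiable and satisfies: (i) |F^{(N)}(r)| ≤ A ⟨r⟩^{(n+1)/2 − 2m − N} for all r > 0 and 0 ≤ N ≤ min(k, 2m−1); (ii) |F^{(N)}(r)| ≤ A ⟨r⟩^{(n+1)/2 − 2m − N} for all r ≥ 1 and 0 ≤ N ≤ k; (iii) if k ≥ 2m, then |F^{(2m)}(r)| ≤ A(1 + |log r|) for 0 < r < 1; and (iv) |F^{(N)}(r)| ≤ A r^{2m−N} for 0 < r < 1 and 2m < N ≤ k. Then there exists C > 0 (depending only on n, m, k, A) such that for all r > 0 and all λ with 0 < λ < 1, λ^{k−1} |d^k/dλ^k ( e^{iλr} r^{2m−n} F(λr) )| ≤ C ( r^{2m+1−n} + r^{k−(n−1)/2} ). -/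
/-
By Leibniz's rule the k-th λ-derivative is a sum of terms r^i · r^(k-i) F^(k-i)(λr): the phase
contributes r^i and the dilation F(λr) contributes r^(k-i). With s = λr ≤ r the weight λ^(k-1) r^k
becomes r · s^(k-1), so it suffices to bound s^(k-1) |F^(j)(s)| for j ≤ k by a constant times
1 + r^(k-1+a), where a = (n+1)/2 - 2m. For s ≥ 1 the symbol bounds give s^(k-1+a-j) ≤ s^(k-1+a).
For s < 1 the factor s^(k-1) absorbs the logarithm at j = 2m (as s |log s| ≤ 1) and the
singularity s^(2m-j) for 2m < j ≤ k.
-/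

open Real Set

lemma rpow_le_sqrt_two_rpow_abs {y : ℝ} (p : ℝ) (h1 : 1 ≤ y) (h2 : y ≤ √2) :
    y ^ p ≤ √2 ^ |p| :=
  (rpow_le_rpow_of_exponent_le h1 (le_abs_self p)).trans
    (rpow_le_rpow (by linarith) h2 (abs_nonneg p))

lemma sqrt_one_add_sq_rpow_le_of_le_one {s : ℝ} (p : ℝ) (hs0 : 0 ≤ s) (hs1 : s ≤ 1) :
    √(1 + s ^ 2) ^ p ≤ √2 ^ |p| := by
  refine rpow_le_sqrt_two_rpow_abs p ?_ ?_
  · exact one_le_sqrt.2 (by nlinarith)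
  · exact sqrt_le_sqrt (by nlinarith)

lemma sqrt_one_add_sq_rpow_le_of_one_le {s : ℝ} (p : ℝ) (hs : 1 ≤ s) :
    √(1 + s ^ 2) ^ p ≤ √2 ^ |p| * s ^ p := by
  have hs0 : 0 < s := by linarith
  have hfactor : √(1 + s ^ 2) = s * √(1 + s⁻¹ ^ 2) := by
    rw [← sqrt_sq hs0.le, ← sqrt_mul (sq_nonneg s), sqrt_sq hs0.le]
    congr 1
    field_simp
    ring
  rw [hfactor, mul_rpow hs0.le (sqrt_nonneg _), mul_comm]
  gcongr
  exact sqrt_one_add_sq_rpow_le_of_le_one p (inv_nonneg.2 hs0.le) (inv_le_one_of_one_le₀ hs)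

lemma sqrt_two_rpow_abs_sub_natCast_le (a : ℝ) {j k : ℕ} (hj : j ≤ k) :
    √2 ^ |a - j| ≤ √2 ^ (|a| + k) := by
  refine rpow_le_rpow_of_exponent_le (one_le_sqrt.2 one_le_two) ?_
  have : (j : ℝ) ≤ k := by exact_mod_cast hj
  linarith [abs_sub a (j : ℝ), abs_of_nonneg (Nat.cast_nonneg (α := ℝ) j)]

lemma mul_one_add_abs_log_le_two {s : ℝ} (hs0 : 0 < s) (hs1 : s ≤ 1) :
    s * (1 + |log s|) ≤ 2 := by
  have := abs_log_mul_self_lt s hs0 hs1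
  rw [abs_mul, abs_of_pos hs0] at this
  nlinarith

lemma rpow_le_one_add_rpow {s r : ℝ} (e : ℝ) (hs : 1 ≤ s) (hsr : s ≤ r) :
    s ^ e ≤ 1 + r ^ e := by
  rcases le_total 0 e with he | he
  · linarith [rpow_le_rpow (by linarith) hsr he, rpow_nonneg (by linarith : (0:ℝ) ≤ r) e]
  · linarith [rpow_le_one_of_one_le_of_nonpos hs he, rpow_nonneg (by linarith : (0:ℝ) ≤ r) e]

section ProfileBounds

variable {F : ℝ → ℂ} {m k j : ℕ} {A a s : ℝ}

theorem pow_mul_norm_iteratedDerivWithin_le_of_lt_one (hm : 1 ≤ m) (hA : 0 ≤ A) (hj : j ≤ k)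
    (hF1 : ∀ r : ℝ, 0 < r → ∀ N : ℕ, N ≤ min k (2 * m - 1) →
      ‖iteratedDerivWithin N F (Ioi 0) r‖ ≤ A * √(1 + r ^ 2) ^ (a - N))
    (hF3 : 2 * m ≤ k → ∀ r : ℝ, 0 < r → r < 1 →
      ‖iteratedDerivWithin (2 * m) F (Ioi 0) r‖ ≤ A * (1 + |log r|))
    (hF4 : ∀ N : ℕ, 2 * m < N → N ≤ k → ∀ r : ℝ, 0 < r → r < 1 →
      ‖iteratedDerivWithin N F (Ioi 0) r‖ ≤ A * r ^ (2 * (m : ℝ) - N))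
    (hs0 : 0 < s) (hs1 : s < 1) :
    s ^ (k - 1) * ‖iteratedDerivWithin j F (Ioi 0) s‖ ≤ A * (√2 ^ (|a| + k) + 2) := by
  have hK : 0 ≤ √2 ^ (|a| + k) := by positivity
  rcases lt_trichotomy j (2 * m) with hlt | rfl | hgt
  · have hb := (hF1 s hs0 j (le_min hj (by omega))).trans <| mul_le_mul_of_nonneg_left
      ((sqrt_one_add_sq_rpow_le_of_le_one _ hs0.le hs1.le).trans
        (sqrt_two_rpow_abs_sub_natCast_le a hj)) hA
    calc s ^ (k - 1) * ‖iteratedDerivWithin j F (Ioi 0) s‖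
        ≤ 1 * (A * √2 ^ (|a| + k)) :=
          mul_le_mul (pow_le_one₀ hs0.le hs1.le) hb (norm_nonneg _) zero_le_one
      _ ≤ A * (√2 ^ (|a| + k) + 2) := by nlinarith
  · have hsk : s ^ (k - 1) ≤ s := pow_le_of_le_one hs0.le hs1.le (by omega)
    calc s ^ (k - 1) * ‖iteratedDerivWithin (2 * m) F (Ioi 0) s‖
        ≤ s * (A * (1 + |log s|)) := mul_le_mul hsk (hF3 hj s hs0 hs1) (norm_nonneg _) hs0.le
      _ = A * (s * (1 + |log s|)) := by ring
      _ ≤ A * 2 := by gcongr; exact mul_one_add_abs_log_le_two hs0 hs1.le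
      _ ≤ A * (√2 ^ (|a| + k) + 2) := by gcongr; linarith
  · have hexp : 0 ≤ ((k - 1 : ℕ) : ℝ) + (2 * (m : ℝ) - j) := by
      rw [Nat.cast_sub (by omega), Nat.cast_one]
      have : (j : ℝ) ≤ k := by exact_mod_cast hj
      have : (1 : ℝ) ≤ m := by exact_mod_cast hm
      linarith
    calc s ^ (k - 1) * ‖iteratedDerivWithin j F (Ioi 0) s‖
        ≤ s ^ (k - 1) * (A * s ^ (2 * (m : ℝ) - j)) := by gcongr; exact hF4 j hgt hj s hs0 hs1
      _ = A * s ^ (((k - 1 : ℕ) : ℝ) + (2 * (m : ℝ) - j)) := by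
          rw [rpow_add hs0, rpow_natCast]; ring
      _ ≤ A * 1 := by gcongr; exact rpow_le_one hs0.le hs1.le hexp
      _ ≤ A * (√2 ^ (|a| + k) + 2) := by gcongr; linarith

theorem pow_mul_norm_iteratedDerivWithin_le_of_one_le (hk : 1 ≤ k) (hA : 0 ≤ A) (hj : j ≤ k)
    (hF2 : ∀ r : ℝ, 1 ≤ r → ∀ N : ℕ, N ≤ k →
      ‖iteratedDerivWithin N F (Ioi 0) r‖ ≤ A * √(1 + r ^ 2) ^ (a - N))
    (hs : 1 ≤ s) :
    s ^ (k - 1) * ‖iteratedDerivWithin j F (Ioi 0) s‖ ≤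
      A * √2 ^ (|a| + k) * s ^ ((k : ℝ) - 1 + a) := by
  have hs0 : 0 < s := by linarith
  have hsa : s ^ (a - j) ≤ s ^ a :=
    rpow_le_rpow_of_exponent_le hs (by linarith [Nat.cast_nonneg (α := ℝ) j])
  have hb : ‖iteratedDerivWithin j F (Ioi 0) s‖ ≤ A * (√2 ^ (|a| + k) * s ^ a) := by
    refine (hF2 s hs j hj).trans (mul_le_mul_of_nonneg_left ?_ hA)
    exact (sqrt_one_add_sq_rpow_le_of_one_le _ hs).trans <|
      mul_le_mul (sqrt_two_rpow_abs_sub_natCast_le a hj) hsa (by positivity) (by positivity)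
  calc s ^ (k - 1) * ‖iteratedDerivWithin j F (Ioi 0) s‖
      ≤ s ^ (k - 1) * (A * (√2 ^ (|a| + k) * s ^ a)) := by gcongr
    _ = A * √2 ^ (|a| + k) * s ^ ((k : ℝ) - 1 + a) := by
        rw [rpow_add hs0, ← rpow_natCast, Nat.cast_sub hk, Nat.cast_one]; ring

theorem pow_mul_norm_iteratedDerivWithin_le {r : ℝ} (hm : 1 ≤ m) (hk : 1 ≤ k) (hA : 0 ≤ A)
    (hF1 : ∀ r : ℝ, 0 < r → ∀ N : ℕ, N ≤ min k (2 * m - 1) →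
      ‖iteratedDerivWithin N F (Ioi 0) r‖ ≤ A * √(1 + r ^ 2) ^ (a - N))
    (hF2 : ∀ r : ℝ, 1 ≤ r → ∀ N : ℕ, N ≤ k →
      ‖iteratedDerivWithin N F (Ioi 0) r‖ ≤ A * √(1 + r ^ 2) ^ (a - N))
    (hF3 : 2 * m ≤ k → ∀ r : ℝ, 0 < r → r < 1 →
      ‖iteratedDerivWithin (2 * m) F (Ioi 0) r‖ ≤ A * (1 + |log r|))
    (hF4 : ∀ N : ℕ, 2 * m < N → N ≤ k → ∀ r : ℝ, 0 < r → r < 1 →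
      ‖iteratedDerivWithin N F (Ioi 0) r‖ ≤ A * r ^ (2 * (m : ℝ) - N))
    (hj : j ≤ k) (hs0 : 0 < s) (hsr : s ≤ r) :
    s ^ (k - 1) * ‖iteratedDerivWithin j F (Ioi 0) s‖ ≤
      A * (√2 ^ (|a| + k) + 2) * (1 + r ^ ((k : ℝ) - 1 + a)) := by
  have hre : 0 ≤ r ^ ((k : ℝ) - 1 + a) := rpow_nonneg (hs0.le.trans hsr) _
  rcases lt_or_ge s 1 with hs1 | hs1
  · calc s ^ (k - 1) * ‖iteratedDerivWithin j F (Ioi 0) s‖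
        ≤ A * (√2 ^ (|a| + k) + 2) :=
          pow_mul_norm_iteratedDerivWithin_le_of_lt_one hm hA hj hF1 hF3 hF4 hs0 hs1
      _ ≤ A * (√2 ^ (|a| + k) + 2) * (1 + r ^ ((k : ℝ) - 1 + a)) :=
          le_mul_of_one_le_right (by positivity) (by linarith)
  · calc s ^ (k - 1) * ‖iteratedDerivWithin j F (Ioi 0) s‖
        ≤ A * √2 ^ (|a| + k) * s ^ ((k : ℝ) - 1 + a) :=
          pow_mul_norm_iteratedDerivWithin_le_of_one_le hk hA hj hF2 hs1
      _ ≤ A * (√2 ^ (|a| + k) + 2) * (1 + r ^ ((k : ℝ) - 1 + a)) := by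
          gcongr
          · linarith
          · exact rpow_le_one_add_rpow _ hs1 hsr

end ProfileBounds

lemma iteratedDeriv_cexp_mul_ofReal (z : ℂ) (i : ℕ) :
    iteratedDeriv i (fun t : ℝ => Complex.exp (z * t)) =
      fun t : ℝ => z ^ i * Complex.exp (z * t) := by
  induction i with
  | zero => simp
  | succ i ih =>
    have hderiv : deriv (fun t : ℝ => Complex.exp (z * t)) =
        fun t : ℝ => z * Complex.exp (z * t) := by
      funext t
      have := ((hasDerivAt_id (t : ℂ)).const_mul z).cexp.comp_ofReal
      simpa [mul_comm] using this.deriv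
    funext t
    rw [iteratedDeriv_succ', hderiv, iteratedDeriv_const_mul_field, ih, pow_succ]
    ring

lemma norm_iteratedDerivWithin_cexp_I_mul_mul {r : ℝ} (c : ℂ) (i : ℕ) {μ : ℝ} (hμ : 0 < μ) :
    ‖iteratedDerivWithin i (fun μ : ℝ => Complex.exp (Complex.I * μ * r) * c) (Ioi 0) μ‖ =
      |r| ^ i * ‖c‖ := by
  have hfun : (fun μ : ℝ => Complex.exp (Complex.I * μ * r)) =
      fun μ : ℝ => Complex.exp (Complex.I * r * μ) := by
    simp only [mul_right_comm]
  have hexp : ‖Complex.exp (Complex.I * r * μ)‖ = 1 := by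
    rw [show Complex.I * r * μ = ((r * μ : ℝ) : ℂ) * Complex.I by push_cast; ring,
      Complex.norm_exp_ofReal_mul_I]
  rw [iteratedDerivWithin_of_isOpen isOpen_Ioi hμ, iteratedDeriv_mul_const_field, hfun,
    iteratedDeriv_cexp_mul_ofReal]
  simp [hexp]

theorem norm_iteratedDerivWithin_cexp_mul_comp_mul_le {F : ℝ → ℂ} {k : ℕ}
    (hF : ContDiffOn ℝ k F (Ioi 0)) {r : ℝ} (hr : 0 < r) (c : ℝ) {μ : ℝ} (hμ : 0 < μ) :
    ‖iteratedDerivWithin k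
        (fun μ : ℝ => Complex.exp (Complex.I * μ * r) * c * F (μ * r)) (Ioi 0) μ‖ ≤
      |c| * r ^ k * ∑ i ∈ Finset.range (k + 1),
        (k.choose i : ℝ) * ‖iteratedDerivWithin (k - i) F (Ioi 0) (μ * r)‖ := by
  have hμ' : μ ∈ Ioi (0 : ℝ) := hμ
  have hscale : ∀ N ≤ k, iteratedDerivWithin N (fun μ : ℝ => F (μ * r)) (Ioi 0) μ =
      r ^ N • iteratedDerivWithin N F (Ioi 0) (μ * r) := by
    intro N hN
    simp_rw [mul_comm _ r]
    exact iteratedDerivWithin_comp_const_smul hμ' (uniqueDiffOn_Ioi 0)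
      (hF.of_le (by exact_mod_cast hN)) r fun x hx => mul_pos hr hx
  have hphase :
      ContDiffWithinAt ℝ k (fun μ : ℝ => Complex.exp (Complex.I * μ * r) * c) (Ioi 0) μ :=
    (((contDiff_const.mul Complex.ofRealCLM.contDiff).mul contDiff_const).cexp.mul
      contDiff_const).contDiffWithinAt
  have hcomp : ContDiffWithinAt ℝ k (fun μ : ℝ => F (μ * r)) (Ioi 0) μ :=
    (hF.comp (contDiff_id.mul contDiff_const).contDiffOn fun x hx => mul_pos hx hr) μ hμ'
  rw [show (fun μ : ℝ => Complex.exp (Complex.I * μ * r) * c * F (μ * r)) =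
      (fun μ : ℝ => Complex.exp (Complex.I * μ * r) * c) * fun μ : ℝ => F (μ * r) from rfl,
    iteratedDerivWithin_mul hμ' (uniqueDiffOn_Ioi 0) hphase hcomp]
  refine (norm_sum_le _ _).trans (le_of_eq ?_)
  rw [Finset.mul_sum]
  refine Finset.sum_congr rfl fun i hi => ?_
  have hik : i ≤ k := Nat.lt_succ_iff.mp (Finset.mem_range.mp hi)
  rw [norm_mul, norm_mul, norm_iteratedDerivWithin_cexp_I_mul_mul _ _ hμ,
    hscale _ (Nat.sub_le k i), norm_smul, Complex.norm_real, Complex.norm_natCast, abs_of_pos hr,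
    Real.norm_eq_abs, Real.norm_eq_abs, abs_of_pos (pow_pos hr _)]
  rw [← Nat.add_sub_cancel' hik, pow_add, Nat.add_sub_cancel_left]
  ring

theorem pow_mul_norm_iteratedDerivWithin_cexp_mul_comp_mul_le {F : ℝ → ℂ} {k : ℕ} (hk : 1 ≤ k)
    (hF : ContDiffOn ℝ k F (Ioi 0)) {r : ℝ} (hr : 0 < r) (c : ℝ) {μ : ℝ} (hμ : 0 < μ) :
    μ ^ (k - 1) * ‖iteratedDerivWithin k
        (fun μ : ℝ => Complex.exp (Complex.I * μ * r) * c * F (μ * r)) (Ioi 0) μ‖ ≤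
      |c| * r * ∑ i ∈ Finset.range (k + 1), (k.choose i : ℝ) *
        ((μ * r) ^ (k - 1) * ‖iteratedDerivWithin (k - i) F (Ioi 0) (μ * r)‖) := by
  have hrk : r ^ k = r ^ (k - 1) * r := by rw [← pow_succ, Nat.sub_add_cancel hk]
  calc μ ^ (k - 1) * ‖iteratedDerivWithin k
          (fun μ : ℝ => Complex.exp (Complex.I * μ * r) * c * F (μ * r)) (Ioi 0) μ‖
      ≤ μ ^ (k - 1) * (|c| * r ^ k * ∑ i ∈ Finset.range (k + 1),
          (k.choose i : ℝ) * ‖iteratedDerivWithin (k - i) F (Ioi 0) (μ * r)‖) := by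
        gcongr
        exact norm_iteratedDerivWithin_cexp_mul_comp_mul_le hF hr c hμ
    _ = |c| * r * ∑ i ∈ Finset.range (k + 1), (k.choose i : ℝ) *
          ((μ * r) ^ (k - 1) * ‖iteratedDerivWithin (k - i) F (Ioi 0) (μ * r)‖) := by
        rw [hrk, Finset.mul_sum, Finset.mul_sum, Finset.mul_sum]
        refine Finset.sum_congr rfl fun i _ => ?_
        ring

theorem stmt_15_general (n m : ℕ) (hm : 2 ≤ m)
    (k : ℕ) (hk : 1 ≤ k) (A : ℝ) (hA : 0 < A)
    (F : ℝ → ℂ) (hF : ContDiffOn ℝ k F (Set.Ioi 0))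
    (hF1 : ∀ r : ℝ, 0 < r → ∀ N : ℕ, N ≤ min k (2 * m - 1) →
      ‖iteratedDerivWithin N F (Set.Ioi 0) r‖ ≤
        A * Real.sqrt (1 + r ^ 2) ^ (((n : ℝ) + 1) / 2 - 2 * m - N))
    (hF2 : ∀ r : ℝ, 1 ≤ r → ∀ N : ℕ, N ≤ k →
      ‖iteratedDerivWithin N F (Set.Ioi 0) r‖ ≤
        A * Real.sqrt (1 + r ^ 2) ^ (((n : ℝ) + 1) / 2 - 2 * m - N))
    (hF3 : 2 * m ≤ k → ∀ r : ℝ, 0 < r → r < 1 →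
      ‖iteratedDerivWithin (2 * m) F (Set.Ioi 0) r‖ ≤ A * (1 + |Real.log r|))
    (hF4 : ∀ N : ℕ, 2 * m < N → N ≤ k → ∀ r : ℝ, 0 < r → r < 1 →
      ‖iteratedDerivWithin N F (Set.Ioi 0) r‖ ≤ A * r ^ (2 * (m : ℝ) - N)) :
    ∃ C > 0, ∀ r : ℝ, 0 < r → ∀ lam : ℝ, 0 < lam → lam < 1 →
      lam ^ (k - 1) *
        ‖iteratedDerivWithin k
            (fun μ : ℝ => Complex.exp (Complex.I * μ * r) *
              (r ^ (2 * (m : ℝ) - n) : ℝ) * F (μ * r)) (Set.Ioi 0) lam‖ ≤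
        C * (r ^ (2 * (m : ℝ) + 1 - n) + r ^ ((k : ℝ) - ((n : ℝ) - 1) / 2)) := by
  set a : ℝ := ((n : ℝ) + 1) / 2 - 2 * m
  set B : ℝ := A * (√2 ^ (|a| + k) + 2)
  refine ⟨B * 2 ^ k, by positivity, fun r hr lam hlam0 hlam1 => ?_⟩
  have hrpow : r ^ (2 * (m : ℝ) - n) * r * (1 + r ^ ((k : ℝ) - 1 + a)) =
      r ^ (2 * (m : ℝ) + 1 - n) + r ^ ((k : ℝ) - ((n : ℝ) - 1) / 2) := by
    rw [← rpow_add_one hr.ne', mul_add, mul_one, ← rpow_add hr]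
    congr 2 <;> ring
  calc _ ≤ r ^ (2 * (m : ℝ) - n) * r * ∑ i ∈ Finset.range (k + 1), (k.choose i : ℝ) *
          ((lam * r) ^ (k - 1) * ‖iteratedDerivWithin (k - i) F (Ioi 0) (lam * r)‖) := by
        simpa only [abs_of_pos (rpow_pos_of_pos hr _)] using
          pow_mul_norm_iteratedDerivWithin_cexp_mul_comp_mul_le hk hF hr
            (r ^ (2 * (m : ℝ) - n)) hlam0
    _ ≤ r ^ (2 * (m : ℝ) - n) * r * ∑ i ∈ Finset.range (k + 1), (k.choose i : ℝ) *
          (B * (1 + r ^ ((k : ℝ) - 1 + a))) := by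
        gcongr _ * ∑ i ∈ _, _ * ?_ with i
        exact pow_mul_norm_iteratedDerivWithin_le (by omega) hk hA.le hF1 hF2 hF3 hF4
          (Nat.sub_le k i) (mul_pos hlam0 hr) (by nlinarith)
    _ = B * 2 ^ k * (r ^ (2 * (m : ℝ) + 1 - n) + r ^ ((k : ℝ) - ((n : ℝ) - 1) / 2)) := by
        rw [← Finset.sum_mul, ← Nat.cast_sum, Nat.sum_range_choose, ← hrpow]
        push_cast
        ring

theorem stmt_15 (n m : ℕ) (hn : 1 ≤ n) (hm : 2 ≤ m) (hnm : 2 * m < n)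
    (k : ℕ) (hk : 1 ≤ k) (A : ℝ) (hA : 0 < A)
    (F : ℝ → ℂ) (hF : ContDiffOn ℝ k F (Set.Ioi 0))
    (hF1 : ∀ r : ℝ, 0 < r → ∀ N : ℕ, N ≤ min k (2 * m - 1) →
      ‖iteratedDerivWithin N F (Set.Ioi 0) r‖ ≤
        A * Real.sqrt (1 + r ^ 2) ^ (((n : ℝ) + 1) / 2 - 2 * m - N))
    (hF2 : ∀ r : ℝ, 1 ≤ r → ∀ N : ℕ, N ≤ k →
      ‖iteratedDerivWithin N F (Set.Ioi 0) r‖ ≤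
        A * Real.sqrt (1 + r ^ 2) ^ (((n : ℝ) + 1) / 2 - 2 * m - N))
    (hF3 : 2 * m ≤ k → ∀ r : ℝ, 0 < r → r < 1 →
      ‖iteratedDerivWithin (2 * m) F (Set.Ioi 0) r‖ ≤ A * (1 + |Real.log r|))
    (hF4 : ∀ N : ℕ, 2 * m < N → N ≤ k → ∀ r : ℝ, 0 < r → r < 1 →
      ‖iteratedDerivWithin N F (Set.Ioi 0) r‖ ≤ A * r ^ (2 * (m : ℝ) - N)) :
    ∃ C > 0, ∀ r : ℝ, 0 < r → ∀ lam : ℝ, 0 < lam → lam < 1 →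
      lam ^ (k - 1) *
        ‖iteratedDerivWithin k
            (fun μ : ℝ => Complex.exp (Complex.I * μ * r) *
              (r ^ (2 * (m : ℝ) - n) : ℝ) * F (μ * r)) (Set.Ioi 0) lam‖ ≤
        C * (r ^ (2 * (m : ℝ) + 1 - n) + r ^ ((k : ℝ) - ((n : ℝ) - 1) / 2)) :=
  stmt_15_general n m hm k hk A hA F hF hF1 hF2 hF3 hF4
end
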